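/- arXiv:2310.19749 — 10 statements merged into one kernel-verified Lean document; each statement's English description precedes it below -/
import Mathlib

section
/- Let (X,d) be a metric space and let f : X → ℝ ∪ {+∞} be proper and bounded below. Then for every δ > 0 and every 0 < μ < ε, every point x belonging to the set Ω_{f_δ}(μ) of μ-minima of the envelope f_δ satisfies dist(x, Ω_f(ε)) ≤ δ, i.e., there exists y ∈ Ω_f(ε) with d(y,x) ≤ δ. -/
open Filter Topology Metric Set

noncomputable section

/-- The `δ`-infimal envelope of an extended-real-valued function `f`:
`f_δ(x) = inf { f y : d(y,x) ≤ δ }`. -/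
def infEnv {X : Type*} [MetricSpace X] (f : X → EReal) (δ : ℝ) (x : X) : EReal :=
  ⨅ y ∈ {y : X | dist y x ≤ δ}, f y

/-- The set of `ε`-minima of `f` : `Ω_f(ε) = { x : f x ≤ inf f + ε }`. -/
def eMin {X : Type*} (f : X → EReal) (ε : ℝ) : Set X :=
  {x : X | f x ≤ (⨅ y, f y) + (ε : EReal)}

/-- The set of `ε`-minima of a real-valued function. -/
def eMinR {X : Type*} (g : X → ℝ) (ε : ℝ) : Set X :=
  {x : X | g x ≤ (⨅ y, g y) + ε}

/-- `f` is proper: not identically `+∞`. -/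
def ProperFn {X : Type*} (f : X → EReal) : Prop := ∃ x, f x ≠ ⊤

/-- `f` is bounded below: `inf f > -∞`. -/
def BddBelowFn {X : Type*} (f : X → EReal) : Prop := ∃ m : ℝ, ∀ x, (m : EReal) ≤ f x

/-- `f` attains its strong minimum at `xbar`: every minimizing sequence converges to `xbar`. -/
def StrongMinAt {X : Type*} [MetricSpace X] (f : X → EReal) (xbar : X) : Prop :=
  ∀ y : ℕ → X, Tendsto (fun k => f (y k)) atTop (𝓝 (⨅ z, f z)) → Tendsto y atTop (𝓝 xbar)

/-- Condition (C1): pointwise convergence of `f n` to `flim`. -/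
def CondC1 {X : Type*} (f : ℕ → X → EReal) (flim : X → EReal) : Prop :=
  ∀ x, Tendsto (fun n => f n x) atTop (𝓝 (flim x))

/-- Condition (C2): for every `ε > 0`, eventually `f n ≥ (flim)_ε - ε`. -/
def CondC2 {X : Type*} [MetricSpace X] (f : ℕ → X → EReal) (flim : X → EReal) : Prop :=
  ∀ ε : ℝ, 0 < ε → ∃ N : ℕ, ∀ n ≥ N, ∀ x, infEnv flim ε x - (ε : EReal) ≤ f n x

/-- Lemma 2.1 (second part): every `μ`-minimum of the envelope `f_δ` is within
distance `δ` of the set of `ε`-minima of `f`, whenever `0 < μ < ε`. -/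
theorem dist_eMin_of_eMin_infEnv {X : Type*} [MetricSpace X] (f : X → EReal)
    (hproper : ProperFn f) (hbdd : BddBelowFn f) :
    ∀ δ : ℝ, 0 < δ → ∀ μ ε : ℝ, 0 < μ → μ < ε →
      ∀ x ∈ eMin (infEnv f δ) μ, ∃ y ∈ eMin f ε, dist y x ≤ δ := by
  intro δ hδ μ ε hμ hμε x hx
  set m : EReal := ⨅ z, f z with hm
  obtain ⟨x0, hx0⟩ := hproper
  obtain ⟨b, hb⟩ := hbdd
  have hmbot : m ≠ ⊥ := by
    intro h
    have : (b : EReal) ≤ m := le_iInf hb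
    rw [h] at this
    exact absurd (le_bot_iff.mp this) (EReal.coe_ne_bot b)
  have hmtop : m ≠ ⊤ := by
    intro h
    have : m ≤ f x0 := iInf_le f x0
    rw [h] at this
    exact hx0 (top_le_iff.mp this)
  lift m to ℝ using ⟨hmtop, hmbot⟩ with r hr
  have hle : ∀ y, infEnv f δ y ≤ f y := fun y =>
    iInf₂_le y (by simp [Set.mem_setOf_eq, dist_self, hδ.le])
  have hge : ∀ y, (r : EReal) ≤ infEnv f δ y := fun y =>
    le_iInf₂ fun z _ => hr ▸ iInf_le f z
  have henv : (⨅ y, infEnv f δ y) = (r : EReal) :=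
    le_antisymm (hr ▸ (iInf_mono hle)) (le_iInf hge)
  have hx' : infEnv f δ x ≤ (r : EReal) + (μ : EReal) := by
    have := hx
    rw [eMin, Set.mem_setOf_eq, henv] at this
    exact this
  have hlt : infEnv f δ x < (r : EReal) + (ε : EReal) := by
    calc infEnv f δ x ≤ (r : EReal) + (μ : EReal) := hx'
    _ = ((r + μ : ℝ) : EReal) := by norm_cast
    _ < ((r + ε : ℝ) : EReal) := by exact_mod_cast by linarith
    _ = (r : EReal) + (ε : EReal) := by norm_cast
  obtain ⟨y, hyd, hyf⟩ : ∃ y, dist y x ≤ δ ∧ f y < (r : EReal) + (ε : EReal) := by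
    rw [infEnv] at hlt
    obtain ⟨y, hy⟩ := iInf_lt_iff.mp hlt
    obtain ⟨hyd, hy⟩ := iInf_lt_iff.mp hy
    exact ⟨y, hyd, hy⟩
  exact ⟨y, by rw [eMin, Set.mem_setOf_eq, ← hm]; exact hyf.le, hyd⟩
end
end

section
/- Let (X,d) be a metric space and let f_n : X → ℝ ∪ {+∞} for n ∈ ℕ ∪ {∞} be proper and bounded below functions satisfying conditions (C1) and (C2). Then lim_{n→∞} (inf_X f_n) = inf_X f_∞. -/
open Filter Topology Metric Set

noncomputable section

/-- Lemma 2.2: under (C1) and (C2), `inf f_n → inf f_∞`. -/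
theorem tendsto_inf_of_C1_C2 {X : Type*} [MetricSpace X]
    (f : ℕ → X → EReal) (flim : X → EReal)
    (hproper : ∀ n, ProperFn (f n)) (hproperlim : ProperFn flim)
    (hbdd : ∀ n, BddBelowFn (f n)) (hbddlim : BddBelowFn flim)
    (h1 : CondC1 f flim) (h2 : CondC2 f flim) :
    Tendsto (fun n => ⨅ x, f n x) atTop (𝓝 (⨅ x, flim x)) := by
  have hIbot : (⨅ x, flim x) ≠ ⊥ := by
    obtain ⟨m, hm⟩ := hbddlim
    intro h
    have hle : (m : EReal) ≤ ⨅ x, flim x := le_iInf hm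
    rw [h, le_bot_iff] at hle
    exact EReal.coe_ne_bot m hle
  have hItop : (⨅ x, flim x) ≠ ⊤ := by
    obtain ⟨x, hx⟩ := hproperlim
    exact fun h => hx (top_le_iff.mp (h ▸ iInf_le _ x))
  have hIr : ((⨅ x, flim x).toReal : EReal) = ⨅ x, flim x := EReal.coe_toReal hItop hIbot
  rw [tendsto_order]
  constructor
  · intro a ha
    obtain ⟨b, hab, hbI⟩ := exists_between ha
    have hbbot : b ≠ ⊥ := fun h => by simp [h] at hab
    have hbtop : b ≠ ⊤ := (hbI.trans_le le_top).ne
    set r := (⨅ x, flim x).toReal with hr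
    have hbr : b.toReal < r := by
      have := hbI
      rw [← hIr, ← EReal.coe_toReal hbtop hbbot] at this
      exact_mod_cast this
    set ε := r - b.toReal with hε
    have hεpos : 0 < ε := sub_pos.mpr hbr
    obtain ⟨N, hN⟩ := h2 ε hεpos
    refine Filter.eventually_atTop.2 ⟨N, fun n hn => hab.trans_le (le_iInf fun x => ?_)⟩
    have henv : (⨅ x, flim x) ≤ infEnv flim ε x :=
      le_iInf fun y => le_iInf fun _ => iInf_le _ y
    have hsub : b ≤ infEnv flim ε x - (ε : EReal) := by
      have : (⨅ x, flim x) - (ε : EReal) ≤ infEnv flim ε x - (ε : EReal) :=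
        EReal.sub_le_sub henv le_rfl
      refine le_trans ?_ this
      rw [← hIr, ← EReal.coe_sub, ← EReal.coe_toReal hbtop hbbot]
      exact_mod_cast le_of_eq (by ring)
    exact hsub.trans (hN n hn x)
  · intro a ha
    obtain ⟨x, hx⟩ := iInf_lt_iff.mp ha
    exact ((h1 x).eventually_lt_const hx).mono fun n hn => (iInf_le _ x).trans_lt hn
end
end

section
/- Let (X,d) be a metric space and let f_n : X → ℝ ∪ {+∞} for n ∈ ℕ ∪ {∞} be proper and bounded below functions satisfying conditions (C1) and (C2). Then for every ε > 0 there exists N ∈ ℕ such that for all n ≥ N, every x ∈ Ω_{f_n}(ε/4) satisfies dist(x, Ω_{f_∞}(ε)) ≤ ε/2, i.e., there exists y ∈ Ω_{f_∞}(ε) with d(y,x) ≤ ε/2. -/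
open Filter Topology Metric Set

noncomputable section

/-- Lemma 2.3, first part: for every `ε > 0`, eventually every `ε/4`-minimum of `f n`
is within distance `ε/2` of the set of `ε`-minima of `f_∞`. -/
theorem dist_eMin_limit_of_C1_C2 {X : Type*} [MetricSpace X]
    (f : ℕ → X → EReal) (flim : X → EReal)
    (hproper : ∀ n, ProperFn (f n)) (hproperlim : ProperFn flim)
    (hbdd : ∀ n, BddBelowFn (f n)) (hbddlim : BddBelowFn flim)
    (h1 : CondC1 f flim) (h2 : CondC2 f flim) :
    ∀ ε : ℝ, 0 < ε → ∃ N : ℕ, ∀ n ≥ N,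
      ∀ x ∈ eMin (f n) (ε / 4), ∃ y ∈ eMin flim ε, dist y x ≤ ε / 2 := by
  intro ε hε
  classical
  obtain ⟨x₀, hx₀⟩ := hproperlim
  obtain ⟨b, hb⟩ := hbddlim
  set m : EReal := ⨅ y, flim y with hm
  have hmtop : m < ⊤ := lt_of_le_of_lt (iInf_le _ x₀) hx₀.lt_top
  have hmbot : ⊥ < m := lt_of_lt_of_le (by exact_mod_cast EReal.bot_lt_coe b) (le_iInf hb)
  set r : ℝ := m.toReal with hr
  have hrm : (r : EReal) = m := EReal.coe_toReal hmtop.ne hmbot.ne'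
  -- find a near-minimizer of flim
  have hlt : m < ((r + ε / 8 : ℝ) : EReal) := by
    rw [← hrm]; exact_mod_cast (by linarith : r < r + ε / 8)
  obtain ⟨y₀, hy₀⟩ := iInf_lt_iff.mp hlt
  have hev : ∀ᶠ n in atTop, f n y₀ < ((r + ε / 8 : ℝ) : EReal) :=
    (h1 y₀).eventually_lt_const hy₀
  obtain ⟨N₁, hN₁⟩ := eventually_atTop.mp hev
  obtain ⟨N₂, hN₂⟩ := h2 (ε / 8) (by linarith)
  refine ⟨max N₁ N₂, fun n hn x hx => ?_⟩
  have hn₁ : N₁ ≤ n := le_trans (le_max_left _ _) hn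
  have hn₂ : N₂ ≤ n := le_trans (le_max_right _ _) hn
  -- inf of f n is small
  have hmn : (⨅ y, f n y) ≤ ((r + ε / 8 : ℝ) : EReal) :=
    le_of_lt (lt_of_le_of_lt (iInf_le _ y₀) (hN₁ n hn₁))
  have hfx : f n x ≤ ((r + ε / 8 + ε / 4 : ℝ) : EReal) := by
    refine le_trans hx ?_
    calc (⨅ y, f n y) + ((ε / 4 : ℝ) : EReal)
        ≤ ((r + ε / 8 : ℝ) : EReal) + ((ε / 4 : ℝ) : EReal) :=
          add_le_add_left hmn _
      _ = ((r + ε / 8 + ε / 4 : ℝ) : EReal) := by norm_cast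
  have henv : infEnv flim (ε / 8) x ≤ ((r + ε / 2 : ℝ) : EReal) := by
    have h := hN₂ n hn₂ x
    have h' : infEnv flim (ε / 8) x ≤ f n x + ((ε / 8 : ℝ) : EReal) :=
      (EReal.sub_le_iff_le_add (Or.inl (EReal.coe_ne_bot _))
        (Or.inl (EReal.coe_ne_top _))).mp h
    refine le_trans h' ?_
    calc f n x + ((ε / 8 : ℝ) : EReal)
        ≤ ((r + ε / 8 + ε / 4 : ℝ) : EReal) + ((ε / 8 : ℝ) : EReal) :=
          add_le_add_left hfx _
      _ = ((r + ε / 8 + ε / 4 + ε / 8 : ℝ) : EReal) := by norm_cast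
      _ ≤ ((r + ε / 2 : ℝ) : EReal) := by exact_mod_cast (by linarith : r + ε/8 + ε/4 + ε/8 ≤ r + ε/2)
  have henv' : infEnv flim (ε / 8) x < ((r + ε : ℝ) : EReal) :=
    lt_of_le_of_lt henv (by exact_mod_cast (by linarith : r + ε / 2 < r + ε))
  rw [infEnv] at henv'
  obtain ⟨y, hy⟩ := iInf_lt_iff.mp henv'
  obtain ⟨hyd, hyv⟩ := iInf_lt_iff.mp hy
  refine ⟨y, ?_, le_trans hyd (by linarith)⟩
  show flim y ≤ (⨅ z, flim z) + (ε : EReal)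
  rw [← hm, ← hrm]
  rw [← EReal.coe_add]
  exact le_of_lt hyv
end
end

section
/- Let (X,d) be a metric space and let f_n : X → ℝ ∪ {+∞} for n ∈ ℕ ∪ {∞} be proper and bounded below functions satisfying conditions (C1) and (C2). Then for every ε > 0 there exists N ∈ ℕ such that for all n ≥ N, the diameter of the set ⋃_{k ≥ n, k ∈ ℕ∪{∞}} Ω_{f_k}(ε/4) is at most diam(Ω_{f_∞}(ε)) + ε. -/
open Filter Topology Metric Set

noncomputable section

lemma diam_le_of_approx {X : Type*} [MetricSpace X] {s t : Set X} {ε : ℝ} (hε : 0 ≤ ε)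
    (h : ∀ x ∈ s, ∃ y ∈ t, dist x y ≤ ε / 2) :
    EMetric.diam s ≤ EMetric.diam t + ENNReal.ofReal ε := by
  refine EMetric.diam_le fun x hx x' hx' => ?_
  obtain ⟨y, hy, hxy⟩ := h x hx
  obtain ⟨y', hy', hxy'⟩ := h x' hx'
  calc edist x x' ≤ edist x y + edist y y' + edist y' x' := edist_triangle4 x y y' x'
    _ ≤ ENNReal.ofReal (ε / 2) + EMetric.diam t + ENNReal.ofReal (ε / 2) := by
        gcongr
        · exact (edist_le_ofReal (by linarith)).2 hxy
        · exact EMetric.edist_le_diam_of_mem hy hy'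
        · exact (edist_le_ofReal (by linarith)).2 (by rwa [dist_comm])
    _ = EMetric.diam t + ENNReal.ofReal ε := by
        rw [add_comm (ENNReal.ofReal (ε / 2)), add_assoc,
          ← ENNReal.ofReal_add (by linarith) (by linarith)]
        norm_num

/-- Lemma 2.3, second part: for every `ε > 0`, eventually the diameter of the union
of the `ε/4`-minima sets of all `f k` with `k ≥ n` (including `k = ∞`) is at most
`diam Ω_{f_∞}(ε) + ε`. -/
theorem diam_iUnion_eMin_le {X : Type*} [MetricSpace X]
    (f : ℕ → X → EReal) (flim : X → EReal)
    (hproper : ∀ n, ProperFn (f n)) (hproperlim : ProperFn flim)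
    (hbdd : ∀ n, BddBelowFn (f n)) (hbddlim : BddBelowFn flim)
    (h1 : CondC1 f flim) (h2 : CondC2 f flim) :
    ∀ ε : ℝ, 0 < ε → ∃ N : ℕ, ∀ n ≥ N,
      EMetric.diam ((⋃ k ∈ Set.Ici n, eMin (f k) (ε / 4)) ∪ eMin flim (ε / 4)) ≤
        EMetric.diam (eMin flim ε) + ENNReal.ofReal ε := by
  intro ε hε
  obtain ⟨x₁, hx₁⟩ := hproperlim
  obtain ⟨m, hm⟩ := hbddlim
  set I : EReal := ⨅ z, flim z with hI
  have hItop : I ≠ ⊤ := fun h => hx₁ (top_le_iff.1 (h ▸ iInf_le flim x₁))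
  have hIbot : I ≠ ⊥ := fun h => by
    have : (m : EReal) ≤ I := le_iInf hm
    rw [h, le_bot_iff] at this
    exact EReal.coe_ne_bot m this
  obtain ⟨r, hr⟩ : ∃ r : ℝ, I = (r : EReal) := ⟨I.toReal, (EReal.coe_toReal hItop hIbot).symm⟩
  -- pick a near-minimizer of flim
  have h8 : I < I + ((ε / 8 : ℝ) : EReal) := by
    rw [hr, ← EReal.coe_add, EReal.coe_lt_coe_iff]; linarith
  obtain ⟨x₀, hx₀⟩ : ∃ x₀, flim x₀ < I + ((ε / 8 : ℝ) : EReal) := iInf_lt_iff.1 h8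
  have hx04 : flim x₀ < I + ((ε / 4 : ℝ) : EReal) := by
    refine hx₀.trans_le (add_le_add_right ?_ I)
    exact EReal.coe_le_coe_iff.2 (by linarith)
  obtain ⟨N₁, hN₁⟩ := eventually_atTop.1 ((h1 x₀).eventually_lt_const hx04)
  obtain ⟨N₂, hN₂⟩ := h2 (ε / 4) (by linarith)
  refine ⟨max N₁ N₂, fun n hn => ?_⟩
  apply diam_le_of_approx hε.le
  intro x hx
  rcases hx with hx | hx
  · -- x ∈ ⋃ k ≥ n, eMin (f k) (ε/4)
    simp only [Set.mem_iUnion, Set.mem_Ici] at hx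
    obtain ⟨k, hkn, hxk⟩ := hx
    have hk1 : N₁ ≤ k := le_trans (le_trans (le_max_left _ _) hn) hkn
    have hk2 : N₂ ≤ k := le_trans (le_trans (le_max_right _ _) hn) hkn
    have hinfk : (⨅ y, f k y) ≤ I + ((ε / 4 : ℝ) : EReal) :=
      (iInf_le (f k) x₀).trans (hN₁ k hk1).le
    have h5 : f k x ≤ I + ((ε / 4 : ℝ) : EReal) + ((ε / 4 : ℝ) : EReal) :=
      le_trans hxk (add_le_add_left hinfk _)
    have h6 : infEnv flim (ε / 4) x ≤ f k x + ((ε / 4 : ℝ) : EReal) := by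
      have := hN₂ k hk2 x
      rwa [EReal.sub_le_iff_le_add (Or.inl (EReal.coe_ne_bot _))
        (Or.inl (EReal.coe_ne_top _))] at this
    have h7 : infEnv flim (ε / 4) x < I + ((ε : ℝ) : EReal) := by
      refine lt_of_le_of_lt (h6.trans (add_le_add_left h5 _)) ?_
      rw [hr]
      norm_cast
      linarith
    obtain ⟨y, hy, hyv⟩ : ∃ y, dist y x ≤ ε / 4 ∧ flim y < I + ((ε : ℝ) : EReal) := by
      have := h7
      rw [infEnv] at this
      simp only [iInf_lt_iff, Set.mem_setOf_eq] at this
      obtain ⟨y, hy1, hy2⟩ := this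
      exact ⟨y, hy1, hy2⟩
    refine ⟨y, hyv.le, ?_⟩
    rw [dist_comm]; linarith
  · -- x ∈ eMin flim (ε/4)
    refine ⟨x, ?_, by simp; linarith⟩
    refine le_trans hx (add_le_add_right ?_ I)
    exact EReal.coe_le_coe_iff.2 (by linarith)
end
end

section
/- Let (X,d) be a metric space and let f_n : X → ℝ ∪ {+∞} for n ∈ ℕ ∪ {∞} be proper and bounded below functions satisfying conditions (C1) and (C2). Then for every δ > 0 there exists N ∈ ℕ such that Ω_{f_n}(δ) ⊆ Ω_{(f_∞)_δ}(3δ) for all n ≥ N, where (f_∞)_δ denotes the δ-infimal envelope of f_∞. -/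
open Filter Topology Metric Set

noncomputable section

/-- The key claim in the proof of Lemma 2.3: for every `δ > 0`, eventually
`Ω_{f_n}(δ) ⊆ Ω_{(f_∞)_δ}(3δ)`. -/
theorem eMin_subset_eMin_infEnv {X : Type*} [MetricSpace X]
    (f : ℕ → X → EReal) (flim : X → EReal)
    (hproper : ∀ n, ProperFn (f n)) (hproperlim : ProperFn flim)
    (hbdd : ∀ n, BddBelowFn (f n)) (hbddlim : BddBelowFn flim)
    (h1 : CondC1 f flim) (h2 : CondC2 f flim) :
    ∀ δ : ℝ, 0 < δ → ∃ N : ℕ, ∀ n ≥ N,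
      eMin (f n) δ ⊆ eMin (infEnv flim δ) (3 * δ) := by
  intro δ hδ
  -- the infimum of flim is a real number
  obtain ⟨x1, hx1⟩ := hproperlim
  obtain ⟨m, hm⟩ := hbddlim
  set I : EReal := ⨅ y, flim y with hIdef
  have hIbot : (m : EReal) ≤ I := le_iInf hm
  have hItop : I ≠ ⊤ := fun h => hx1 (top_le_iff.1 (h ▸ iInf_le flim x1))
  obtain ⟨r, hr⟩ : ∃ r : ℝ, I = (r : EReal) :=
    ⟨I.toReal, (EReal.coe_toReal hItop (fun h => by simp [h] at hIbot)).symm⟩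
  -- pick a point nearly minimizing flim
  have hlt : I < ((r + δ : ℝ) : EReal) := by
    rw [hr]; exact_mod_cast lt_add_of_pos_right r hδ
  obtain ⟨x0, hx0⟩ : ∃ x0, flim x0 < ((r + δ : ℝ) : EReal) := by
    simpa [hIdef, iInf_lt_iff] using hlt
  -- C1 at x0
  have hev : ∀ᶠ n in atTop, f n x0 < ((r + δ : ℝ) : EReal) :=
    (h1 x0).eventually_lt_const hx0
  obtain ⟨N1, hN1⟩ := eventually_atTop.1 hev
  -- C2 with ε = δ
  obtain ⟨N2, hN2⟩ := h2 δ hδ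
  refine ⟨max N1 N2, fun n hn x hx => ?_⟩
  have hn1 : n ≥ N1 := le_trans (le_max_left _ _) hn
  have hn2 : n ≥ N2 := le_trans (le_max_right _ _) hn
  -- f n x ≤ inf f n + δ ≤ f n x0 + δ < r + 2δ
  have hchain : f n x ≤ ((r + δ + δ : ℝ) : EReal) := by
    calc f n x ≤ (⨅ y, f n y) + (δ : EReal) := hx
      _ ≤ f n x0 + (δ : EReal) := add_le_add_left (iInf_le _ x0) _
      _ ≤ ((r + δ : ℝ) : EReal) + (δ : EReal) := add_le_add_left (hN1 n hn1).le _
      _ = ((r + δ + δ : ℝ) : EReal) := by norm_cast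
  -- C2 gives infEnv flim δ x ≤ f n x + δ
  have hc2 : infEnv flim δ x - (δ : EReal) ≤ f n x := hN2 n hn2 x
  have henv : infEnv flim δ x ≤ f n x + (δ : EReal) :=
    EReal.sub_le_iff_le_add (Or.inl (EReal.coe_ne_bot δ)) (Or.inl (EReal.coe_ne_top δ)) |>.1 hc2
  have hbig : infEnv flim δ x ≤ ((r + δ + δ + δ : ℝ) : EReal) := by
    calc infEnv flim δ x ≤ f n x + (δ : EReal) := henv
      _ ≤ ((r + δ + δ : ℝ) : EReal) + (δ : EReal) := add_le_add_left hchain _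
      _ = ((r + δ + δ + δ : ℝ) : EReal) := by norm_cast
  -- I ≤ inf of the envelope
  have hIle : I ≤ ⨅ y, infEnv flim δ y := by
    refine le_iInf fun y => le_iInf₂ fun z _ => iInf_le _ z
  show infEnv flim δ x ≤ (⨅ y, infEnv flim δ y) + ((3 * δ : ℝ) : EReal)
  calc infEnv flim δ x ≤ ((r + δ + δ + δ : ℝ) : EReal) := hbig
    _ = (r : EReal) + ((3 * δ : ℝ) : EReal) := by norm_cast; ring
    _ = I + ((3 * δ : ℝ) : EReal) := by rw [hr]
    _ ≤ (⨅ y, infEnv flim δ y) + ((3 * δ : ℝ) : EReal) := add_le_add_left hIle _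
end
end

section
/- Let (X,d) be a metric space, let g : X → ℝ be uniformly continuous and bounded below, and let f_n : X → ℝ ∪ {+∞} for n ∈ ℕ ∪ {∞} be proper and bounded below functions satisfying condition (C2). Then the functions (f_n + g), n ∈ ℕ ∪ {∞}, also satisfy condition (C2). -/
open Filter Topology Metric Set

noncomputable section

/-- Lemma 2.5: adding a uniformly continuous and bounded below real function `g`
preserves condition (C2). -/
theorem condC2_add_uniformContinuous {X : Type*} [MetricSpace X]
    (g : X → ℝ) (hg : UniformContinuous g) (hgbdd : ∃ m : ℝ, ∀ x, m ≤ g x)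
    (f : ℕ → X → EReal) (flim : X → EReal)
    (hproper : ∀ n, ProperFn (f n)) (hproperlim : ProperFn flim)
    (hbdd : ∀ n, BddBelowFn (f n)) (hbddlim : BddBelowFn flim)
    (h2 : CondC2 f flim) :
    CondC2 (fun n x => f n x + (g x : EReal)) (fun x => flim x + (g x : EReal)) := by
  intro ε hε
  obtain ⟨δ, hδpos, hδ⟩ := Metric.uniformContinuous_iff.mp hg (ε/2) (half_pos hε)
  set ε' : ℝ := min (δ/2) (ε/2) with hε'def
  have hε'pos : 0 < ε' := lt_min (by linarith) (by linarith)
  have hε'le : ε' ≤ ε/2 := min_le_right _ _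
  have hε'δ : ε' < δ := lt_of_le_of_lt (min_le_left _ _) (by linarith)
  obtain ⟨N, hN⟩ := h2 ε' hε'pos
  refine ⟨N, fun n hn x => ?_⟩
  set A := infEnv (fun x => flim x + (g x : EReal)) ε x with hA
  -- step 1
  have step1 : ∀ y, dist y x ≤ ε' → A - ((g x + ε/2 : ℝ) : EReal) ≤ flim y := by
    intro y hy
    have h1 : A ≤ flim y + (g y : EReal) := by
      apply iInf₂_le
      exact le_trans hy (by linarith)
    have h2' : g y ≤ g x + ε/2 := by
      have := hδ (lt_of_le_of_lt hy hε'δ) (a := y) (b := x)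
      rw [Real.dist_eq] at this
      cases abs_lt.mp this with
      | intro h _ => linarith
    have h3 : flim y + (g y : EReal) ≤ flim y + ((g x + ε/2 : ℝ) : EReal) := by
      exact add_le_add_right (EReal.coe_le_coe_iff.mpr h2') _
    refine EReal.sub_le_iff_le_add (Or.inl (EReal.coe_ne_bot _)) (Or.inl (EReal.coe_ne_top _)) |>.mpr ?_
    exact le_trans h1 h3
  have step2 : A - ((g x + ε/2 : ℝ) : EReal) ≤ infEnv flim ε' x := le_iInf₂ step1
  have step3 : infEnv flim ε' x - (ε' : EReal) ≤ f n x := hN n hn x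
  have step4 : A - ((g x + ε/2 : ℝ) : EReal) - (ε' : EReal) ≤ f n x :=
    le_trans (EReal.sub_le_sub step2 le_rfl) step3
  have step5 : A - ((g x + ε/2 : ℝ) : EReal) - (ε' : EReal) + (g x : EReal) ≤ f n x + (g x : EReal) :=
    add_le_add_left step4 _
  refine le_trans ?_ step5
  simp only [sub_eq_add_neg, ← EReal.coe_neg, add_assoc, ← EReal.coe_add]
  apply add_le_add_right
  rw [EReal.coe_le_coe_iff]
  linarith
end
end

section
/- Let (X,d) be a complete metric space and let (𝒫, ‖·‖_𝒫) be a perturbation space on X. Let f : X → ℝ ∪ {+∞} be proper, lower semicontinuous and bounded below. Then the set { g ∈ 𝒫 : f + g attains its strong minimum on X } is a dense G_δ subset of 𝒫. -/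
open Filter Topology Metric Set

noncomputable section

namespace DGZAux

lemma iInf_add_coe {Y : Sort*} (F : Y → EReal) (r : ℝ) :
    ⨅ x, (F x + (r : EReal)) = (⨅ x, F x) + r := by
  apply le_antisymm
  · apply (EReal.addLECancellable_coe (-r)).add_le_add_iff_right.mp
    have h1 : (⨅ x, F x + (r:EReal)) + ((-r:ℝ):EReal) ≤ ⨅ x, F x := by
      refine le_iInf fun x => ?_
      calc (⨅ x, F x + (r:EReal)) + ((-r:ℝ):EReal) ≤ (F x + (r:EReal)) + ((-r:ℝ):EReal) :=
            add_le_add_left (iInf_le _ x) _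
        _ = F x := by rw [add_assoc, ← EReal.coe_add]; simp
    calc (⨅ x, F x + (r:EReal)) + ((-r:ℝ):EReal) ≤ ⨅ x, F x := h1
      _ ≤ (⨅ x, F x) + (r:EReal) + ((-r:ℝ):EReal) := by
          rw [add_assoc, ← EReal.coe_add]; simp
  · exact le_iInf fun x => add_le_add_left (iInf_le _ x) _

lemma iInf_le_iInf_add {Y : Sort*} {F G : Y → EReal} {r : ℝ}
    (h : ∀ x, F x ≤ G x + (r : EReal)) : (⨅ x, F x) ≤ (⨅ x, G x) + r := by
  rw [← iInf_add_coe]; exact iInf_mono h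

lemma eMin_mono {X : Type*} (F : X → EReal) {δ δ' : ℝ} (h : δ ≤ δ') :
    eMin F δ ⊆ eMin F δ' := fun x hx =>
  le_trans hx (add_le_add_right (EReal.coe_le_coe_iff.mpr h) _)

lemma self_lt_add_coe {a : EReal} (ht : a ≠ ⊤) (hb : a ≠ ⊥) {δ : ℝ} (hδ : 0 < δ) :
    a < a + (δ : EReal) := by
  obtain ⟨i, rfl⟩ : ∃ i : ℝ, a = (i : EReal) := ⟨a.toReal, (EReal.coe_toReal ht hb).symm⟩
  rw [← EReal.coe_add]
  exact EReal.coe_lt_coe_iff.mpr (by linarith)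

lemma eMin_nonempty {X : Type*} {F : X → EReal} {δ : ℝ} (hδ : 0 < δ)
    (ht : (⨅ x, F x) ≠ ⊤) (hb : (⨅ x, F x) ≠ ⊥) : (eMin F δ).Nonempty := by
  obtain ⟨x, hx⟩ := iInf_lt_iff.mp (self_lt_add_coe ht hb hδ)
  exact ⟨x, hx.le⟩

lemma exists_pos_add_lt {a : ℝ} {b : EReal} (h : (a : EReal) < b) :
    ∃ δ : ℝ, 0 < δ ∧ (a : EReal) + (δ : EReal) < b := by
  induction b using EReal.rec with
  | bot => exact absurd h (by simp)
  | coe b =>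
      refine ⟨(b - a) / 2, by linarith [EReal.coe_lt_coe_iff.mp h], ?_⟩
      rw [← EReal.coe_add]
      exact EReal.coe_lt_coe_iff.mpr (by linarith [EReal.coe_lt_coe_iff.mp h])
  | top => exact ⟨1, one_pos, by rw [← EReal.coe_add]; exact EReal.coe_lt_top _⟩

end DGZAux

open DGZAux

/-- Theorem 3.2 (Deville–Godefroy–Zizler-type perturbation principle): if `P` is a
perturbation space on a complete metric space `X` (a Banach space of bounded
uniformly continuous real functions on `X`, with norm dominating the sup norm,
satisfying the localization property (ii)), and `f` is proper, lower semicontinuous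
and bounded below, then the set of `g ∈ P` such that `f + g` attains its strong
minimum is a dense `G_δ` subset of `P`. -/
theorem strongMin_dense_Gδ {X : Type*} [MetricSpace X] [CompleteSpace X]
    (P : Type*) [NormedAddCommGroup P] [NormedSpace ℝ P] [CompleteSpace P]
    (T : P →ₗ[ℝ] X → ℝ) (hTinj : Function.Injective T)
    (hTuc : ∀ g : P, UniformContinuous (T g))
    (hTbdd : ∀ g : P, ∃ M : ℝ, ∀ x, |T g x| ≤ M)
    (c : ℝ) (hc : 0 < c) (hdom : ∀ (g : P) (x : X), |T g x| ≤ c * ‖g‖)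
    (hpert : ∀ ε : ℝ, 0 < ε → ∃ δ : ℝ, 0 < δ ∧ ∀ x : X, ∃ g : P, ‖g‖ ≤ ε ∧
      x ∈ eMinR (T g) δ ∧ EMetric.diam (eMinR (T g) (3 * δ)) ≤ ENNReal.ofReal ε)
    (f : X → EReal) (hproper : ProperFn f) (hlsc : LowerSemicontinuous f)
    (hbdd : BddBelowFn f) :
    IsGδ {g : P | ∃ xbar : X, StrongMinAt (fun x => f x + (T g x : EReal)) xbar} ∧
      Dense {g : P | ∃ xbar : X, StrongMinAt (fun x => f x + (T g x : EReal)) xbar} := by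
  classical
  obtain ⟨m, hm⟩ := hbdd
  obtain ⟨xp, hxp⟩ := hproper
  set F : P → X → EReal := fun g x => f x + (T g x : EReal) with hF
  set I : P → EReal := fun g => ⨅ x, F g x with hI
  -- basic finiteness facts
  have hIbot : ∀ g, I g ≠ ⊥ := by
    intro g
    have : ((m + -(c * ‖g‖) : ℝ) : EReal) ≤ I g := by
      refine le_iInf fun x => ?_
      rw [EReal.coe_add]
      exact add_le_add (hm x) (EReal.coe_le_coe_iff.mpr
        (neg_le_of_abs_le (hdom g x) |>.trans_eq rfl))
    intro hb
    rw [hb, le_bot_iff] at this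
    exact EReal.coe_ne_bot _ this
  have hItop : ∀ g, I g ≠ ⊤ := by
    intro g
    have h1 : I g ≤ F g xp := iInf_le _ xp
    have h2 : F g xp < ⊤ := EReal.add_lt_top hxp (EReal.coe_ne_top _)
    exact (h1.trans_lt h2).ne
  -- Lipschitz comparison
  have hLip : ∀ g h : P, ∀ x, F g x ≤ F h x + ((c * ‖g - h‖ : ℝ) : EReal) := by
    intro g h x
    have h1 : T g x ≤ T h x + c * ‖g - h‖ := by
      have := (abs_le.mp (hdom (g - h) x)).2
      have he : T (g - h) x = T g x - T h x := by simp [map_sub]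
      linarith [he ▸ this]
    calc F g x = f x + (T g x : EReal) := rfl
      _ ≤ f x + ((T h x + c * ‖g - h‖ : ℝ) : EReal) :=
          add_le_add_right (EReal.coe_le_coe_iff.mpr h1) _
      _ = (f x + (T h x : EReal)) + ((c * ‖g - h‖ : ℝ) : EReal) := by
          rw [EReal.coe_add, add_assoc]
  have hILip : ∀ g h : P, I g ≤ I h + ((c * ‖g - h‖ : ℝ) : EReal) :=
    fun g h => iInf_le_iInf_add (hLip g h)
  -- the open sets
  set U : ℕ → Set P := fun n =>
    {g | ∃ δ : ℝ, 0 < δ ∧ EMetric.diam (eMin (F g) δ) < ENNReal.ofReal (1 / (n + 1))} with hU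
  have hIeq : ∀ g, (⨅ x, F g x) = I g := fun g => rfl
  have hopen : ∀ n, IsOpen (U n) := by
    intro n
    rw [Metric.isOpen_iff]
    rintro g ⟨δ, hδ, hdiam⟩
    refine ⟨δ / (4 * c), by positivity, fun h hball => ?_⟩
    rw [mem_ball, dist_eq_norm] at hball
    have hr : c * ‖h - g‖ < δ / 4 := by
      have h2 : c * (δ / (4 * c)) = δ / 4 := by field_simp
      calc c * ‖h - g‖ < c * (δ / (4 * c)) := mul_lt_mul_of_pos_left hball hc
        _ = δ / 4 := h2
    have hr0 : 0 ≤ c * ‖h - g‖ := by positivity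
    have hsub : eMin (F h) (δ / 4) ⊆ eMin (F g) δ := by
      intro x hx
      have hx' : F h x ≤ I h + ((δ / 4 : ℝ) : EReal) := hx
      have step1 : F g x ≤ (I h + ((δ/4 : ℝ):EReal)) + ((c * ‖g - h‖ : ℝ):EReal) :=
        (hLip g h x).trans (add_le_add_left hx' _)
      have step2 : I h ≤ I g + ((c * ‖h - g‖ : ℝ):EReal) := hILip h g
      have hnn : ‖g - h‖ = ‖h - g‖ := norm_sub_rev g h
      have step3 : F g x ≤ ((I g + ((c * ‖h - g‖ : ℝ):EReal)) + ((δ/4 : ℝ):EReal))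
          + ((c * ‖h - g‖ : ℝ):EReal) := by
        rw [hnn] at step1
        exact step1.trans (add_le_add_left (add_le_add_left step2 _) _)
      have : F g x ≤ I g + ((c * ‖h - g‖ + δ/4 + c * ‖h - g‖ : ℝ):EReal) := by
        calc F g x ≤ _ := step3
          _ = I g + ((c * ‖h - g‖ + δ/4 + c * ‖h - g‖ : ℝ):EReal) := by
            rw [EReal.coe_add, EReal.coe_add]; abel
      exact this.trans (add_le_add_right (EReal.coe_le_coe_iff.mpr (by linarith)) _)
    exact ⟨δ / 4, by positivity, lt_of_le_of_lt (EMetric.diam_mono hsub) hdiam⟩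
  have hdense : ∀ n, Dense (U n) := by
    intro n
    rw [Metric.dense_iff]
    intro g ε hε
    have hpos : (0:ℝ) < (n:ℝ) + 1 := by positivity
    set ε₀ : ℝ := min (ε / 2) (1 / (2 * ((n:ℝ) + 1))) with hε₀def
    have hε₀ : 0 < ε₀ := lt_min (by linarith) (by positivity)
    obtain ⟨δ, hδ, hp⟩ := hpert ε₀ hε₀
    obtain ⟨x₀, hx₀⟩ := eMin_nonempty (F := F g) hδ (hItop g) (hIbot g)
    obtain ⟨h, hnorm, hx₀min, hdiam⟩ := hp x₀
    refine ⟨g + h, ?_, ?_⟩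
    · rw [mem_ball, dist_eq_norm]
      have he : g + h - g = h := by abel
      rw [he]
      exact hnorm.trans_lt (lt_of_le_of_lt (min_le_left _ _) (by linarith))
    · refine ⟨δ, hδ, ?_⟩
      have hTgh : ∀ z, T (g + h) z = T g z + T h z := by intro z; simp [map_add]
      have hsub : eMin (F (g + h)) δ ⊆ eMinR (T h) (3 * δ) := by
        intro x hx
        have hx' : (f x + (T g x : EReal)) + ((T h x : ℝ) : EReal)
            ≤ I (g + h) + ((δ : ℝ) : EReal) := by
          calc (f x + (T g x : EReal)) + ((T h x : ℝ) : EReal)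
              = f x + ((T g x + T h x : ℝ) : EReal) := by rw [EReal.coe_add, add_assoc]
            _ = F (g + h) x := by rw [hF]; simp only [hTgh]
            _ ≤ I (g + h) + ((δ : ℝ) : EReal) := hx
        have hIub : I (g + h) ≤ (I g + ((δ:ℝ) : EReal)) + ((T h x₀ : ℝ) : EReal) := by
          have h1 : I (g + h) ≤ F (g + h) x₀ := iInf_le _ x₀
          have h2 : F (g + h) x₀ = (f x₀ + (T g x₀ : EReal)) + ((T h x₀ : ℝ) : EReal) := by
            rw [hF]; simp only [hTgh]; rw [EReal.coe_add, add_assoc]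
          have h3 : F g x₀ ≤ I g + ((δ:ℝ) : EReal) := hx₀
          calc I (g + h) ≤ (f x₀ + (T g x₀ : EReal)) + ((T h x₀ : ℝ) : EReal) := h2 ▸ h1
            _ ≤ (I g + ((δ:ℝ) : EReal)) + ((T h x₀ : ℝ) : EReal) := add_le_add_left h3 _
        set a : EReal := f x + (T g x : EReal) with ha
        have hIg_le_a : I g ≤ a := iInf_le _ x
        have hatop : a ≠ ⊤ := by
          intro htop
          have h4 : (⊤ : EReal) ≤ I (g + h) + ((δ:ℝ) : EReal) := by
            rw [← EReal.top_add_coe (T h x), ← htop]; exact hx'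
          have hlt : I (g + h) + ((δ:ℝ) : EReal) < ⊤ :=
            EReal.add_lt_top (hItop _) (EReal.coe_ne_top _)
          exact absurd (top_le_iff.mp h4) hlt.ne
        have habot : a ≠ ⊥ := by
          intro hbot
          have h5 : ((m + T g x : ℝ) : EReal) ≤ a := by
            rw [EReal.coe_add]; exact add_le_add_left (hm x) _
          rw [hbot, le_bot_iff] at h5
          exact EReal.coe_ne_bot _ h5
        obtain ⟨ar, har⟩ : ∃ ar : ℝ, a = (ar : EReal) :=
          ⟨a.toReal, (EReal.coe_toReal hatop habot).symm⟩
        obtain ⟨ig, hig⟩ : ∃ ig : ℝ, I g = (ig : EReal) :=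
          ⟨(I g).toReal, (EReal.coe_toReal (hItop g) (hIbot g)).symm⟩
        have hreal : ar + T h x ≤ ((ig + δ) + T h x₀) + δ := by
          have h6 := hx'.trans (add_le_add_left hIub _)
          rw [har, hig] at h6
          exact_mod_cast h6
        have higar : ig ≤ ar := by
          rw [har, hig] at hIg_le_a; exact_mod_cast hIg_le_a
        have hfin : T h x ≤ T h x₀ + 2 * δ := by linarith
        have hx₀m : T h x₀ ≤ (⨅ y, T h y) + δ := hx₀min
        show T h x ≤ (⨅ y, T h y) + 3 * δ
        linarith
      have h7 : ε₀ < 1 / ((n:ℝ) + 1) := by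
        have := one_div_lt_one_div_of_lt hpos (by linarith : (n:ℝ) + 1 < 2 * ((n:ℝ) + 1))
        exact lt_of_le_of_lt (min_le_right _ _) this
      calc EMetric.diam (eMin (F (g + h)) δ)
          ≤ EMetric.diam (eMinR (T h) (3 * δ)) := EMetric.diam_mono hsub
        _ ≤ ENNReal.ofReal ε₀ := hdiam
        _ < ENNReal.ofReal (1 / ((n:ℝ) + 1)) :=
            (ENNReal.ofReal_lt_ofReal_iff (by positivity)).mpr h7
  have hmin : ∀ g : P, ∀ w : ℕ → X, (∀ k : ℕ, w k ∈ eMin (F g) (1/((k:ℝ)+1))) →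
      Tendsto (fun k => F g (w k)) atTop (𝓝 (I g)) := by
    intro g w hw
    rw [tendsto_order]
    constructor
    · intro aa haa
      exact Eventually.of_forall fun k => lt_of_lt_of_le haa (iInf_le _ _)
    · intro bb hbb
      obtain ⟨ig, hig⟩ : ∃ ig : ℝ, I g = (ig : EReal) :=
        ⟨(I g).toReal, (EReal.coe_toReal (hItop g) (hIbot g)).symm⟩
      rw [hig] at hbb
      obtain ⟨δ', hδ', hlt⟩ := exists_pos_add_lt hbb
      obtain ⟨K, hK⟩ := exists_nat_one_div_lt hδ'
      refine eventually_atTop.mpr ⟨K, fun k hk => ?_⟩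
      have h1 : F g (w k) ≤ I g + ((1/((k:ℝ)+1) : ℝ) : EReal) := hw k
      have h2 : (1/((k:ℝ)+1) : ℝ) ≤ 1/((K:ℝ)+1) := by
        apply one_div_le_one_div_of_le (by positivity)
        have : (K:ℝ) ≤ (k:ℝ) := by exact_mod_cast hk
        linarith
      calc F g (w k) ≤ I g + ((1/((k:ℝ)+1) : ℝ):EReal) := h1
        _ ≤ (ig:EReal) + (δ' : EReal) := by
            rw [hig]
            exact add_le_add_right (EReal.coe_le_coe_iff.mpr (by linarith)) _
        _ < bb := hlt
  have hset : {g : P | ∃ xbar : X, StrongMinAt (fun x => f x + (T g x : EReal)) xbar}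
      = ⋂ n, U n := by
    ext g
    simp only [mem_setOf_eq, mem_iInter]
    constructor
    · rintro ⟨xbar, hsm⟩ n
      by_contra hcon
      simp only [hU, mem_setOf_eq] at hcon
      push_neg at hcon
      have hpos : (0:ℝ) < (n:ℝ) + 1 := by positivity
      set b : ℝ := 1 / (2 * ((n:ℝ)+1)) with hb
      have hbpos : 0 < b := by positivity
      have hblt : b < 1/((n:ℝ)+1) :=
        one_div_lt_one_div_of_lt hpos (by linarith : (n:ℝ) + 1 < 2 * ((n:ℝ) + 1))
      have key : ∀ k : ℕ, ∃ u v : X, u ∈ eMin (F g) (1/((k:ℝ)+1)) ∧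
          v ∈ eMin (F g) (1/((k:ℝ)+1)) ∧ b ≤ dist u v := by
        intro k
        by_contra hk
        push_neg at hk
        have hd : EMetric.diam (eMin (F g) (1/((k:ℝ)+1))) ≤ ENNReal.ofReal b :=
          EMetric.diam_le fun x hx y hy => by
            rw [edist_dist]
            exact ENNReal.ofReal_le_ofReal (hk x y hx hy).le
        have h1 : ENNReal.ofReal (1/((n:ℝ)+1)) ≤ ENNReal.ofReal b :=
          le_trans (hcon _ (by positivity)) hd
        exact absurd h1 (not_le.mpr ((ENNReal.ofReal_lt_ofReal_iff (by positivity)).mpr hblt))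
      choose u v hu hv hd using key
      have hu' : Tendsto u atTop (𝓝 xbar) := hsm u (hmin g u hu)
      have hv' : Tendsto v atTop (𝓝 xbar) := hsm v (hmin g v hv)
      have huv : Tendsto (fun k => dist (u k) (v k)) atTop (𝓝 (dist xbar xbar)) :=
        hu'.dist hv'
      rw [dist_self] at huv
      have hb0 : b ≤ 0 := ge_of_tendsto huv (Eventually.of_forall fun k => hd k)
      linarith
    · intro hg
      have hgU : ∀ n : ℕ, ∃ δ : ℝ, 0 < δ ∧
          EMetric.diam (eMin (F g) δ) < ENNReal.ofReal (1/((n:ℝ)+1)) := fun n => hg n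
      choose δ0 hδ0 hdiam0 using hgU
      set D : ℕ → ℝ := fun n =>
        (Finset.range (n+1)).inf' ⟨0, Finset.mem_range.mpr (Nat.succ_pos n)⟩ δ0 with hD
      have hDpos : ∀ n, 0 < D n := fun n =>
        (Finset.lt_inf'_iff _).mpr fun k _ => hδ0 k
      have hDle : ∀ n, D n ≤ δ0 n := fun n =>
        Finset.inf'_le _ (Finset.self_mem_range_succ n)
      have hDanti : ∀ {k n : ℕ}, k ≤ n → D n ≤ D k := by
        intro k n hkn
        have hsub : Finset.range (k+1) ⊆ Finset.range (n+1) :=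
          Finset.range_subset_range.mpr (by omega)
        exact Finset.inf'_mono (f := δ0) hsub ⟨0, Finset.mem_range.mpr (Nat.succ_pos k)⟩
      -- the two-point distance bound inside eMin (F g) (D n)
      have hdist : ∀ n : ℕ, ∀ p ∈ eMin (F g) (D n), ∀ q ∈ eMin (F g) (D n),
          dist p q ≤ 1/((n:ℝ)+1) := by
        intro n p hp q hq
        have hpd : p ∈ eMin (F g) (δ0 n) := eMin_mono _ (hDle n) hp
        have hqd : q ∈ eMin (F g) (δ0 n) := eMin_mono _ (hDle n) hq
        have he : edist p q ≤ EMetric.diam (eMin (F g) (δ0 n)) :=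
          EMetric.edist_le_diam_of_mem hpd hqd
        have he2 : edist p q ≤ ENNReal.ofReal (1/((n:ℝ)+1)) := he.trans (hdiam0 n).le
        exact (edist_le_ofReal (by positivity)).mp he2
      have hne : ∀ n : ℕ, (eMin (F g) (D n)).Nonempty := fun n =>
        eMin_nonempty (hDpos n) (hItop g) (hIbot g)
      choose x hx using hne
      have hxm : ∀ {n k : ℕ}, n ≤ k → x k ∈ eMin (F g) (D n) := by
        intro n k hnk
        exact eMin_mono _ (hDanti hnk) (hx k)
      have hCauchy : CauchySeq x := by
        rw [Metric.cauchySeq_iff']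
        intro ε hε
        obtain ⟨N, hN⟩ := exists_nat_one_div_lt hε
        refine ⟨N, fun k hk => ?_⟩
        exact lt_of_le_of_lt (hdist N _ (hxm hk) _ (hxm le_rfl)) hN
      obtain ⟨xb, hxb⟩ := cauchySeq_tendsto_of_complete hCauchy
      refine ⟨xb, ?_⟩
      intro y hy
      have hyF : Tendsto (fun k => F g (y k)) atTop (𝓝 (I g)) := hy
      rw [Metric.tendsto_atTop]
      intro ε hε
      obtain ⟨N, hN⟩ := exists_nat_one_div_lt hε
      have hev : ∀ᶠ k in atTop, F g (y k) < I g + ((D N : ℝ) : EReal) :=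
        hyF (Iio_mem_nhds (self_lt_add_coe (hItop g) (hIbot g) (hDpos N)))
      rw [eventually_atTop] at hev
      obtain ⟨K, hK⟩ := hev
      refine ⟨K, fun k hk => ?_⟩
      have hyk : y k ∈ eMin (F g) (D N) := (hK k hk).le
      have hlim : Tendsto (fun j => dist (y k) (x j)) atTop (𝓝 (dist (y k) xb)) :=
        tendsto_const_nhds.dist hxb
      have hle : dist (y k) xb ≤ 1/((N:ℝ)+1) := by
        refine le_of_tendsto hlim (eventually_atTop.mpr ⟨N, fun j hj => ?_⟩)
        exact hdist N _ hyk _ (hxm hj)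
      exact lt_of_le_of_lt hle hN
  rw [hset]
  exact ⟨IsGδ.iInter fun n => (hopen n).isGδ, dense_iInter_of_isOpen hopen hdense⟩
end
end

section
/- Let (X,d) be a complete metric space and let (𝒫, ‖·‖_𝒫) be a perturbation space on X. Let f : X → ℝ ∪ {+∞} be proper, lower semicontinuous and bounded below. Then for every ε > 0 there exists g ∈ 𝒫 with ‖g‖_𝒫 ≤ ε such that f + g attains its strong minimum on X. -/
open Filter Topology Metric Set

noncomputable section

/-! ### Auxiliary material for the proof -/

/-- Simple recursion combinator. -/
def iterSeq {α : Type*} (a : α) (F : ℕ → α → α) : ℕ → α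
  | 0 => a
  | k + 1 => F k (iterSeq a F k)

@[simp] lemma iterSeq_zero {α : Type*} (a : α) (F : ℕ → α → α) : iterSeq a F 0 = a := rfl

@[simp] lemma iterSeq_succ {α : Type*} (a : α) (F : ℕ → α → α) (k : ℕ) :
    iterSeq a F (k + 1) = F k (iterSeq a F k) := rfl

lemma ereal_add_real_le_assoc {a : EReal} {u v s : ℝ} (h : u ≤ v + s) :
    a + (u : EReal) ≤ (a + (v : EReal)) + (s : EReal) := by
  rw [add_assoc, ← EReal.coe_add]
  exact add_le_add_right (EReal.coe_le_coe_iff.2 h) a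

lemma ereal_sub_le_of_le_add {r s : ℝ} {a : EReal} (h : (r : EReal) ≤ a + (s : EReal)) :
    ((r - s : ℝ) : EReal) ≤ a := by
  induction a using EReal.rec with
  | bot => simp at h
  | coe t =>
      rw [← EReal.coe_add] at h
      exact_mod_cast by linarith [EReal.coe_le_coe_iff.1 h]
  | top => exact le_top

lemma exists_real_iInf {ι : Sort*} (h : ι → EReal) (m : ℝ) (hm : ∀ x, (m : EReal) ≤ h x)
    (x₀ : ι) (hx₀ : h x₀ ≠ ⊤) : ∃ a : ℝ, (⨅ x, h x) = (a : EReal) := by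
  have h1 : (m : EReal) ≤ ⨅ x, h x := le_iInf hm
  have h2 : (⨅ x, h x) ≤ h x₀ := iInf_le _ _
  have hnt : (⨅ x, h x) ≠ ⊤ := fun hcon => hx₀ (top_le_iff.1 (hcon ▸ h2))
  have hnb : (⨅ x, h x) ≠ ⊥ := by
    intro hcon
    rw [hcon, le_bot_iff] at h1
    exact EReal.coe_ne_bot m h1
  exact ⟨(⨅ x, h x).toReal, (EReal.coe_toReal hnt hnb).symm⟩

lemma exists_le_inf_add {ι : Sort*} {h : ι → EReal} {A t : ℝ}
    (hA : (⨅ x, h x) = (A : EReal)) (ht : 0 < t) : ∃ x, h x ≤ ((A + t : ℝ) : EReal) := by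
  have hlt : (⨅ x, h x) < ((A + t : ℝ) : EReal) := by
    rw [hA]; exact EReal.coe_lt_coe_iff.2 (by linarith)
  obtain ⟨x, hx⟩ := iInf_lt_iff.1 hlt
  exact ⟨x, hx.le⟩

lemma dist_le_of_diam_le {Y : Type*} [PseudoMetricSpace Y] {s : Set Y} {e : ℝ} (he : 0 ≤ e)
    (hd : EMetric.diam s ≤ ENNReal.ofReal e) {x y : Y} (hx : x ∈ s) (hy : y ∈ s) :
    dist x y ≤ e := by
  have h := (EMetric.edist_le_diam_of_mem hx hy).trans hd
  rw [edist_dist] at h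
  exact (ENNReal.ofReal_le_ofReal_iff he).1 h

set_option maxHeartbeats 2000000 in
/-- Corollary of Theorem 3.2: for every `ε > 0` there is `g` in the perturbation
space with `‖g‖ ≤ ε` such that `f + g` attains its strong minimum. -/
theorem exists_small_perturbation_strongMin {X : Type*} [MetricSpace X] [CompleteSpace X]
    (P : Type*) [NormedAddCommGroup P] [NormedSpace ℝ P] [CompleteSpace P]
    (T : P →ₗ[ℝ] X → ℝ) (hTinj : Function.Injective T)
    (hTuc : ∀ g : P, UniformContinuous (T g))
    (hTbdd : ∀ g : P, ∃ M : ℝ, ∀ x, |T g x| ≤ M)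
    (c : ℝ) (hc : 0 < c) (hdom : ∀ (g : P) (x : X), |T g x| ≤ c * ‖g‖)
    (hpert : ∀ ε : ℝ, 0 < ε → ∃ δ : ℝ, 0 < δ ∧ ∀ x : X, ∃ g : P, ‖g‖ ≤ ε ∧
      x ∈ eMinR (T g) δ ∧ EMetric.diam (eMinR (T g) (3 * δ)) ≤ ENNReal.ofReal ε)
    (f : X → EReal) (hproper : ProperFn f) (hlsc : LowerSemicontinuous f)
    (hbdd : BddBelowFn f) :
    ∀ ε : ℝ, 0 < ε → ∃ g : P, ‖g‖ ≤ ε ∧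
      ∃ xbar : X, StrongMinAt (fun x => f x + (T g x : EReal)) xbar := by
  classical
  intro ε hε
  obtain ⟨x₀, hx₀⟩ := hproper
  obtain ⟨m, hm⟩ := hbdd
  -- selection functions for the perturbation property
  obtain ⟨δf, Gf, hsel⟩ : ∃ δf : ℝ → ℝ, ∃ Gf : ℝ → X → P, ∀ e, 0 < e →
      0 < δf e ∧ ∀ x, ‖Gf e x‖ ≤ e ∧ x ∈ eMinR (T (Gf e x)) (δf e) ∧
        EMetric.diam (eMinR (T (Gf e x)) (3 * δf e)) ≤ ENNReal.ofReal e := by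
    refine ⟨fun e => if he : 0 < e then (hpert e he).choose else 1,
      fun e x => if he : 0 < e then ((hpert e he).choose_spec.2 x).choose else 0, ?_⟩
    intro e he
    simp only [dif_pos he]
    exact ⟨(hpert e he).choose_spec.1, fun x => ((hpert e he).choose_spec.2 x).choose_spec⟩
  have hδpos : ∀ e, 0 < e → 0 < δf e := fun e he => (hsel e he).1
  have hGnorm : ∀ e, 0 < e → ∀ x, ‖Gf e x‖ ≤ e := fun e he x => ((hsel e he).2 x).1
  have hGmem : ∀ e, 0 < e → ∀ x, x ∈ eMinR (T (Gf e x)) (δf e) :=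
    fun e he x => ((hsel e he).2 x).2.1
  have hGdiam : ∀ e, 0 < e → ∀ x,
      EMetric.diam (eMinR (T (Gf e x)) (3 * δf e)) ≤ ENNReal.ofReal e :=
    fun e he x => ((hsel e he).2 x).2.2
  -- the scale sequence
  set E : ℕ → ℝ := iterSeq (ε / 2) (fun _ e => min (e / 2) (δf e / (8 * c))) with hEdef
  have hE0 : E 0 = ε / 2 := by simp only [hEdef, iterSeq_zero]
  have hEsucc : ∀ k, E (k + 1) = min (E k / 2) (δf (E k) / (8 * c)) := fun k => by simp only [hEdef, iterSeq_succ]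
  have hEpos : ∀ k, 0 < E k := by
    intro k; induction k with
    | zero => rw [hE0]; positivity
    | succ k ih =>
        rw [hEsucc]
        exact lt_min (by linarith) (div_pos (hδpos _ ih) (by linarith))
  have hEhalf : ∀ k, E (k + 1) ≤ E k / 2 := fun k => by rw [hEsucc]; exact min_le_left _ _
  have hEδ : ∀ k, E (k + 1) ≤ δf (E k) / (8 * c) := fun k => by
    rw [hEsucc]; exact min_le_right _ _
  have hEgeom : ∀ k j, E (j + k) ≤ E k * (1 / 2) ^ j := by
    intro k j; induction j with
    | zero => simp
    | succ j ih =>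
        calc E (j + 1 + k) = E ((j + k) + 1) := by rw [Nat.succ_add]
          _ ≤ E (j + k) / 2 := hEhalf _
          _ ≤ (E k * (1 / 2) ^ j) / 2 := by linarith
          _ = E k * (1 / 2) ^ (j + 1) := by ring
  have hgeo_sum : Summable (fun j : ℕ => (1 / 2 : ℝ) ^ j) :=
    summable_geometric_of_lt_one (by norm_num) (by norm_num)
  have hEsummable : Summable E := by
    refine Summable.of_nonneg_of_le (fun j => (hEpos j).le) (fun j => ?_)
      (hgeo_sum.mul_left (E 0))
    simpa using hEgeom 0 j
  have hEtail : ∀ k, ∑' j, E (j + k) ≤ 2 * E k := by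
    intro k
    have h1 : ∑' j, E (j + k) ≤ ∑' j : ℕ, E k * (1 / 2) ^ j :=
      Summable.tsum_le_tsum (fun j => hEgeom k j) ((summable_nat_add_iff k).2 hEsummable)
        (hgeo_sum.mul_left _)
    have h2 : ∑' j : ℕ, E k * (1 / 2 : ℝ) ^ j = E k * 2 := by
      rw [tsum_mul_left, tsum_geometric_of_lt_one (by norm_num) (by norm_num)]; norm_num
    rw [h2] at h1; linarith
  have hEtend : Tendsto E atTop (𝓝 0) := by
    have hgeo : Tendsto (fun k : ℕ => E 0 * (1 / 2 : ℝ) ^ k) atTop (𝓝 0) := by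
      simpa using
        (tendsto_pow_atTop_nhds_zero_of_lt_one (by norm_num : (0:ℝ) ≤ 1/2)
          (by norm_num)).const_mul (E 0)
    exact squeeze_zero (fun k => (hEpos k).le) (fun k => by simpa using hEgeom 0 k) hgeo
  -- the recursive construction
  set pick : (X → EReal) → ℝ → X := fun h d =>
    if hh : ∃ x, h x ≤ (⨅ y, h y) + (d : EReal) then hh.choose else x₀ with hpickdef
  set state : ℕ → X → EReal :=
    iterSeq f (fun k h => fun x => h x + (T (Gf (E k) (pick h (δf (E k)))) x : EReal))
    with hstatedef
  set xk : ℕ → X := fun k => pick (state k) (δf (E k)) with hxkdef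
  set gs : ℕ → P := fun k => Gf (E k) (xk k) with hgsdef
  have hstate0 : state 0 = f := by simp only [hstatedef, iterSeq_zero]
  have hstatesucc : ∀ k x, state (k + 1) x = state k x + (T (gs k) x : EReal) := by
    intro k x
    simp only [hgsdef, hxkdef, hstatedef, iterSeq_succ]
  have hgsnorm : ∀ k, ‖gs k‖ ≤ E k := by
    intro k; simp only [hgsdef]; exact hGnorm _ (hEpos k) _
  have hxkmem : ∀ k, T (gs k) (xk k) ≤ (⨅ y, T (gs k) y) + δf (E k) := by
    intro k
    have := hGmem (E k) (hEpos k) (xk k)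
    simpa only [hgsdef, eMinR, Set.mem_setOf_eq] using this
  have hgsdiam : ∀ k, EMetric.diam (eMinR (T (gs k)) (3 * δf (E k))) ≤ ENNReal.ofReal (E k) := by
    intro k; simp only [hgsdef]; exact hGdiam _ (hEpos k) _
  have hTbd : ∀ k x, |T (gs k) x| ≤ c * E k :=
    fun k x => (hdom _ x).trans (mul_le_mul_of_nonneg_left (hgsnorm k) hc.le)
  -- finiteness invariants
  have hinv : ∀ k, (∃ mk : ℝ, ∀ x, (mk : EReal) ≤ state k x) ∧ state k x₀ ≠ ⊤ := by
    intro k; induction k with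
    | zero => rw [hstate0]; exact ⟨⟨m, hm⟩, hx₀⟩
    | succ k ih =>
        obtain ⟨⟨mk, hmk⟩, hnt⟩ := ih
        constructor
        · refine ⟨mk - c * E k, fun x => ?_⟩
          have h1 : -(c * E k) ≤ T (gs k) x := (abs_le.1 (hTbd k x)).1
          calc ((mk - c * E k : ℝ) : EReal)
              = (mk : EReal) + ((-(c * E k) : ℝ) : EReal) := by
                rw [← EReal.coe_add, sub_eq_add_neg]
            _ ≤ state k x + (T (gs k) x : EReal) :=
                add_le_add (hmk x) (EReal.coe_le_coe_iff.2 h1)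
            _ = state (k + 1) x := (hstatesucc k x).symm
        · rw [hstatesucc]
          exact (EReal.add_lt_top hnt (EReal.coe_ne_top _)).ne
  have hfin : ∀ k, ∃ a : ℝ, (⨅ x, state k x) = (a : EReal) := fun k =>
    exists_real_iInf _ (hinv k).1.choose (hinv k).1.choose_spec x₀ (hinv k).2
  choose Ak hAk using hfin
  have hpickspec : ∀ k, state k (xk k) ≤ (⨅ y, state k y) + (δf (E k) : EReal) := by
    intro k
    have hex : ∃ x, state k x ≤ (⨅ y, state k y) + (δf (E k) : EReal) := by
      obtain ⟨x, hx⟩ := exists_le_inf_add (hAk k) (hδpos _ (hEpos k))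
      refine ⟨x, ?_⟩
      rw [hAk k, ← EReal.coe_add]
      exact hx
    have hxkval : xk k = hex.choose := by
      simp only [hxkdef, hpickdef, dif_pos hex]
    rw [hxkval]
    exact hex.choose_spec
  -- Claim A: small sublevel sets of `state (k+1)` sit inside small `eMinR` sets
  have claimA : ∀ k x, state (k + 1) x ≤ (⨅ y, state (k + 1) y) + (δf (E k) : EReal) →
      x ∈ eMinR (T (gs k)) (3 * δf (E k)) := by
    intro k x hx
    have hδ0 : 0 < δf (E k) := hδpos _ (hEpos k)
    have h1 : state k (xk k) ≤ ((Ak k + δf (E k) : ℝ) : EReal) := by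
      have := hpickspec k
      rwa [hAk k, ← EReal.coe_add] at this
    have hBB : Ak (k + 1) ≤ (Ak k + δf (E k)) + ((⨅ y, T (gs k) y) + δf (E k)) := by
      have h3 : ((Ak (k + 1) : ℝ) : EReal) ≤ state k (xk k) + (T (gs k) (xk k) : EReal) := by
        rw [← hAk (k + 1), ← hstatesucc]
        exact iInf_le _ _
      have h4 : state k (xk k) + (T (gs k) (xk k) : EReal) ≤
          ((Ak k + δf (E k) : ℝ) : EReal) + (((⨅ y, T (gs k) y) + δf (E k) : ℝ) : EReal) :=
        add_le_add h1 (EReal.coe_le_coe_iff.2 (hxkmem k))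
      have h5 := h3.trans h4
      rw [← EReal.coe_add] at h5
      exact EReal.coe_le_coe_iff.1 h5
    have hBk : ((Ak k : ℝ) : EReal) ≤ state k x := by rw [← hAk k]; exact iInf_le _ _
    have h6 : ((Ak k + T (gs k) x : ℝ) : EReal) ≤
        ((Ak k + (⨅ y, T (gs k) y) + 3 * δf (E k) : ℝ) : EReal) := by
      calc ((Ak k + T (gs k) x : ℝ) : EReal)
          = ((Ak k : ℝ) : EReal) + (T (gs k) x : EReal) := by rw [← EReal.coe_add]
        _ ≤ state k x + (T (gs k) x : EReal) := add_le_add_left hBk _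
        _ = state (k + 1) x := (hstatesucc k x).symm
        _ ≤ (⨅ y, state (k + 1) y) + (δf (E k) : EReal) := hx
        _ = ((Ak (k + 1) + δf (E k) : ℝ) : EReal) := by rw [hAk (k + 1), ← EReal.coe_add]
        _ ≤ ((Ak k + (⨅ y, T (gs k) y) + 3 * δf (E k) : ℝ) : EReal) :=
            EReal.coe_le_coe_iff.2 (by linarith)
    have h7 := EReal.coe_le_coe_iff.1 h6
    simp only [eMinR, Set.mem_setOf_eq]
    linarith
  -- the perturbation
  have hnormsum : Summable (fun k => ‖gs k‖) :=
    Summable.of_nonneg_of_le (fun k => norm_nonneg _) hgsnorm hEsummable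
  have hgsum : Summable gs := hnormsum.of_norm
  set g : P := ∑' k, gs k with hgdef
  have hgnorm : ‖g‖ ≤ ε := by
    have h1 : ‖g‖ ≤ ∑' k, ‖gs k‖ := norm_tsum_le_tsum_norm hnormsum
    have h2 : ∑' k, ‖gs k‖ ≤ ∑' k, E k := Summable.tsum_le_tsum hgsnorm hnormsum hEsummable
    have h3 : ∑' k, E k ≤ 2 * E 0 := by simpa using hEtail 0
    rw [hE0] at h3; linarith
  have htail : ∀ k x, |T g x - T (∑ i ∈ Finset.range k, gs i) x| ≤ c * (2 * E k) := by
    intro k x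
    have hre : g - ∑ i ∈ Finset.range k, gs i = ∑' i, gs (i + k) := by
      have hsum := Summable.sum_add_tsum_nat_add k hgsum
      rw [hgdef, ← hsum, add_sub_cancel_left]
    have hnorm2 : ‖g - ∑ i ∈ Finset.range k, gs i‖ ≤ 2 * E k := by
      rw [hre]
      calc ‖∑' i, gs (i + k)‖ ≤ ∑' i, ‖gs (i + k)‖ :=
            norm_tsum_le_tsum_norm ((summable_nat_add_iff k).2 hnormsum)
        _ ≤ ∑' i, E (i + k) :=
            Summable.tsum_le_tsum (fun i => hgsnorm _) ((summable_nat_add_iff k).2 hnormsum)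
              ((summable_nat_add_iff k).2 hEsummable)
        _ ≤ 2 * E k := hEtail k
    have heq : T g x - T (∑ i ∈ Finset.range k, gs i) x
        = T (g - ∑ i ∈ Finset.range k, gs i) x := by
      rw [map_sub]; rfl
    rw [heq]
    exact (hdom _ x).trans (mul_le_mul_of_nonneg_left hnorm2 hc.le)
  have hstate_eq : ∀ k x,
      state k x = f x + ((T (∑ i ∈ Finset.range k, gs i) x : ℝ) : EReal) := by
    intro k; induction k with
    | zero =>
        intro x
        rw [hstate0]
        simp
    | succ k ih =>
        intro x
        rw [hstatesucc, ih, Finset.sum_range_succ, map_add, Pi.add_apply, EReal.coe_add,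
          ← add_assoc]
  set h : X → EReal := fun x => f x + (T g x : EReal) with hhdef
  have hAfin : ∃ A : ℝ, (⨅ x, h x) = (A : EReal) := by
    refine exists_real_iInf _ (m - c * ‖g‖) (fun x => ?_) x₀ ?_
    · have h1 : -(c * ‖g‖) ≤ T g x := (abs_le.1 (hdom g x)).1
      calc ((m - c * ‖g‖ : ℝ) : EReal)
          = (m : EReal) + ((-(c * ‖g‖) : ℝ) : EReal) := by rw [← EReal.coe_add, sub_eq_add_neg]
        _ ≤ f x + (T g x : EReal) := add_le_add (hm x) (EReal.coe_le_coe_iff.2 h1)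
    · exact (EReal.add_lt_top hx₀ (EReal.coe_ne_top _)).ne
  obtain ⟨A, hA⟩ := hAfin
  have hcomp1 : ∀ k x, h x ≤ state k x + ((c * (2 * E k) : ℝ) : EReal) := by
    intro k x
    rw [hstate_eq k x]
    have hle : T g x ≤ T (∑ i ∈ Finset.range k, gs i) x + c * (2 * E k) := by
      have := (abs_le.1 (htail k x)).2; linarith
    exact ereal_add_real_le_assoc hle
  have hcomp2 : ∀ k x, state k x ≤ h x + ((c * (2 * E k) : ℝ) : EReal) := by
    intro k x
    rw [hstate_eq k x]
    have hle : T (∑ i ∈ Finset.range k, gs i) x ≤ T g x + c * (2 * E k) := by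
      have := (abs_le.1 (htail k x)).1; linarith
    exact ereal_add_real_le_assoc hle
  -- main inclusion
  have hmain : ∀ k x, h x ≤ ((A + δf (E k) / 2 : ℝ) : EReal) →
      x ∈ eMinR (T (gs k)) (3 * δf (E k)) := by
    intro k x hx
    have hδ0 : 0 < δf (E k) := hδpos _ (hEpos k)
    have hσ1 : c * E (k + 1) ≤ δf (E k) / 8 := by
      have h1 : c * E (k + 1) ≤ c * (δf (E k) / (8 * c)) :=
        mul_le_mul_of_nonneg_left (hEδ k) hc.le
      have h2 : c * (δf (E k) / (8 * c)) = δf (E k) / 8 := by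
        field_simp
      linarith
    have hAB : A ≤ Ak (k + 1) + c * (2 * E (k + 1)) := by
      have hstep : ∀ y, ((A - c * (2 * E (k + 1)) : ℝ) : EReal) ≤ state (k + 1) y := by
        intro y
        apply ereal_sub_le_of_le_add
        calc (A : EReal) ≤ h y := by rw [← hA]; exact iInf_le _ _
          _ ≤ state (k + 1) y + ((c * (2 * E (k + 1)) : ℝ) : EReal) := hcomp1 (k + 1) y
      have h6 : ((A - c * (2 * E (k + 1)) : ℝ) : EReal) ≤ ⨅ y, state (k + 1) y := le_iInf hstep
      rw [hAk (k + 1)] at h6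
      have := EReal.coe_le_coe_iff.1 h6
      linarith
    apply claimA
    calc state (k + 1) x ≤ h x + ((c * (2 * E (k + 1)) : ℝ) : EReal) := hcomp2 (k + 1) x
      _ ≤ ((A + δf (E k) / 2 : ℝ) : EReal) + ((c * (2 * E (k + 1)) : ℝ) : EReal) :=
          add_le_add_left hx _
      _ = ((A + δf (E k) / 2 + c * (2 * E (k + 1)) : ℝ) : EReal) := by rw [← EReal.coe_add]
      _ ≤ ((Ak (k + 1) + δf (E k) : ℝ) : EReal) :=
          EReal.coe_le_coe_iff.2 (by linarith)
      _ = (⨅ y, state (k + 1) y) + (δf (E k) : EReal) := by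
          rw [hAk (k + 1), ← EReal.coe_add]
  have hdistlem : ∀ k x y, h x ≤ ((A + δf (E k) / 2 : ℝ) : EReal) →
      h y ≤ ((A + δf (E k) / 2 : ℝ) : EReal) → dist x y ≤ E k := by
    intro k x y hx hy
    exact dist_le_of_diam_le (hEpos k).le (hgsdiam k) (hmain k x hx) (hmain k y hy)
  -- the minimizing sequence
  set t' : ℕ → ℝ := iterSeq (δf (E 0) / 2) (fun k a => min a (δf (E (k + 1)) / 2)) with ht'def
  have ht'0 : t' 0 = δf (E 0) / 2 := by simp only [ht'def, iterSeq_zero]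
  have ht'succ : ∀ k, t' (k + 1) = min (t' k) (δf (E (k + 1)) / 2) := fun k => by simp only [ht'def, iterSeq_succ]
  have ht'pos : ∀ k, 0 < t' k := by
    intro k; induction k with
    | zero => rw [ht'0]; exact half_pos (hδpos _ (hEpos 0))
    | succ k ih => rw [ht'succ]; exact lt_min ih (half_pos (hδpos _ (hEpos (k + 1))))
  have ht'le : ∀ k, t' k ≤ δf (E k) / 2 := by
    intro k; cases k with
    | zero => rw [ht'0]
    | succ k => rw [ht'succ]; exact min_le_right _ _
  have ht'anti : Antitone t' :=
    antitone_nat_of_succ_le (fun k => by rw [ht'succ]; exact min_le_left _ _)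
  have hexy : ∀ k, ∃ yk, h yk ≤ ((A + t' k : ℝ) : EReal) :=
    fun k => exists_le_inf_add hA (ht'pos k)
  choose y hy using hexy
  have hyS : ∀ j k, k ≤ j → h (y j) ≤ ((A + δf (E k) / 2 : ℝ) : EReal) := by
    intro j k hkj
    refine (hy j).trans (EReal.coe_le_coe_iff.2 ?_)
    have h1 := ht'anti hkj
    have h2 := ht'le k
    linarith
  have hcauchy : CauchySeq y :=
    cauchySeq_of_le_tendsto_0 E
      (fun n mm N hn hm => hdistlem N _ _ (hyS n N hn) (hyS mm N hm)) hEtend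
  obtain ⟨xbar, hxbar⟩ := cauchySeq_tendsto_of_complete hcauchy
  refine ⟨g, hgnorm, xbar, ?_⟩
  rw [show (fun x => f x + (T g x : EReal)) = h from hhdef.symm]
  intro z hz
  rw [hA] at hz
  rw [Metric.tendsto_atTop]
  intro η hη
  obtain ⟨k, hk⟩ : ∃ k, E k < η / 3 :=
    (hEtend.eventually_lt_const (by positivity : (0:ℝ) < η / 3)).exists
  obtain ⟨N1, hN1⟩ := Metric.tendsto_atTop.1 hxbar (η / 3) (by positivity)
  have hev : ∀ᶠ j in atTop, h (z j) < ((A + t' k : ℝ) : EReal) :=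
    hz.eventually_lt_const (EReal.coe_lt_coe_iff.2 (by linarith [ht'pos k]))
  obtain ⟨N2, hN2⟩ := eventually_atTop.1 hev
  refine ⟨N2, fun j hj => ?_⟩
  have hzj : h (z j) ≤ ((A + δf (E k) / 2 : ℝ) : EReal) := by
    refine (hN2 j hj).le.trans (EReal.coe_le_coe_iff.2 ?_)
    have := ht'le k; linarith
  have hym : h (y (max k N1)) ≤ ((A + δf (E k) / 2 : ℝ) : EReal) :=
    hyS (max k N1) k (le_max_left _ _)
  have hd1 : dist (z j) (y (max k N1)) ≤ E k := hdistlem k _ _ hzj hym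
  have hd2 : dist (y (max k N1)) xbar < η / 3 := hN1 _ (le_max_right _ _)
  calc dist (z j) xbar ≤ dist (z j) (y (max k N1)) + dist (y (max k N1)) xbar :=
        dist_triangle _ _ _
    _ < η := by linarith
end
end

section
/- Let (X,d) be a complete metric space and let (𝒫, ‖·‖_𝒫) be a perturbation space on X. Let f_n : X → ℝ ∪ {+∞} for n ∈ ℕ ∪ {∞} be proper, lower semicontinuous and bounded below functions satisfying conditions (C1) and (C2). Then there exists a dense G_δ subset U of 𝒫 such that for each g ∈ U and each n ∈ ℕ ∪ {∞}, the function f_n + g attains a strong minimum on X at a point x_n, and moreover lim_{n→∞} x_n = x_∞ and lim_{n→∞} f_n(x_n) = f_∞(x_∞). -/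
open Filter Topology Metric Set

noncomputable section

section Aux

set_option linter.unusedSectionVars false
variable {X : Type*} [MetricSpace X] {h : X → EReal} {φ : X → ℝ} {m M r : ℝ}

/-- The infimum of `h + φ` is a real number. -/
lemma infR_exists (hp : ∃ x, h x ≠ ⊤) (hm : ∀ x, (m : EReal) ≤ h x) (hM : ∀ x, |φ x| ≤ M) :
    ∃ r : ℝ, (⨅ x, (h x + (φ x : EReal))) = (r : EReal) := by
  have hbot : ((m - M : ℝ) : EReal) ≤ ⨅ x, (h x + (φ x : EReal)) := by
    refine le_iInf fun x => ?_
    have h1 : ((m - M : ℝ) : EReal) = (m : EReal) + ((-M : ℝ) : EReal) := by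
      norm_cast
    rw [h1]
    exact add_le_add (hm x) (EReal.coe_le_coe_iff.2 (by have := abs_le.1 (hM x); linarith))
  obtain ⟨x, hx⟩ := hp
  have htop : (⨅ x, (h x + (φ x : EReal))) ≠ ⊤ := by
    refine ne_top_of_le_ne_top ?_ (iInf_le _ x)
    exact (EReal.add_lt_top hx (EReal.coe_ne_top _)).ne
  have hnbot : (⨅ x, (h x + (φ x : EReal))) ≠ ⊥ :=
    fun e => absurd (e ▸ hbot) (EReal.bot_lt_coe _).not_ge
  exact ⟨_, (EReal.coe_toReal htop hnbot).symm⟩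

lemma point_real (hm : ∀ x, (m : EReal) ≤ h x)
    (hr : (⨅ x, (h x + (φ x : EReal))) = (r : EReal)) {δ : ℝ} {x : X}
    (hx : x ∈ eMin (fun z => h z + (φ z : EReal)) δ) :
    ∃ v : ℝ, h x = (v : EReal) ∧ v + φ x ≤ r + δ := by
  have hx' : h x + (φ x : EReal) ≤ ((r + δ : ℝ) : EReal) := by
    rw [EReal.coe_add]; exact le_trans hx (by rw [hr])
  have hnt : h x ≠ ⊤ := by
    intro e; rw [e, EReal.top_add_coe] at hx'; exact absurd hx' (EReal.coe_lt_top _).not_ge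
  have hnb : h x ≠ ⊥ := fun e => absurd (e ▸ hm x) (EReal.bot_lt_coe _).not_ge
  lift h x to ℝ using ⟨hnt, hnb⟩ with v hv
  exact ⟨v, rfl, by rwa [← EReal.coe_add, EReal.coe_le_coe_iff] at hx'⟩

lemma point_lower (hr : (⨅ x, (h x + (φ x : EReal))) = (r : EReal)) {x : X} {v : ℝ}
    (hv : h x = (v : EReal)) : r ≤ v + φ x := by
  have := iInf_le (fun x => h x + (φ x : EReal)) x
  rw [hr, hv, ← EReal.coe_add, EReal.coe_le_coe_iff] at this
  exact this

lemma mem_eMin_of_real (hr : (⨅ x, (h x + (φ x : EReal))) = (r : EReal)) {δ : ℝ} {x : X} {v : ℝ}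
    (hv : h x = (v : EReal)) (hle : v + φ x ≤ r + δ) :
    x ∈ eMin (fun z => h z + (φ z : EReal)) δ := by
  show h x + (φ x : EReal) ≤ _
  rw [hr, hv, ← EReal.coe_add, ← EReal.coe_add, EReal.coe_le_coe_iff]
  exact hle

lemma exists_approx (hm : ∀ x, (m : EReal) ≤ h x)
    (hr : (⨅ x, (h x + (φ x : EReal))) = (r : EReal)) {δ : ℝ} (hδ : 0 < δ) :
    ∃ x : X, ∃ v : ℝ, h x = (v : EReal) ∧ v + φ x ≤ r + δ := by
  have hlt : (⨅ x, (h x + (φ x : EReal))) < ((r + δ : ℝ) : EReal) := by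
    rw [hr, EReal.coe_lt_coe_iff]; linarith
  obtain ⟨x, hx⟩ := iInf_lt_iff.1 hlt
  have hx' : x ∈ eMin (fun z => h z + (φ z : EReal)) δ := by
    show h x + (φ x : EReal) ≤ _
    rw [hr, ← EReal.coe_add]; exact hx.le
  obtain ⟨v, hv1, hv2⟩ := point_real hm hr hx'
  exact ⟨x, v, hv1, hv2⟩

lemma eMin_mem_iff (hm : ∀ x, (m : EReal) ≤ h x)
    (hr : (⨅ x, (h x + (φ x : EReal))) = (r : EReal)) {δ : ℝ} {x : X} :
    x ∈ eMin (fun z => h z + (φ z : EReal)) δ ↔ ∃ v : ℝ, h x = (v : EReal) ∧ v + φ x ≤ r + δ :=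
  ⟨point_real hm hr, fun ⟨v, hv, hle⟩ => mem_eMin_of_real hr hv hle⟩

end Aux

section SM

set_option linter.unusedSectionVars false
variable {X : Type*} [MetricSpace X] {h : X → EReal} {φ : X → ℝ} {m r : ℝ}

lemma lsc_sum (hlsc : LowerSemicontinuous h) (hφc : Continuous φ) :
    LowerSemicontinuous (fun z => h z + (φ z : EReal)) := by
  exact LowerSemicontinuous.add' hlsc
    (continuous_coe_real_ereal.comp hφc).lowerSemicontinuous
    (fun x => EReal.continuousAt_add (.inr (EReal.coe_ne_bot _)) (.inr (EReal.coe_ne_top _)))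

lemma strong_min_of_small [CompleteSpace X] (hlsc : LowerSemicontinuous h)
    (hφc : Continuous φ) (hm : ∀ x, (m : EReal) ≤ h x)
    (hr : (⨅ x, (h x + (φ x : EReal))) = (r : EReal))
    (hsmall : ∀ k : ℕ, ∃ δ : ℝ, 0 < δ ∧ ∀ x ∈ eMin (fun z => h z + (φ z : EReal)) δ,
      ∀ y ∈ eMin (fun z => h z + (φ z : EReal)) δ, dist x y ≤ 1 / (k + 1)) :
    ∃ xbar : X, (h xbar + (φ xbar : EReal)) = (r : EReal) ∧
      StrongMinAt (fun z => h z + (φ z : EReal)) xbar := by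
  classical
  set F : X → EReal := fun z => h z + (φ z : EReal) with hF
  choose δ0 hδ0 hdiam using hsmall
  -- decreasing sequence of parameters
  let dm : ℕ → ℝ := fun k => Nat.rec (min (δ0 0) (1 : ℝ))
    (fun k ih => min (min ih (δ0 (k + 1))) (1 / (k + 2))) k
  have dm_succ : ∀ k, dm (k + 1) = min (min (dm k) (δ0 (k + 1))) (1 / (k + 2)) := fun k => rfl
  have dm_pos : ∀ k, 0 < dm k := by
    intro k; induction k with
    | zero => exact lt_min (hδ0 0) one_pos
    | succ k ih =>
      rw [dm_succ]
      refine lt_min (lt_min ih (hδ0 _)) (by positivity)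
  have dm_anti : ∀ k, dm (k + 1) ≤ dm k := fun k => by
    rw [dm_succ]; exact (min_le_left _ _).trans (min_le_left _ _)
  have dm_anti' : ∀ j k, j ≤ k → dm k ≤ dm j := by
    intro j k hjk
    induction k with
    | zero => simp_all
    | succ k ih =>
      rcases Nat.lt_or_ge j (k+1) with hl | hl
      · exact (dm_anti k).trans (ih (Nat.lt_succ_iff.1 hl))
      · have : j = k + 1 := le_antisymm hjk hl
        simp [this]
  have dm_le_δ0 : ∀ k, dm k ≤ δ0 k := by
    intro k; cases k with
    | zero => exact min_le_left _ _
    | succ k => rw [dm_succ]; exact ((min_le_left _ _).trans (min_le_right _ _))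
  have dm_le_inv : ∀ k, dm k ≤ 1 / (k + 1) := by
    intro k; cases k with
    | zero => exact le_trans (min_le_right _ _) (by norm_num)
    | succ k => rw [dm_succ]; exact le_trans (min_le_right _ _) (le_of_eq (by push_cast; ring))
  have eMin_mono : ∀ {a b : ℝ}, a ≤ b → eMin F a ⊆ eMin F b := by
    intro a b hab x hx
    refine le_trans hx (add_le_add_right (EReal.coe_le_coe_iff.2 hab) _)
  have hdist : ∀ k, ∀ x ∈ eMin F (dm k), ∀ y ∈ eMin F (dm k), dist x y ≤ 1 / (k + 1) := by
    intro k x hx y hy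
    exact hdiam k x (eMin_mono (dm_le_δ0 k) hx) y (eMin_mono (dm_le_δ0 k) hy)
  -- canonical minimizing sequence
  have hymem : ∀ k : ℕ, ∃ x, x ∈ eMin F (dm k) := by
    intro k
    obtain ⟨x, v, hv, hle⟩ := exists_approx hm hr (dm_pos k)
    exact ⟨x, mem_eMin_of_real hr hv hle⟩
  choose y hy using hymem
  have hymem' : ∀ {j k : ℕ}, j ≤ k → y k ∈ eMin F (dm j) :=
    fun {j k} hjk => eMin_mono (dm_anti' j k hjk) (hy k)
  have hcauchy : CauchySeq y := by
    rw [Metric.cauchySeq_iff']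
    intro ε hε
    obtain ⟨k, hk⟩ := exists_nat_one_div_lt hε
    exact ⟨k, fun n hn => lt_of_le_of_lt (hdist k _ (hymem' hn) _ (hy k)) (by exact_mod_cast hk)⟩
  obtain ⟨xbar, hxbar⟩ := cauchySeq_tendsto_of_complete hcauchy
  -- F xbar = r
  have hFxlow : (r : EReal) ≤ F xbar := hr ▸ iInf_le F xbar
  have hFylim : Tendsto (fun k => F (y k)) atTop (𝓝 (r : EReal)) := by
    have hv : ∀ k, ∃ v : ℝ, F (y k) = (v : EReal) ∧ r ≤ v ∧ v ≤ r + dm k := by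
      intro k
      obtain ⟨v, hv1, hv2⟩ := point_real hm hr (hy k)
      refine ⟨v + φ (y k), ?_, point_lower hr hv1, hv2⟩
      show h (y k) + (φ (y k) : EReal) = _
      rw [hv1, EReal.coe_add]
    choose v hv1 hv2 hv3 using hv
    have : Tendsto v atTop (𝓝 r) := by
      have h1 : Tendsto (fun k : ℕ => r + 1 / (k + 1 : ℝ)) atTop (𝓝 (r + 0)) :=
        tendsto_const_nhds.add tendsto_one_div_add_atTop_nhds_zero_nat
      rw [add_zero] at h1
      exact tendsto_of_tendsto_of_tendsto_of_le_of_le tendsto_const_nhds h1 hv2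
        (fun k => (hv3 k).trans (by have := dm_le_inv k; linarith))
    rw [funext hv1]
    exact EReal.tendsto_coe.2 this
  have hFxtop : F xbar ≤ (r : EReal) := by
    by_contra hcon
    push_neg at hcon
    obtain ⟨c, hc1, hc2⟩ := exists_between hcon
    have h1 : ∀ᶠ z in 𝓝 xbar, c < F z := lsc_sum hlsc hφc xbar c hc2
    have h2 : ∀ᶠ k in atTop, c < F (y k) := hxbar.eventually h1
    have h3 : ∀ᶠ k in atTop, F (y k) < c := hFylim (Iio_mem_nhds hc1)
    obtain ⟨k, hk1, hk2⟩ := (h2.and h3).exists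
    exact absurd (hk1.trans hk2) (lt_irrefl _)
  have hFx : F xbar = (r : EReal) := le_antisymm hFxtop hFxlow
  refine ⟨xbar, hFx, ?_⟩
  intro z hz
  rw [show (⨅ w, F w) = (r : EReal) from hr] at hz
  rw [Metric.tendsto_atTop]
  intro ε hε
  obtain ⟨k, hk⟩ := exists_nat_one_div_lt hε
  have hmem : ∀ᶠ j in atTop, F (z j) < ((r + dm k : ℝ) : EReal) := by
    refine hz (Iio_mem_nhds ?_)
    rw [EReal.coe_lt_coe_iff]
    linarith [dm_pos k]
  obtain ⟨N, hN⟩ := eventually_atTop.1 hmem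
  refine ⟨N, fun j hj => ?_⟩
  have hzj : z j ∈ eMin F (dm k) := by
    refine le_trans (hN j hj).le ?_
    rw [hr, ← EReal.coe_add]
  have hxk : xbar ∈ eMin F (dm k) := by
    rw [hF]
    show F xbar ≤ _
    rw [hFx, hr]
    exact le_add_of_nonneg_right (by exact_mod_cast (dm_pos k).le)
  calc dist (z j) xbar ≤ 1 / (k + 1) := hdist k _ hzj _ hxk
    _ < ε := by exact_mod_cast hk

end SM

section Pert

set_option linter.unusedSectionVars false
variable {X : Type*} [MetricSpace X] {h : X → EReal} {φ φ' : X → ℝ} {m r r' η : ℝ}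

lemma eMin_mono' {F : X → EReal} {a b : ℝ} (hab : a ≤ b) : eMin F a ⊆ eMin F b :=
  fun x hx => le_trans hx (add_le_add_right (EReal.coe_le_coe_iff.2 hab) _)

lemma infR_pert (hm : ∀ x, (m : EReal) ≤ h x)
    (hr : (⨅ x, (h x + (φ x : EReal))) = (r : EReal))
    (hr' : (⨅ x, (h x + (φ' x : EReal))) = (r' : EReal))
    (hη : ∀ x, |φ' x - φ x| ≤ η) : r' ≤ r + η := by
  by_contra hcon
  push_neg at hcon
  obtain ⟨x, v, hv, hle⟩ := exists_approx hm hr (show 0 < (r' - r - η) / 2 by linarith)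
  have h1 : r' ≤ v + φ' x := point_lower hr' hv
  have h2 : |φ' x - φ x| ≤ η := hη x
  rw [abs_le] at h2
  linarith

lemma eMin_pert (hm : ∀ x, (m : EReal) ≤ h x)
    (hr : (⨅ x, (h x + (φ x : EReal))) = (r : EReal))
    (hr' : (⨅ x, (h x + (φ' x : EReal))) = (r' : EReal))
    (hη : ∀ x, |φ' x - φ x| ≤ η) {t : ℝ} :
    eMin (fun z => h z + (φ' z : EReal)) t ⊆ eMin (fun z => h z + (φ z : EReal)) (t + 2 * η) := by
  intro x hx
  obtain ⟨v, hv, hle⟩ := point_real hm hr' hx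
  have h1 : r' ≤ r + η := infR_pert hm hr hr' hη
  have h2 : |φ' x - φ x| ≤ η := hη x
  rw [abs_le] at h2
  exact mem_eMin_of_real hr hv (by linarith)

lemma dist_le_of_eMinR {ψ : X → ℝ} {δ ε : ℝ} (hε : 0 ≤ ε)
    (hdiam : EMetric.diam (eMinR ψ δ) ≤ ENNReal.ofReal ε)
    {x y : X} (hx : x ∈ eMinR ψ δ) (hy : y ∈ eMinR ψ δ) : dist x y ≤ ε := by
  have h1 := EMetric.edist_le_diam_of_mem hx hy
  rw [edist_dist] at h1
  exact (ENNReal.ofReal_le_ofReal_iff hε).1 (h1.trans hdiam)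

end Pert

section Open

set_option linter.unusedSectionVars false
variable {X : Type*} [MetricSpace X] {P : Type*} [NormedAddCommGroup P] [NormedSpace ℝ P]

lemma goodSet_open (T : P →ₗ[ℝ] X → ℝ) {c : ℝ} (hc : 0 < c)
    (hdom : ∀ (g : P) (x : X), |T g x| ≤ c * ‖g‖)
    (hTbdd : ∀ g : P, ∃ M : ℝ, ∀ x, |T g x| ≤ M)
    {ι : Type*} (H : ι → X → EReal) (hp : ∀ i, ∃ x, H i x ≠ ⊤)
    (hm : ∀ i, ∃ m : ℝ, ∀ x, (m : EReal) ≤ H i x) (J : ℕ → Set ι) (β : ℝ) :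
    IsOpen {g : P | ∃ δ : ℝ, 0 < δ ∧ ∃ N : ℕ, ∀ i ∈ J N, ∀ j ∈ J N,
      ∀ x ∈ eMin (fun z => H i z + (T g z : EReal)) δ,
      ∀ y ∈ eMin (fun z => H j z + (T g z : EReal)) δ, dist x y ≤ β} := by
  rw [Metric.isOpen_iff]
  rintro g ⟨δ, hδ, N, hprop⟩
  refine ⟨δ / (8 * c), by positivity, ?_⟩
  intro g' hg'
  rw [mem_ball, dist_eq_norm] at hg'
  have hη : ∀ x, |T g' x - T g x| ≤ δ / 8 := by
    intro x
    have h1 : T g' x - T g x = T (g' - g) x := by rw [map_sub]; rfl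
    rw [h1]
    refine (hdom _ x).trans ?_
    have : c * ‖g' - g‖ ≤ c * (δ / (8 * c)) := by
      apply mul_le_mul_of_nonneg_left hg'.le hc.le
    refine this.trans (le_of_eq ?_)
    field_simp
  refine ⟨δ / 2, by positivity, N, ?_⟩
  intro i hi j hj x hx y hy
  obtain ⟨Mi, hMi⟩ := hTbdd g
  obtain ⟨Mi', hMi'⟩ := hTbdd g'
  obtain ⟨mi, hmi⟩ := hm i
  obtain ⟨mj, hmj⟩ := hm j
  obtain ⟨ri, hri⟩ := infR_exists (hp i) hmi hMi
  obtain ⟨ri', hri'⟩ := infR_exists (hp i) hmi hMi'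
  obtain ⟨rj, hrj⟩ := infR_exists (hp j) hmj hMi
  obtain ⟨rj', hrj'⟩ := infR_exists (hp j) hmj hMi'
  have hx2 : x ∈ eMin (fun z => H i z + (T g z : EReal)) δ := by
    refine eMin_mono' (show δ / 2 + 2 * (δ / 8) ≤ δ by linarith) ?_
    exact eMin_pert hmi hri hri' hη hx
  have hy2 : y ∈ eMin (fun z => H j z + (T g z : EReal)) δ := by
    refine eMin_mono' (show δ / 2 + 2 * (δ / 8) ≤ δ by linarith) ?_
    exact eMin_pert hmj hrj hrj' hη hy
  exact hprop i hi j hj x hx2 y hy2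

end Open

section DenseSingle

set_option linter.unusedSectionVars false
variable {X : Type*} [MetricSpace X] {P : Type*} [NormedAddCommGroup P] [NormedSpace ℝ P]

lemma dense_single [Nonempty X] (T : P →ₗ[ℝ] X → ℝ)
    (hTbdd : ∀ g : P, ∃ M : ℝ, ∀ x, |T g x| ≤ M)
    (hpert : ∀ ε : ℝ, 0 < ε → ∃ δ : ℝ, 0 < δ ∧ ∀ x : X, ∃ g : P, ‖g‖ ≤ ε ∧
      x ∈ eMinR (T g) δ ∧ EMetric.diam (eMinR (T g) (3 * δ)) ≤ ENNReal.ofReal ε)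
    {h : X → EReal} (hp : ∃ x, h x ≠ ⊤) {m : ℝ} (hm : ∀ x, (m : EReal) ≤ h x)
    (g₀ : P) {ε : ℝ} (hε : 0 < ε) :
    ∃ g₁ : P, ‖g₁‖ ≤ ε ∧ ∃ δ : ℝ, 0 < δ ∧
      ∀ x ∈ eMin (fun z => h z + (T (g₀ + g₁) z : EReal)) δ,
      ∀ y ∈ eMin (fun z => h z + (T (g₀ + g₁) z : EReal)) δ, dist x y ≤ ε := by
  obtain ⟨δ, hδ, hpx⟩ := hpert ε hε
  obtain ⟨M₀, hM₀⟩ := hTbdd g₀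
  obtain ⟨r₀, hr₀⟩ := infR_exists hp hm hM₀
  obtain ⟨xb, vb, hvb, hvb2⟩ := exists_approx hm hr₀ hδ
  obtain ⟨g₁, hg₁n, hg₁x, hg₁d⟩ := hpx xb
  refine ⟨g₁, hg₁n, δ, hδ, ?_⟩
  have hTg : ∀ z, T (g₀ + g₁) z = T g₀ z + T g₁ z := fun z => by rw [map_add]; rfl
  obtain ⟨M, hM⟩ := hTbdd (g₀ + g₁)
  obtain ⟨r, hr⟩ := infR_exists hp hm hM
  have hs₁ : ∀ z : X, (⨅ y, T g₁ y) ≤ T g₁ z := by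
    intro z
    obtain ⟨M₁, hM₁⟩ := hTbdd g₁
    exact ciInf_le ⟨-M₁, fun w ⟨z', hz'⟩ => hz' ▸ neg_le_of_abs_le (hM₁ z')⟩ z
  have hkey : ∀ x ∈ eMin (fun z => h z + (T (g₀ + g₁) z : EReal)) δ,
      x ∈ eMinR (T g₁) (3 * δ) := by
    intro x hx
    obtain ⟨v, hv, hle⟩ := point_real hm hr hx
    have h1 : r ≤ vb + T (g₀ + g₁) xb := point_lower hr hvb
    have h2 : r₀ ≤ v + T g₀ x := point_lower hr₀ hv
    have h3 : T g₁ xb ≤ (⨅ y, T g₁ y) + δ := hg₁x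
    show T g₁ x ≤ (⨅ y, T g₁ y) + 3 * δ
    have e1 := hTg x
    have e2 := hTg xb
    linarith
  intro x hx y hy
  exact dist_le_of_eMinR hε.le hg₁d (hkey x hx) (hkey y hy)

end DenseSingle

section Env

set_option linter.unusedSectionVars false
variable {X : Type*} [MetricSpace X] {flim : X → EReal} {mlim : ℝ}

lemma env_extract (hbddlim : ∀ x, (mlim : EReal) ≤ flim x) {x : X} {ε' w : ℝ} (hε' : 0 < ε')
    (hC2 : infEnv flim ε' x - (ε' : EReal) ≤ (w : EReal)) :
    ∃ y : X, dist y x ≤ ε' ∧ ∃ u : ℝ, flim y = (u : EReal) ∧ u ≤ w + 2 * ε' := by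
  have henv : infEnv flim ε' x ≤ ((w + ε' : ℝ) : EReal) := by
    rw [EReal.coe_add]
    exact (EReal.sub_le_iff_le_add (.inl (EReal.coe_ne_bot _))
      (.inl (EReal.coe_ne_top _))).1 hC2
  have hlt : infEnv flim ε' x < ((w + 2 * ε' : ℝ) : EReal) :=
    lt_of_le_of_lt henv (EReal.coe_lt_coe_iff.2 (by linarith))
  have hex : ∃ y ∈ {y : X | dist y x ≤ ε'}, flim y < ((w + 2 * ε' : ℝ) : EReal) := by
    by_contra hcon
    push_neg at hcon
    exact absurd (le_iInf₂ hcon : ((w + 2 * ε' : ℝ) : EReal) ≤ infEnv flim ε' x)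
      hlt.not_ge
  obtain ⟨y, hy, hylt⟩ := hex
  have hnt : flim y ≠ ⊤ := hylt.ne_top
  have hnb : flim y ≠ ⊥ := fun e => absurd (e ▸ hbddlim y) (EReal.bot_lt_coe _).not_ge
  have hu : flim y = ((flim y).toReal : EReal) := (EReal.coe_toReal hnt hnb).symm
  rw [hu] at hylt
  exact ⟨y, hy, (flim y).toReal, hu, (EReal.coe_lt_coe_iff.1 hylt).le⟩

end Env

section InfTendsto

set_option linter.unusedSectionVars false
variable {X : Type*} [MetricSpace X]

lemma inf_tendsto [Nonempty X] {f : ℕ → X → EReal} {flim : X → EReal}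
    (hbdd : ∀ n, ∃ m : ℝ, ∀ x, (m : EReal) ≤ f n x)
    {mlim : ℝ} (hbddlim : ∀ x, (mlim : EReal) ≤ flim x)
    (h1 : ∀ x, Tendsto (fun n => f n x) atTop (𝓝 (flim x)))
    (h2 : ∀ ε : ℝ, 0 < ε → ∃ N : ℕ, ∀ n ≥ N, ∀ x, infEnv flim ε x - (ε : EReal) ≤ f n x)
    {ψ : X → ℝ} (hψu : UniformContinuous ψ)
    {rn : ℕ → ℝ} {r : ℝ}
    (hrn : ∀ n, (⨅ x, (f n x + (ψ x : EReal))) = ((rn n : ℝ) : EReal))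
    (hr : (⨅ x, (flim x + (ψ x : EReal))) = (r : EReal)) :
    Tendsto rn atTop (𝓝 r) := by
  rw [Metric.tendsto_atTop]
  intro ε hε
  -- upper bound part
  obtain ⟨xb, vb, hvb, hvb2⟩ := exists_approx hbddlim hr (show 0 < ε / 4 by linarith)
  have hN₁ : ∀ᶠ n in atTop, f n xb < ((vb + ε / 4 : ℝ) : EReal) := by
    have h5 := h1 xb
    rw [hvb] at h5
    exact h5 (Iio_mem_nhds (EReal.coe_lt_coe_iff.2 (by linarith)))
  obtain ⟨N₁, hN₁'⟩ := eventually_atTop.1 hN₁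
  -- lower bound part
  obtain ⟨δu, hδu, hδu'⟩ := Metric.uniformContinuous_iff.1 hψu (ε / 4) (by linarith)
  set ε' := min (δu / 2) (ε / 8) with hε'def
  have hε' : 0 < ε' := lt_min (by linarith) (by linarith)
  have hω : ∀ a b : X, dist a b ≤ ε' → |ψ a - ψ b| ≤ ε / 4 := by
    intro a b hab
    have : dist a b < δu := lt_of_le_of_lt hab (lt_of_le_of_lt (min_le_left _ _) (by linarith))
    have := hδu' this
    rw [Real.dist_eq] at this
    exact this.le
  obtain ⟨N₂, hN₂⟩ := h2 ε' hε'
  refine ⟨max N₁ N₂, fun n hn => ?_⟩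
  have hn₁ : N₁ ≤ n := le_trans (le_max_left _ _) hn
  have hn₂ : N₂ ≤ n := le_trans (le_max_right _ _) hn
  -- upper: rn n ≤ r + ε/2
  have hup : rn n ≤ r + ε / 2 := by
    have hlt := hN₁' n hn₁
    have hnt : f n xb ≠ ⊤ := hlt.ne_top
    obtain ⟨mn, hmn⟩ := hbdd n
    have hnb : f n xb ≠ ⊥ := fun e => absurd (e ▸ hmn xb) (EReal.bot_lt_coe _).not_ge
    have hw : f n xb = ((f n xb).toReal : EReal) := (EReal.coe_toReal hnt hnb).symm
    rw [hw] at hlt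
    have hwlt : (f n xb).toReal < vb + ε / 4 := EReal.coe_lt_coe_iff.1 hlt
    have := point_lower (hrn n) hw
    linarith
  -- lower: r - 3ε/4 ≤ rn n
  have hlow : r - 3 * (ε / 4) ≤ rn n := by
    have hpt : ∀ x : X, ((r - 3 * (ε / 4) : ℝ) : EReal) ≤ f n x + (ψ x : EReal) := by
      intro x
      rcases eq_or_ne (f n x) ⊤ with htop | hnt
      · rw [htop, EReal.top_add_coe]; exact le_top
      obtain ⟨mn, hmn⟩ := hbdd n
      have hnb : f n x ≠ ⊥ := fun e => absurd (e ▸ hmn x) (EReal.bot_lt_coe _).not_ge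
      have hw : f n x = ((f n x).toReal : EReal) := (EReal.coe_toReal hnt hnb).symm
      have hC2 : infEnv flim ε' x - (ε' : EReal) ≤ ((f n x).toReal : EReal) :=
        hw ▸ hN₂ n hn₂ x
      obtain ⟨y, hyx, u, hu, hule⟩ := env_extract hbddlim hε' hC2
      have h6 : r ≤ u + ψ y := point_lower hr hu
      have h7 : |ψ y - ψ x| ≤ ε / 4 := hω y x hyx
      rw [abs_le] at h7
      rw [hw, ← EReal.coe_add, EReal.coe_le_coe_iff]
      have hε'le : ε' ≤ ε / 8 := min_le_right _ _
      linarith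
    have := le_iInf hpt
    rw [hrn n, EReal.coe_le_coe_iff] at this
    exact this
  rw [Real.dist_eq]
  rw [abs_lt]
  constructor <;> linarith

end InfTendsto

section DenseSimul

set_option linter.unusedSectionVars false
variable {X : Type*} [MetricSpace X] {P : Type*} [NormedAddCommGroup P] [NormedSpace ℝ P]

lemma dense_simul [Nonempty X] (T : P →ₗ[ℝ] X → ℝ)
    (hTuc : ∀ g : P, UniformContinuous (T g))
    (hTbdd : ∀ g : P, ∃ M : ℝ, ∀ x, |T g x| ≤ M)
    (hpert : ∀ ε : ℝ, 0 < ε → ∃ δ : ℝ, 0 < δ ∧ ∀ x : X, ∃ g : P, ‖g‖ ≤ ε ∧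
      x ∈ eMinR (T g) δ ∧ EMetric.diam (eMinR (T g) (3 * δ)) ≤ ENNReal.ofReal ε)
    {f : ℕ → X → EReal} {flim : X → EReal}
    (hproper : ∀ n, ∃ x, f n x ≠ ⊤) (hproperlim : ∃ x, flim x ≠ ⊤)
    (hbdd : ∀ n, ∃ m : ℝ, ∀ x, (m : EReal) ≤ f n x)
    {mlim : ℝ} (hbddlim : ∀ x, (mlim : EReal) ≤ flim x)
    (h1 : ∀ x, Tendsto (fun n => f n x) atTop (𝓝 (flim x)))
    (h2 : ∀ ε : ℝ, 0 < ε → ∃ N : ℕ, ∀ n ≥ N, ∀ x, infEnv flim ε x - (ε : EReal) ≤ f n x)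
    (g₀ : P) {ε : ℝ} (hε : 0 < ε) :
    ∃ g₁ : P, ‖g₁‖ ≤ ε ∧ ∃ δ' : ℝ, 0 < δ' ∧ ∃ N : ℕ, ∃ S : Set X,
      (∀ x ∈ S, ∀ y ∈ S, dist x y ≤ 2 * ε) ∧
      eMin (fun z => flim z + (T (g₀ + g₁) z : EReal)) δ' ⊆ S ∧
      ∀ n ≥ N, eMin (fun z => f n z + (T (g₀ + g₁) z : EReal)) δ' ⊆ S := by
  obtain ⟨δ, hδ, hpx⟩ := hpert ε hε
  obtain ⟨M₀, hM₀⟩ := hTbdd g₀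
  obtain ⟨r₀, hr₀⟩ := infR_exists hproperlim hbddlim hM₀
  obtain ⟨xb, vb, hvb, hvb2⟩ := exists_approx hbddlim hr₀ (show 0 < δ / 8 by linarith)
  obtain ⟨g₁, hg₁n, hg₁x, hg₁d⟩ := hpx xb
  refine ⟨g₁, hg₁n, ?_⟩
  set g := g₀ + g₁ with hgdef
  have hTg : ∀ z, T g z = T g₀ z + T g₁ z := fun z => by rw [hgdef, map_add]; rfl
  obtain ⟨M, hM⟩ := hTbdd g
  obtain ⟨r, hr⟩ := infR_exists hproperlim hbddlim hM
  have hs₁ : ∀ z : X, (⨅ y, T g₁ y) ≤ T g₁ z := by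
    intro z
    obtain ⟨M₁, hM₁⟩ := hTbdd g₁
    exact ciInf_le ⟨-M₁, fun w ⟨z', hz'⟩ => hz' ▸ neg_le_of_abs_le (hM₁ z')⟩ z
  -- C1 at xb
  have hN₁ : ∀ᶠ n in atTop, f n xb < ((vb + δ / 8 : ℝ) : EReal) := by
    have h5 := h1 xb
    rw [hvb] at h5
    exact h5 (Iio_mem_nhds (EReal.coe_lt_coe_iff.2 (by linarith)))
  obtain ⟨N₁, hN₁'⟩ := eventually_atTop.1 hN₁
  -- uniform continuity of T g
  obtain ⟨δu, hδu, hδu'⟩ := Metric.uniformContinuous_iff.1 (hTuc g) (δ / 8) (by linarith)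
  set ε' := min (δu / 2) (min (δ / 8) (ε / 2)) with hε'def
  have hε'pos : 0 < ε' := lt_min (by linarith) (lt_min (by linarith) (by linarith))
  have hε'δ : ε' ≤ δ / 8 := (min_le_right _ _).trans (min_le_left _ _)
  have hε'ε : ε' ≤ ε / 2 := (min_le_right _ _).trans (min_le_right _ _)
  have hω : ∀ a b : X, dist a b ≤ ε' → |T g a - T g b| ≤ δ / 8 := by
    intro a b hab
    have h6 : dist a b < δu := lt_of_le_of_lt hab
      (lt_of_le_of_lt (min_le_left _ _) (by linarith))
    have h7 := hδu' h6
    rw [Real.dist_eq] at h7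
    exact h7.le
  obtain ⟨N₂, hN₂⟩ := h2 ε' hε'pos
  refine ⟨δ / 8, by linarith, max N₁ N₂,
    {x | ∃ y ∈ eMinR (T g₁) (3 * δ), dist x y ≤ ε'}, ?_, ?_, ?_⟩
  · -- diameter of S
    rintro x ⟨y, hy, hxy⟩ x' ⟨y', hy', hxy'⟩
    have h8 : dist y y' ≤ ε := dist_le_of_eMinR hε.le hg₁d hy hy'
    calc dist x x' ≤ dist x y + dist y x' := dist_triangle _ _ _
      _ ≤ dist x y + (dist y y' + dist y' x') := by
          have := dist_triangle y y' x'
          linarith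
      _ ≤ ε' + (ε + ε') := by
          rw [dist_comm y' x'] at *
          linarith
      _ ≤ 2 * ε := by linarith
  · -- eMin flim
    intro x hx
    obtain ⟨v, hv, hle⟩ := point_real hbddlim hr hx
    have hkey : T g₁ x ≤ (⨅ y, T g₁ y) + 3 * δ := by
      have hA : r ≤ vb + T g xb := point_lower hr hvb
      have hB : r₀ ≤ v + T g₀ x := point_lower hr₀ hv
      have e1 := hTg x
      have e2 := hTg xb
      have h3 : T g₁ xb ≤ (⨅ y, T g₁ y) + δ := hg₁x
      linarith
    exact ⟨x, hkey, by rw [dist_self]; exact hε'pos.le⟩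
  · -- eMin (f n), n ≥ N
    intro n hn x hx
    have hn₁ : N₁ ≤ n := le_trans (le_max_left _ _) hn
    have hn₂ : N₂ ≤ n := le_trans (le_max_right _ _) hn
    obtain ⟨rn, hrn⟩ := infR_exists (hproper n) (fun z => (hbdd n).choose_spec z) hM
    obtain ⟨w, hw, hwle⟩ := point_real (fun z => (hbdd n).choose_spec z) hrn hx
    -- value at xb
    have hlt := hN₁' n hn₁
    have hnt : f n xb ≠ ⊤ := hlt.ne_top
    have hnb : f n xb ≠ ⊥ :=
      fun e => absurd (e ▸ (hbdd n).choose_spec xb) (EReal.bot_lt_coe _).not_ge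
    have hwb : f n xb = ((f n xb).toReal : EReal) := (EReal.coe_toReal hnt hnb).symm
    have hwblt : (f n xb).toReal < vb + δ / 8 := by
      rw [hwb] at hlt
      exact EReal.coe_lt_coe_iff.1 hlt
    have hrnle : rn ≤ (f n xb).toReal + T g xb := point_lower hrn hwb
    -- C2 extraction
    have hC2 : infEnv flim ε' x - (ε' : EReal) ≤ ((w : ℝ) : EReal) := hw ▸ hN₂ n hn₂ x
    obtain ⟨y, hyx, u, hu, hule⟩ := env_extract hbddlim hε'pos hC2
    have h7 : |T g y - T g x| ≤ δ / 8 := hω y x hyx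
    rw [abs_le] at h7
    have hB : r₀ ≤ u + T g₀ y := point_lower hr₀ hu
    have hkey : T g₁ y ≤ (⨅ z, T g₁ z) + 3 * δ := by
      have e1 := hTg x
      have e2 := hTg xb
      have e3 := hTg y
      have h3 : T g₁ xb ≤ (⨅ z, T g₁ z) + δ := hg₁x
      linarith
    exact ⟨y, hkey, by rw [dist_comm]; exact hyx⟩

end DenseSimul


/-- Theorem 1.1 (main theorem): for a convergent (in the sense of (C1), (C2))
sequence of proper lower semicontinuous bounded below functions on a complete
metric space and a perturbation space `P` on `X`, there is a dense `G_δ` subset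
`U` of `P` such that for every `g ∈ U` each `f n + g` (and `f_∞ + g`) attains a
strong minimum at some `x n` (resp. `xlim`), and `x n → xlim`,
`f n (x n) → f_∞ (xlim)`. -/
theorem simultaneous_perturbed_minimization {X : Type*} [MetricSpace X] [CompleteSpace X]
    (P : Type*) [NormedAddCommGroup P] [NormedSpace ℝ P] [CompleteSpace P]
    (T : P →ₗ[ℝ] X → ℝ) (hTinj : Function.Injective T)
    (hTuc : ∀ g : P, UniformContinuous (T g))
    (hTbdd : ∀ g : P, ∃ M : ℝ, ∀ x, |T g x| ≤ M)
    (c : ℝ) (hc : 0 < c) (hdom : ∀ (g : P) (x : X), |T g x| ≤ c * ‖g‖)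
    (hpert : ∀ ε : ℝ, 0 < ε → ∃ δ : ℝ, 0 < δ ∧ ∀ x : X, ∃ g : P, ‖g‖ ≤ ε ∧
      x ∈ eMinR (T g) δ ∧ EMetric.diam (eMinR (T g) (3 * δ)) ≤ ENNReal.ofReal ε)
    (f : ℕ → X → EReal) (flim : X → EReal)
    (hproper : ∀ n, ProperFn (f n)) (hproperlim : ProperFn flim)
    (hlsc : ∀ n, LowerSemicontinuous (f n)) (hlsclim : LowerSemicontinuous flim)
    (hbdd : ∀ n, BddBelowFn (f n)) (hbddlim : BddBelowFn flim)
    (h1 : CondC1 f flim) (h2 : CondC2 f flim) :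
    ∃ U : Set P, Dense U ∧ IsGδ U ∧ ∀ g ∈ U,
      ∃ (x : ℕ → X) (xlim : X),
        (∀ n, StrongMinAt (fun y => f n y + (T g y : EReal)) (x n)) ∧
        StrongMinAt (fun y => flim y + (T g y : EReal)) xlim ∧
        Tendsto x atTop (𝓝 xlim) ∧
        Tendsto (fun n => f n (x n)) atTop (𝓝 (flim xlim)) := by
  classical
  -- basic setup
  obtain ⟨x₀, hx₀⟩ := hproperlim
  haveI : Nonempty X := ⟨x₀⟩
  obtain ⟨mlim, hml⟩ := hbddlim
  set fopt : Option ℕ → X → EReal := fun o x => o.elim (flim x) (fun n => f n x) with hfopt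
  have hpropero : ∀ o, ∃ x, fopt o x ≠ ⊤ := by
    rintro (_ | n)
    · exact ⟨x₀, hx₀⟩
    · exact hproper n
  have hmo : ∀ o, ∃ m : ℝ, ∀ x, (m : EReal) ≤ fopt o x := by
    rintro (_ | n)
    · exact ⟨mlim, hml⟩
    · exact hbdd n
  have hlsco : ∀ o, LowerSemicontinuous (fopt o) := by
    rintro (_ | n)
    · exact hlsclim
    · exact hlsc n
  -- the good sets
  set Jw : ℕ → Set (Option ℕ) :=
    fun N => {o | o = none ∨ ∃ n : ℕ, N ≤ n ∧ o = some n} with hJw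
  set GoodSet : (ℕ → Set (Option ℕ)) → ℝ → Set P := fun J b =>
    {g | ∃ δ : ℝ, 0 < δ ∧ ∃ N : ℕ, ∀ i ∈ J N, ∀ j ∈ J N,
      ∀ x ∈ eMin (fun z => fopt i z + (T g z : EReal)) δ,
      ∀ y ∈ eMin (fun z => fopt j z + (T g z : EReal)) δ, dist x y ≤ b} with hGoodSet
  set S : (Option ℕ × ℕ) ⊕ ℕ → Set P := Sum.elim
    (fun p => GoodSet (fun _ => {p.1}) (1 / ((p.2 : ℝ) + 1)))
    (fun k => GoodSet Jw (1 / ((k : ℝ) + 1))) with hS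
  have hopen : ∀ i, IsOpen (S i) := by
    rintro (⟨o, k⟩ | k)
    · exact goodSet_open T hc hdom hTbdd fopt hpropero hmo _ _
    · exact goodSet_open T hc hdom hTbdd fopt hpropero hmo _ _
  have hdense : ∀ i, Dense (S i) := by
    rintro (⟨o, k⟩ | k) <;> rw [Metric.dense_iff] <;> intro g₀ ρ hρ
    · -- single-function good sets
      set ε := min (ρ / 2) (1 / ((k : ℝ) + 1)) with hεdef
      have hε : 0 < ε := lt_min (by linarith) (by positivity)
      obtain ⟨g₁, hg₁n, δ, hδ, hprop⟩ :=
        dense_single T hTbdd hpert (hpropero o) ((hmo o).choose_spec) g₀ hε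
      refine ⟨g₀ + g₁, ?_, ?_⟩
      · rw [mem_ball, dist_eq_norm, add_sub_cancel_left]
        exact lt_of_le_of_lt hg₁n (lt_of_le_of_lt (min_le_left _ _) (by linarith))
      · refine ⟨δ, hδ, 0, ?_⟩
        rintro i rfl j hj x hx y hy
        rw [mem_singleton_iff] at hj
        subst hj
        exact le_trans (hprop x hx y hy) (min_le_right _ _)
    · -- simultaneous good sets
      set ε := min (ρ / 2) (1 / (2 * ((k : ℝ) + 1))) with hεdef
      have hε : 0 < ε := lt_min (by linarith) (by positivity)
      obtain ⟨g₁, hg₁n, δ', hδ', N, S', hS'd, hS'lim, hS'n⟩ :=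
        dense_simul T hTuc hTbdd hpert hproper ⟨x₀, hx₀⟩ hbdd hml h1 h2 g₀ hε
      refine ⟨g₀ + g₁, ?_, ?_⟩
      · rw [mem_ball, dist_eq_norm, add_sub_cancel_left]
        exact lt_of_le_of_lt hg₁n (lt_of_le_of_lt (min_le_left _ _) (by linarith))
      · refine ⟨δ', hδ', N, ?_⟩
        have hsub : ∀ i ∈ Jw N,
            eMin (fun z => fopt i z + (T (g₀ + g₁) z : EReal)) δ' ⊆ S' := by
          rintro i (rfl | ⟨n, hn, rfl⟩)
          · exact hS'lim
          · exact hS'n n hn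
        intro i hi j hj x hx y hy
        have h8 := hS'd x (hsub i hi hx) y (hsub j hj hy)
        refine h8.trans ?_
        have h2k : ε ≤ 1 / (2 * ((k : ℝ) + 1)) := min_le_right _ _
        have he : 2 * (1 / (2 * ((k : ℝ) + 1))) = 1 / ((k : ℝ) + 1) := by
          field_simp
        linarith
  refine ⟨⋂ i, S i, dense_iInter_of_isOpen hopen hdense,
    IsGδ.iInter_of_isOpen hopen, ?_⟩
  -- main part
  intro g hg
  rw [mem_iInter] at hg
  obtain ⟨M, hM⟩ := hTbdd g
  have hro : ∀ o, ∃ ro : ℝ, (⨅ x, (fopt o x + (T g x : EReal))) = (ro : EReal) :=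
    fun o => infR_exists (hpropero o) ((hmo o).choose_spec) hM
  choose ro hro using hro
  have hsmall : ∀ o, ∀ k : ℕ, ∃ δ : ℝ, 0 < δ ∧
      ∀ x ∈ eMin (fun z => fopt o z + (T g z : EReal)) δ,
      ∀ y ∈ eMin (fun z => fopt o z + (T g z : EReal)) δ, dist x y ≤ 1 / (k + 1) := by
    intro o k
    obtain ⟨δ, hδ, N, hprop⟩ := hg (Sum.inl (o, k))
    exact ⟨δ, hδ, fun x hx y hy => hprop o rfl o rfl x hx y hy⟩
  have hsm : ∀ o, ∃ xbar : X, (fopt o xbar + (T g xbar : EReal)) = ((ro o : ℝ) : EReal) ∧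
      StrongMinAt (fun z => fopt o z + (T g z : EReal)) xbar := by
    intro o
    exact strong_min_of_small (hlsco o) (hTuc g).continuous ((hmo o).choose_spec)
      (hro o) (hsmall o)
  choose xbar hxval hxstrong using hsm
  refine ⟨fun n => xbar (some n), xbar none, fun n => hxstrong (some n), hxstrong none, ?_, ?_⟩
  · -- xbar (some n) → xbar none
    rw [Metric.tendsto_atTop]
    intro ε hε
    obtain ⟨k, hk⟩ := exists_nat_one_div_lt hε
    obtain ⟨δ, hδ, N, hprop⟩ := hg (Sum.inr k)
    have hmem : ∀ o, xbar o ∈ eMin (fun z => fopt o z + (T g z : EReal)) δ := by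
      intro o
      show fopt o (xbar o) + (T g (xbar o) : EReal) ≤ _
      rw [hxval o, hro o]
      exact le_add_of_nonneg_right (by exact_mod_cast hδ.le)
    refine ⟨N, fun n hn => ?_⟩
    refine lt_of_le_of_lt (hprop (some n) (.inr ⟨n, hn, rfl⟩) none (.inl rfl)
      (xbar (some n)) (hmem (some n)) (xbar none) (hmem none)) ?_
    exact_mod_cast hk
  · -- value convergence
    have hrotend : Tendsto (fun n => ro (some n)) atTop (𝓝 (ro none)) :=
      inf_tendsto hbdd hml h1 h2 (hTuc g) (fun n => hro (some n)) (hro none)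
    have hval : ∀ o, fopt o (xbar o) = ((ro o - T g (xbar o) : ℝ) : EReal) := by
      intro o
      calc fopt o (xbar o)
          = (fopt o (xbar o) + (T g (xbar o) : EReal)) - (T g (xbar o) : ℝ) :=
            (EReal.add_sub_cancel_right).symm
        _ = ((ro o : ℝ) : EReal) - (T g (xbar o) : ℝ) := by rw [hxval o]
        _ = ((ro o - T g (xbar o) : ℝ) : EReal) := by rw [EReal.coe_sub]
    have hgoal : (fun n => f n (xbar (some n))) =
        fun n => ((ro (some n) - T g (xbar (some n)) : ℝ) : EReal) :=
      funext fun n => hval (some n)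
    rw [hgoal, show flim (xbar none) = ((ro none - T g (xbar none) : ℝ) : EReal) from hval none]
    refine EReal.tendsto_coe.2 (hrotend.sub ?_)
    exact ((hTuc g).continuous.tendsto _).comp (by
      rw [Metric.tendsto_atTop]
      intro ε hε
      obtain ⟨k, hk⟩ := exists_nat_one_div_lt hε
      obtain ⟨δ, hδ, N, hprop⟩ := hg (Sum.inr k)
      have hmem : ∀ o, xbar o ∈ eMin (fun z => fopt o z + (T g z : EReal)) δ := by
        intro o
        show fopt o (xbar o) + (T g (xbar o) : EReal) ≤ _
        rw [hxval o, hro o]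
        exact le_add_of_nonneg_right (by exact_mod_cast hδ.le)
      refine ⟨N, fun n hn => ?_⟩
      refine lt_of_le_of_lt (hprop (some n) (.inr ⟨n, hn, rfl⟩) none (.inl rfl)
        (xbar (some n)) (hmem (some n)) (xbar none) (hmem none)) ?_
      exact_mod_cast hk)
end
end

section
/- Let (E, ‖·‖) be a real Banach space whose norm is Fréchet differentiable at every point other than the origin, and let f_n : E → ℝ ∪ {+∞} for n ∈ ℕ ∪ {∞} be proper, lower semicontinuous and bounded below functions satisfying conditions (C1) and (C2). Then for every ε > 0 there exists a Fréchet differentiable function g : E → ℝ with |g(x)| < ε and ‖g'(x)‖ < ε for all x ∈ E, such that each f_n + g (n ∈ ℕ ∪ {∞}) attains a unique (strong) minimum at a point x_n ∈ E, and lim_{n→∞} x_n = x_∞ and lim_{n→∞} f_n(x_n) = f_∞(x_∞). -/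
open Filter Topology Metric Set

noncomputable section

namespace SSP
set_option linter.unusedSectionVars false
set_option maxHeartbeats 1000000


/-! ### EReal helpers -/

lemma ER_lt (a : EReal) (r s : ℝ) : a + (r : EReal) < (s : EReal) ↔ a < ((s - r : ℝ) : EReal) := by
  induction a using EReal.rec with
  | bot => exact iff_of_true (by rw [EReal.bot_add]; exact EReal.bot_lt_coe s) (EReal.bot_lt_coe _)
  | coe t => rw [← EReal.coe_add, EReal.coe_lt_coe_iff, EReal.coe_lt_coe_iff]; constructor <;> intro h <;> linarith
  | top => simp [EReal.top_add_coe]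

lemma ER_le (a : EReal) (r s : ℝ) : ((s : EReal) ≤ a + (r : EReal)) ↔ ((s - r : ℝ) : EReal) ≤ a := by
  rw [← not_lt, ← not_lt, ER_lt]

lemma ER_eq {a : EReal} {r s : ℝ} (h : a + (r : EReal) = (s : EReal)) : a = ((s - r : ℝ) : EReal) := by
  induction a using EReal.rec with
  | bot => simp [EReal.bot_add] at h
  | coe t =>
      rw [← EReal.coe_add, EReal.coe_eq_coe_iff] at h
      rw [EReal.coe_eq_coe_iff]; linarith
  | top => simp [EReal.top_add_coe] at h

lemma ER_add_le_add {a b : EReal} (h : a ≤ b) (r : ℝ) : a + (r : EReal) ≤ b + (r : EReal) :=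
  add_le_add_left h _

/-! ### Bound on derivative of smoothTransition -/

lemma exists_M : ∃ M : ℝ, 0 ≤ M ∧ ∀ u : ℝ, |deriv Real.smoothTransition u| ≤ M := by
  have hc : Continuous (deriv Real.smoothTransition) := by
    have h : ContDiff ℝ 1 Real.smoothTransition := Real.smoothTransition.contDiff
    exact h.continuous_deriv le_rfl
  obtain ⟨C, hC⟩ := (isCompact_Icc (a := (-1:ℝ)) (b := 2)).exists_bound_of_continuousOn
    (hc.continuousOn (s := Icc (-1) 2))
  refine ⟨max C 0, le_max_right _ _, fun u => ?_⟩
  by_cases hu : u ∈ Icc (-1:ℝ) 2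
  · exact le_trans (by simpa [Real.norm_eq_abs] using hC u hu) (le_max_left _ _)
  · have : deriv Real.smoothTransition u = 0 := by
      rcases not_and_or.1 hu with h | h
      · push_neg at h
        have hev : Real.smoothTransition =ᶠ[𝓝 u] fun _ => 0 := by
          have : Iio (0:ℝ) ∈ 𝓝 u := Iio_mem_nhds (by linarith)
          exact Filter.eventually_of_mem this fun v hv =>
            Real.smoothTransition.zero_of_nonpos (le_of_lt hv)
        rw [hev.deriv_eq, deriv_const]
      · push_neg at h
        have hev : Real.smoothTransition =ᶠ[𝓝 u] fun _ => 1 := by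
          have : Ioi (1:ℝ) ∈ 𝓝 u := Ioi_mem_nhds (by linarith)
          exact Filter.eventually_of_mem this fun v hv =>
            Real.smoothTransition.one_of_one_le (le_of_lt hv)
        rw [hev.deriv_eq, deriv_const]
    simp [this, le_max_right]



set_option linter.unusedSectionVars false

variable {E : Type*} [NormedAddCommGroup E] [NormedSpace ℝ E]

/-- basic bump function -/
def bfun (x0 : E) (ρ c : ℝ) (x : E) : ℝ := c * Real.smoothTransition (2 - 2/ρ * ‖x - x0‖)

lemma bfun_nonneg (x0 : E) {ρ c : ℝ} (hc : 0 ≤ c) (x : E) : 0 ≤ bfun x0 ρ c x :=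
  mul_nonneg hc (Real.smoothTransition.nonneg _)

lemma bfun_le (x0 : E) {ρ c : ℝ} (hc : 0 ≤ c) (x : E) : bfun x0 ρ c x ≤ c := by
  have := Real.smoothTransition.le_one (2 - 2/ρ * ‖x - x0‖)
  calc bfun x0 ρ c x ≤ c * 1 := mul_le_mul_of_nonneg_left this hc
  _ = c := mul_one c

lemma bfun_center (x0 : E) (ρ c : ℝ) : bfun x0 ρ c x0 = c := by
  have h : (2:ℝ) - 2/ρ * ‖x0 - x0‖ = 2 := by simp
  rw [bfun, h, Real.smoothTransition.one_of_one_le one_le_two, mul_one]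

lemma bfun_zero (x0 : E) {ρ c : ℝ} (hρ : 0 < ρ) {x : E} (hx : ρ ≤ ‖x - x0‖) :
    bfun x0 ρ c x = 0 := by
  have h1 : 2 - 2/ρ * ‖x - x0‖ ≤ 0 := by
    have : 2 = 2/ρ * ρ := by field_simp
    nlinarith [div_pos (by norm_num : (0:ℝ) < 2) hρ]
  simp [bfun, Real.smoothTransition.zero_of_nonpos h1]

lemma bfun_diff {M : ℝ} (hM0 : 0 ≤ M) (hM : ∀ u : ℝ, |deriv Real.smoothTransition u| ≤ M)
    (hnorm : ∀ x : E, x ≠ 0 → DifferentiableAt ℝ (fun y : E => ‖y‖) x)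
    (x0 : E) {ρ c : ℝ} (hρ : 0 < ρ) (hc : 0 ≤ c) (x : E) :
    DifferentiableAt ℝ (bfun x0 ρ c) x ∧ ‖fderiv ℝ (bfun x0 ρ c) x‖ ≤ c * (2 * M) / ρ := by
  by_cases hx : ‖x - x0‖ < ρ/2
  · have hU : IsOpen {y : E | ‖y - x0‖ < ρ/2} := by
      have : Continuous fun y : E => ‖y - x0‖ := (continuous_id.sub continuous_const).norm
      exact isOpen_lt this continuous_const
    have hev : bfun x0 ρ c =ᶠ[𝓝 x] fun _ => c := by
      refine Filter.eventually_of_mem (hU.mem_nhds hx) fun y hy => ?_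
      have hy' : (2:ℝ)/ρ * ‖y - x0‖ ≤ 1 := by
        have h2 : (0:ℝ) < 2/ρ := by positivity
        have := hy.out
        calc 2/ρ * ‖y - x0‖ ≤ 2/ρ * (ρ/2) := by nlinarith
        _ = 1 := by field_simp
      simp [bfun, Real.smoothTransition.one_of_one_le (by linarith : (1:ℝ) ≤ 2 - 2/ρ * ‖y - x0‖)]
    have hF : HasFDerivAt (bfun x0 ρ c) (0 : E →L[ℝ] ℝ) x :=
      (hasFDerivAt_const c x).congr_of_eventuallyEq hev
    refine ⟨hF.differentiableAt, ?_⟩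
    rw [hF.fderiv]
    simp only [norm_zero]
    positivity
  · have hx0 : x ≠ x0 := by
      intro h
      rw [h] at hx
      simp only [sub_self, norm_zero] at hx
      exact hx (by positivity)
    have hd := hnorm (x - x0) (sub_ne_zero.2 hx0)
    have h1 : HasFDerivAt (fun y : E => y - x0) (ContinuousLinearMap.id ℝ E) x :=
      (hasFDerivAt_id x).sub_const x0
    have h2 := hd.hasFDerivAt
    have hN : HasFDerivAt (fun y : E => ‖y - x0‖)
        (fderiv ℝ (fun y : E => ‖y‖) (x - x0)) x := by
      have := h2.comp x h1
      rw [ContinuousLinearMap.comp_id] at this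
      exact this
    have hν : ‖fderiv ℝ (fun y : E => ‖y‖) (x - x0)‖ ≤ 1 := by
      have := h2.le_of_lipschitz lipschitzWith_one_norm
      simpa using this
    set u := 2 - 2/ρ * ‖x - x0‖ with hu
    have hφ : HasDerivAt Real.smoothTransition (deriv Real.smoothTransition u) u :=
      (((Real.smoothTransition.contDiff (n := 1)).differentiable one_ne_zero) u).hasDerivAt
    have hinner : HasDerivAt (fun r : ℝ => 2 - 2/ρ * r) (-(2/ρ)) ‖x - x0‖ := by
      simpa using ((hasDerivAt_id ‖x - x0‖).const_mul (2/ρ)).const_sub 2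
    have hcomp1 : HasDerivAt (fun r : ℝ => Real.smoothTransition (2 - 2/ρ * r))
        (deriv Real.smoothTransition u * -(2/ρ)) ‖x - x0‖ :=
      HasDerivAt.comp_of_eq ‖x - x0‖ hφ hinner (by simp [hu])
    have hfull : HasDerivAt (fun r : ℝ => c * Real.smoothTransition (2 - 2/ρ * r))
        (c * (deriv Real.smoothTransition u * -(2/ρ))) ‖x - x0‖ := hcomp1.const_mul c
    have htot : HasFDerivAt (bfun x0 ρ c)
        ((c * (deriv Real.smoothTransition u * -(2/ρ))) •
          fderiv ℝ (fun y : E => ‖y‖) (x - x0)) x := by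
        have := hfull.comp_hasFDerivAt (f := fun y : E => ‖y - x0‖) x hN; exact this
    refine ⟨htot.differentiableAt, ?_⟩
    rw [htot.fderiv]
    rw [norm_smul]
    have h3 : ‖c * (deriv Real.smoothTransition u * -(2/ρ))‖ ≤ c * (2 * M) / ρ := by
      rw [Real.norm_eq_abs, abs_mul, abs_of_nonneg hc, abs_mul, abs_neg,
        abs_of_nonneg (by positivity : (0:ℝ) ≤ 2/ρ)]
      have := hM u
      rw [mul_comm (|deriv Real.smoothTransition u|) (2/ρ)]
      calc c * (2/ρ * |deriv Real.smoothTransition u|) ≤ c * (2/ρ * M) := by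
            apply mul_le_mul_of_nonneg_left _ hc
            exact mul_le_mul_of_nonneg_left this (by positivity)
      _ = c * (2 * M) / ρ := by ring
    calc ‖c * (deriv Real.smoothTransition u * -(2/ρ))‖ * ‖fderiv ℝ (fun y : E => ‖y‖) (x - x0)‖
        ≤ (c * (2 * M) / ρ) * 1 := by
          apply mul_le_mul h3 hν (norm_nonneg _) (by positivity)
    _ = c * (2 * M) / ρ := mul_one _

lemma ciInf_le_general {α : Type*} [Nonempty α] {Φ : α → ℝ} {m : ℝ} (h : ∀ x, m ≤ Φ x) (y : α) :
    (⨅ x, Φ x) ≤ Φ y :=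
  ciInf_le ⟨m, by rintro _ ⟨x, rfl⟩; exact h x⟩ y

open Classical in
/-- the choice of an almost-minimizer -/
def pickF (F : ℕ → E → ℝ) (e : ℕ → ℕ × ℕ) (c : ℕ → ℝ) (t : ℕ) (G : E → ℝ) : E :=
  if h : ∃ x0, F (e t).1 x0 + G x0 < (⨅ x, F (e t).1 x + G x) + c t / 4 then h.choose else 0

def GF (F : ℕ → E → ℝ) (e : ℕ → ℕ × ℕ) (c ρ : ℕ → ℝ) : ℕ → E → ℝ
  | 0 => fun _ => 0
  | (t+1) => fun x =>
      GF F e c ρ t x - bfun (pickF F e c t (GF F e c ρ t)) (ρ t) (c t) x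

def ctrF (F : ℕ → E → ℝ) (e : ℕ → ℕ × ℕ) (c ρ : ℕ → ℝ) (t : ℕ) : E :=
  pickF F e c t (GF F e c ρ t)

lemma GF_succ (F : ℕ → E → ℝ) (e : ℕ → ℕ × ℕ) (c ρ : ℕ → ℝ) (t : ℕ) (x : E) :
    GF F e c ρ (t+1) x = GF F e c ρ t x - bfun (ctrF F e c ρ t) (ρ t) (c t) x := rfl

lemma pickF_spec (F : ℕ → E → ℝ) (e : ℕ → ℕ × ℕ) (c ρ : ℕ → ℝ) (t : ℕ)
    (hc : 0 < c t) :
    F (e t).1 (ctrF F e c ρ t) + GF F e c ρ t (ctrF F e c ρ t) <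
      (⨅ x, F (e t).1 x + GF F e c ρ t x) + c t / 4 := by
  have hex : ∃ x0, F (e t).1 x0 + GF F e c ρ t x0 <
      (⨅ x, F (e t).1 x + GF F e c ρ t x) + c t / 4 :=
    exists_lt_of_ciInf_lt (lt_add_of_pos_right _ (by positivity))
  have : ctrF F e c ρ t = hex.choose := by
    rw [ctrF, pickF, dif_pos hex]
  rw [this]
  exact hex.choose_spec


/-- The scheduled sizes of the bumps. -/
def cseq (ε : ℝ) (q : ℕ → ℝ) : ℕ → ℝ
  | 0 => ε * q 0 / 64
  | (t+1) => cseq ε q t * q (t+1) / 8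

section cseq

variable {ε : ℝ} {q : ℕ → ℝ} (hε : 0 < ε) (hq : ∀ t, 0 < q t) (hq4 : ∀ t, q t ≤ 1/4)

include hε hq in
lemma cseq_pos : ∀ t, 0 < cseq ε q t := by
  intro t
  induction t with
  | zero => have := hq 0; rw [cseq]; positivity
  | succ t ih =>
      have := hq (t+1)
      rw [cseq]; positivity

include hε hq hq4 in
lemma cseq_succ_le (t : ℕ) : cseq ε q (t+1) ≤ cseq ε q t / 32 := by
  have h1 := cseq_pos hε hq t
  have h2 := hq4 (t+1)
  have h3 := hq (t+1)
  rw [cseq]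
  nlinarith

include hε hq hq4 in
lemma cseq_le_geo (t : ℕ) : ∀ s, cseq ε q (t + s) ≤ cseq ε q t * (1/32)^s := by
  intro s
  induction s with
  | zero => simp
  | succ s ih =>
      have h1 := cseq_succ_le hε hq hq4 (t + s)
      have h2 : cseq ε q (t + (s+1)) = cseq ε q ((t+s)+1) := by ring_nf
      rw [h2]
      calc cseq ε q ((t+s)+1) ≤ cseq ε q (t+s) / 32 := h1
      _ ≤ (cseq ε q t * (1/32)^s) / 32 := by linarith
      _ = cseq ε q t * (1/32)^(s+1) := by ring

include hε hq hq4 in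
lemma cseq_le (t : ℕ) : cseq ε q t ≤ ε/256 * (1/32)^t := by
  have h0 : cseq ε q 0 ≤ ε/256 := by
    have := hq4 0; have := hq 0
    rw [cseq]; nlinarith
  have := cseq_le_geo hε hq hq4 0 t
  simp only [Nat.zero_add] at this
  calc cseq ε q t ≤ cseq ε q 0 * (1/32)^t := this
  _ ≤ ε/256 * (1/32)^t := by
      apply mul_le_mul_of_nonneg_right h0 (by positivity)

lemma geo_summable : Summable (fun t : ℕ => ((1:ℝ)/32)^t) :=
  summable_geometric_of_lt_one (by norm_num) (by norm_num)

lemma geo_tsum : ∑' t : ℕ, ((1:ℝ)/32)^t = 32/31 := by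
  rw [tsum_geometric_of_lt_one (by norm_num) (by norm_num)]
  norm_num

include hε hq hq4 in
lemma cseq_summable : Summable (cseq ε q) := by
  apply Summable.of_nonneg_of_le (fun t => (cseq_pos hε hq t).le)
    (cseq_le hε hq hq4) (geo_summable.mul_left (ε/256))

include hε hq hq4 in
lemma cseq_tsum_le : ∑' t, cseq ε q t ≤ ε/128 := by
  have h1 : ∑' t, cseq ε q t ≤ ∑' t, ε/256 * (1/32)^t :=
    Summable.tsum_le_tsum (cseq_le hε hq hq4) (cseq_summable hε hq hq4) (geo_summable.mul_left (ε/256))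
  rw [tsum_mul_left, geo_tsum] at h1
  nlinarith

include hε hq hq4 in
lemma cseq_tail_le (t : ℕ) : ∑' s, cseq ε q (s + (t+1)) ≤ cseq ε q t / 4 := by
  have hsum : Summable (fun s => cseq ε q (s + (t+1))) :=
    (summable_nat_add_iff (t+1)).2 (cseq_summable hε hq hq4)
  have h1 : ∑' s, cseq ε q (s + (t+1)) ≤ ∑' s, cseq ε q (t+1) * (1/32)^s := by
    apply Summable.tsum_le_tsum _ hsum (geo_summable.mul_left _)
    intro s
    have := cseq_le_geo hε hq hq4 (t+1) s
    calc cseq ε q (s + (t+1)) = cseq ε q ((t+1) + s) := by ring_nf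
    _ ≤ cseq ε q (t+1) * (1/32)^s := this
  rw [tsum_mul_left, geo_tsum] at h1
  have h2 := cseq_succ_le hε hq hq4 t
  have h3 := cseq_pos hε hq (t+1)
  nlinarith

include hε hq hq4 in
lemma cseq_deriv_bound {M : ℝ} (hM0 : 0 ≤ M) {ρ : ℕ → ℝ} (hρ : ∀ t, ρ t = q t * (M+1)) :
    ∀ t, cseq ε q t * (2*M) / ρ t ≤ ε/32 * (1/32)^t := by
  intro t
  have hM1 : (0:ℝ) < M + 1 := by linarith
  cases t with
  | zero =>
      have h0 := hq 0
      rw [cseq, hρ 0, pow_zero, mul_one]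
      rw [div_le_iff₀ (by positivity)]
      nlinarith [mul_pos hε h0, mul_nonneg (mul_pos hε h0).le hM0]
  | succ t =>
      have h0 := hq (t+1)
      have h1 := cseq_pos hε hq t
      have h2 : cseq ε q (t+1) * (2*M) / ρ (t+1) = cseq ε q t * (2*M) / (8*(M+1)) := by
        rw [cseq, hρ (t+1)]
        field_simp
      rw [h2]
      have h3 : cseq ε q t * (2*M) / (8*(M+1)) ≤ cseq ε q t / 4 := by
        rw [div_le_div_iff₀ (by positivity) (by norm_num)]
        nlinarith
      have h4 := cseq_le hε hq hq4 t
      calc cseq ε q t * (2*M) / (8*(M+1)) ≤ cseq ε q t / 4 := h3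
      _ ≤ (ε/256 * (1/32)^t)/4 := by linarith
      _ ≤ ε/32 * (1/32)^(t+1) := by
          rw [pow_succ]
          nlinarith [pow_pos (by norm_num : (0:ℝ) < 1/32) t]

end cseq



/-! ### global constants -/

def Mst : ℝ := (exists_M).choose

lemma Mst_nonneg : 0 ≤ Mst := (exists_M).choose_spec.1

lemma Mst_bound : ∀ u : ℝ, |deriv Real.smoothTransition u| ≤ Mst := (exists_M).choose_spec.2

def eFn : ℕ → ℕ × ℕ := fun t => (Denumerable.eqv (ℕ × ℕ)).symm t

lemma eFn_surj (p : ℕ × ℕ) : ∃ t, eFn t = p :=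
  ⟨Denumerable.eqv (ℕ × ℕ) p, by simp [eFn]⟩

def rhoFn (t : ℕ) : ℝ := 1/(4 * (((eFn t).2 : ℝ) + 1))

lemma rhoFn_pos (t : ℕ) : 0 < rhoFn t := by rw [rhoFn]; positivity

lemma rhoFn_le (t : ℕ) : rhoFn t ≤ 1/4 := by
  rw [rhoFn]
  have h1 : (4:ℝ) ≤ 4 * (((eFn t).2 : ℝ) + 1) := by
    have : (0:ℝ) ≤ ((eFn t).2 : ℝ) := Nat.cast_nonneg _
    linarith
  exact one_div_le_one_div_of_le (by norm_num) h1

def qFn (t : ℕ) : ℝ := rhoFn t / (Mst + 1)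

lemma Mst1_pos : (0:ℝ) < Mst + 1 := by linarith [Mst_nonneg]

lemma qFn_pos (t : ℕ) : 0 < qFn t := div_pos (rhoFn_pos t) Mst1_pos

lemma qFn_le (t : ℕ) : qFn t ≤ 1/4 := by
  rw [qFn]
  calc rhoFn t / (Mst + 1) ≤ rhoFn t / 1 :=
        div_le_div_of_nonneg_left (rhoFn_pos t).le one_pos (by linarith [Mst_nonneg])
  _ = rhoFn t := div_one _
  _ ≤ 1/4 := rhoFn_le t

lemma rhoFn_eq (t : ℕ) : rhoFn t = qFn t * (Mst + 1) := by
  rw [qFn, div_mul_cancel₀ _ (ne_of_gt Mst1_pos)]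

variable {E : Type*} [NormedAddCommGroup E] [NormedSpace ℝ E]

theorem core (hnorm : ∀ x : E, x ≠ 0 → DifferentiableAt ℝ (fun y : E => ‖y‖) x)
    (F : ℕ → E → ℝ) (hbdd : ∀ k, ∃ m, ∀ x, m ≤ F k x) {ε : ℝ} (hε : 0 < ε) :
    ∃ g : E → ℝ, Differentiable ℝ g ∧ (∀ x, |g x| ≤ ε) ∧ (∀ x, ‖fderiv ℝ g x‖ ≤ ε) ∧
      ∀ k j : ℕ, ∃ δ : ℝ, 0 < δ ∧ ∀ y z : E,
        F k y + g y < (⨅ x, (F k x + g x)) + δ → F k z + g z < (⨅ x, (F k x + g x)) + δ →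
        dist y z ≤ 1/((j:ℝ)+1) := by
  classical
  have hM0 := Mst_nonneg
  have hM := Mst_bound
  have hqpos := qFn_pos
  have hq4 := qFn_le
  have hρpos := rhoFn_pos
  have hρq := rhoFn_eq
  have hcpos : ∀ t, 0 < cseq ε qFn t := cseq_pos hε hqpos
  have hcsum : Summable (cseq ε qFn) := cseq_summable hε hqpos hq4
  have hctsum : ∑' t, cseq ε qFn t ≤ ε/128 := cseq_tsum_le hε hqpos hq4
  set c : ℕ → ℝ := cseq ε qFn with hc_def
  set bmp : ℕ → E → ℝ :=
    fun t x => -(bfun (ctrF F eFn c rhoFn t) (rhoFn t) (c t) x) with hbmp_def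
  have hGsum : ∀ t x, GF F eFn c rhoFn t x = ∑ s ∈ Finset.range t, bmp s x := by
    intro t
    induction t with
    | zero => intro x; simp [GF]
    | succ t ih =>
        intro x
        rw [GF_succ, Finset.sum_range_succ, ← ih x, hbmp_def, sub_eq_add_neg]
  have hbdiff : ∀ t x, DifferentiableAt ℝ (bfun (ctrF F eFn c rhoFn t) (rhoFn t) (c t)) x ∧
      ‖fderiv ℝ (bfun (ctrF F eFn c rhoFn t) (rhoFn t) (c t)) x‖ ≤ c t * (2*Mst)/rhoFn t :=
    fun t x => bfun_diff hM0 hM hnorm _ (hρpos t) (hcpos t).le x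
  have hbmpf : ∀ t x, HasFDerivAt (bmp t)
      (-(fderiv ℝ (bfun (ctrF F eFn c rhoFn t) (rhoFn t) (c t)) x)) x :=
    fun t x => ((hbdiff t x).1.hasFDerivAt).neg
  set u : ℕ → ℝ := fun t => ε/32 * (1/32)^t with hu_def
  have hu : Summable u := geo_summable.mul_left _
  have hf' : ∀ t x, ‖-(fderiv ℝ (bfun (ctrF F eFn c rhoFn t) (rhoFn t) (c t)) x)‖ ≤ u t := by
    intro t x
    rw [norm_neg]
    exact le_trans (hbdiff t x).2 (cseq_deriv_bound hε hqpos hq4 hM0 hρq t)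
  have hbmpnorm : ∀ t x, ‖bmp t x‖ ≤ c t := by
    intro t x
    rw [hbmp_def]
    simp only [Real.norm_eq_abs, abs_neg]
    rw [abs_of_nonneg (bfun_nonneg _ (hcpos t).le _)]
    exact bfun_le _ (hcpos t).le _
  have hsum0 : ∀ x, Summable fun t => bmp t x := fun x =>
    Summable.of_norm_bounded hcsum (fun t => hbmpnorm t x)
  have hgF : ∀ x : E, HasFDerivAt (fun y => ∑' t, bmp t y)
      (∑' t, -(fderiv ℝ (bfun (ctrF F eFn c rhoFn t) (rhoFn t) (c t)) x)) x :=
    fun x => hasFDerivAt_tsum hu hbmpf hf' (hsum0 0) x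
  refine ⟨fun x => ∑' t, bmp t x, fun x => (hgF x).differentiableAt, ?_, ?_, ?_⟩
  · intro x
    have h1 : ‖∑' t, bmp t x‖ ≤ ∑' t, c t := by
      apply le_trans (norm_tsum_le_tsum_norm
        (Summable.of_nonneg_of_le (fun t => norm_nonneg _) (fun t => hbmpnorm t x) hcsum))
      exact Summable.tsum_le_tsum (fun t => hbmpnorm t x)
        (Summable.of_nonneg_of_le (fun t => norm_nonneg _) (fun t => hbmpnorm t x) hcsum) hcsum
    rw [Real.norm_eq_abs] at h1
    linarith
  · intro x
    rw [(hgF x).fderiv]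
    have hsn : Summable fun t => ‖-(fderiv ℝ (bfun (ctrF F eFn c rhoFn t) (rhoFn t) (c t)) x)‖ :=
      Summable.of_nonneg_of_le (fun t => norm_nonneg _) (fun t => hf' t x) hu
    have h1 := norm_tsum_le_tsum_norm hsn
    have h2 : ∑' t, ‖-(fderiv ℝ (bfun (ctrF F eFn c rhoFn t) (rhoFn t) (c t)) x)‖ ≤ ∑' t, u t :=
      Summable.tsum_le_tsum (fun t => hf' t x) hsn hu
    have h3 : ∑' t, u t = ε/32 * (32/31) := by
      rw [hu_def, tsum_mul_left, geo_tsum]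
    nlinarith
  · intro k j
    obtain ⟨t, het⟩ := eFn_surj (k, j)
    have hρt : rhoFn t = 1/(4 * ((j:ℝ)+1)) := by rw [rhoFn, het]
    obtain ⟨m, hm⟩ := hbdd k
    have hGb : ∀ t' x, |GF F eFn c rhoFn t' x| ≤ ε/128 := by
      intro t' x
      rw [hGsum t' x]
      calc |∑ s ∈ Finset.range t', bmp s x| ≤ ∑ s ∈ Finset.range t', ‖bmp s x‖ := by
            simpa using Finset.abs_sum_le_sum_abs (fun s => bmp s x) (Finset.range t')
      _ ≤ ∑ s ∈ Finset.range t', c s := Finset.sum_le_sum (fun s _ => hbmpnorm s x)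
      _ ≤ ∑' s, c s := Summable.sum_le_tsum _ (fun s _ => (hcpos s).le) hcsum
      _ ≤ ε/128 := hctsum
    have hgb : ∀ x : E, |∑' s, bmp s x| ≤ ε/128 := by
      intro x
      have h1 : ‖∑' s, bmp s x‖ ≤ ∑' s, c s := by
        apply le_trans (norm_tsum_le_tsum_norm (Summable.of_nonneg_of_le
          (fun s => norm_nonneg _) (fun s => hbmpnorm s x) hcsum))
        exact Summable.tsum_le_tsum (fun s => hbmpnorm s x) (Summable.of_nonneg_of_le
          (fun s => norm_nonneg _) (fun s => hbmpnorm s x) hcsum) hcsum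
      rw [Real.norm_eq_abs] at h1
      linarith
    have htail : ∀ x : E, |(∑' s, bmp s x) - GF F eFn c rhoFn (t+1) x| ≤ c t / 4 := by
      intro x
      have hsplit := Summable.sum_add_tsum_nat_add (f := fun s => bmp s x) (t+1) (hsum0 x)
      have h1 : (∑' s, bmp s x) - GF F eFn c rhoFn (t+1) x = ∑' s, bmp (s + (t+1)) x := by
        rw [hGsum (t+1) x, ← hsplit]; ring
      rw [h1]
      have hsumc : Summable fun s => c (s + (t+1)) := (summable_nat_add_iff (t+1)).2 hcsum
      have h2 : ‖∑' s, bmp (s + (t+1)) x‖ ≤ ∑' s, c (s + (t+1)) := by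
        apply le_trans (norm_tsum_le_tsum_norm (Summable.of_nonneg_of_le
          (fun s => norm_nonneg _) (fun s => hbmpnorm _ x) hsumc))
        exact Summable.tsum_le_tsum (fun s => hbmpnorm _ x) (Summable.of_nonneg_of_le
          (fun s => norm_nonneg _) (fun s => hbmpnorm _ x) hsumc) hsumc
      rw [Real.norm_eq_abs] at h2
      calc |∑' s, bmp (s + (t+1)) x| ≤ ∑' s, c (s + (t+1)) := h2
      _ ≤ c t / 4 := cseq_tail_le hε hqpos hq4 t
    have hA_le : ∀ x' : E, (⨅ x, F k x + GF F eFn c rhoFn t x) ≤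
        F k x' + GF F eFn c rhoFn t x' := by
      intro x'
      apply ciInf_le_general (m := m - ε/128)
      intro x
      have h1 := hm x
      have h2 := (abs_le.1 (hGb t x)).1
      linarith
    have hμ_le : ∀ x' : E, (⨅ x, F k x + ∑' s, bmp s x) ≤ F k x' + ∑' s, bmp s x' := by
      intro x'
      apply ciInf_le_general (m := m - ε/128)
      intro x
      have h1 := hm x
      have h2 := (abs_le.1 (hgb x)).1
      linarith
    set x0 : E := ctrF F eFn c rhoFn t with hx0_def
    have hpick : F k x0 + GF F eFn c rhoFn t x0 <
        (⨅ x, F k x + GF F eFn c rhoFn t x) + c t / 4 := by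
      have h := pickF_spec F eFn c rhoFn t (hcpos t)
      rw [het] at h
      exact h
    have key1 : (⨅ x, F k x + ∑' s, bmp s x) ≤ (⨅ x, F k x + GF F eFn c rhoFn t x) - c t/2 := by
      have h1 := (abs_le.1 (htail x0)).2
      have h2 : GF F eFn c rhoFn (t+1) x0 = GF F eFn c rhoFn t x0 - c t := by
        rw [GF_succ, ← hx0_def, bfun_center]
      have h3 := hμ_le x0
      linarith [hpick]
    have key2 : ∀ x : E, rhoFn t ≤ ‖x - x0‖ →
        (⨅ x, F k x + GF F eFn c rhoFn t x) - c t/4 ≤ F k x + ∑' s, bmp s x := by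
      intro x hx
      have h1 := (abs_le.1 (htail x)).1
      have h2 : GF F eFn c rhoFn (t+1) x = GF F eFn c rhoFn t x := by
        rw [GF_succ, ← hx0_def, bfun_zero _ (hρpos t) hx, sub_zero]
      have h3 := hA_le x
      linarith
    refine ⟨c t/8, by have := hcpos t; positivity, ?_⟩
    intro y z hy hz
    have hball : ∀ w : E, F k w + ∑' s, bmp s w < (⨅ x, F k x + ∑' s, bmp s x) + c t/8 →
        ‖w - x0‖ < rhoFn t := by
      intro w hw
      by_contra hcon
      push_neg at hcon
      have h1 := key2 w hcon
      have := hcpos t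
      linarith [key1]
    have hy' := hball y hy
    have hz' := hball z hz
    have hd : dist y z ≤ ‖y - x0‖ + ‖z - x0‖ := by
      rw [dist_eq_norm]
      calc ‖y - z‖ = ‖(y - x0) - (z - x0)‖ := by rw [sub_sub_sub_cancel_right]
      _ ≤ ‖y - x0‖ + ‖z - x0‖ := norm_sub_le _ _
    have hjpos : (0:ℝ) < (j:ℝ) + 1 := by positivity
    have h2ρ : 2 * rhoFn t ≤ 1/((j:ℝ)+1) := by
      rw [hρt, mul_one_div]
      rw [div_le_div_iff₀ (by positivity) hjpos]
      nlinarith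
    linarith

/-! ### Attainment of the minimum -/

theorem attain {E : Type*} [NormedAddCommGroup E] [NormedSpace ℝ E] [CompleteSpace E]
    (Φ : E → ℝ) (hlsc : LowerSemicontinuous Φ) (m : ℝ) (hm : ∀ x, m ≤ Φ x)
    (hgood : ∀ j : ℕ, ∃ δ : ℝ, 0 < δ ∧ ∀ y z : E,
      Φ y < (⨅ x, Φ x) + δ → Φ z < (⨅ x, Φ x) + δ → dist y z ≤ 1/((j:ℝ)+1)) :
    ∃ xbar : E, Φ xbar = (⨅ x, Φ x) := by
  classical
  have hle : ∀ y : E, (⨅ x, Φ x) ≤ Φ y := ciInf_le_general hm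
  have hz : ∀ k : ℕ, ∃ w : E, Φ w < (⨅ x, Φ x) + 1/((k:ℝ)+1) := fun k =>
    exists_lt_of_ciInf_lt (lt_add_of_pos_right _ (by positivity))
  choose z hzlt using hz
  have hmono : ∀ {a b : ℕ}, a ≤ b → 1/((b:ℝ)+1) ≤ 1/((a:ℝ)+1) := by
    intro a b hab
    apply one_div_le_one_div_of_le (by positivity)
    have : (a:ℝ) ≤ (b:ℝ) := Nat.cast_le.2 hab
    linarith
  have hcauchy : CauchySeq z := by
    rw [Metric.cauchySeq_iff]
    intro η hη
    obtain ⟨j, hj⟩ := exists_nat_one_div_lt hη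
    obtain ⟨δ, hδ, hjj⟩ := hgood j
    obtain ⟨N, hN⟩ := exists_nat_one_div_lt hδ
    refine ⟨N, fun a ha b hb => ?_⟩
    have h1 : Φ (z a) < (⨅ x, Φ x) + δ :=
      lt_of_lt_of_le (hzlt a) (by linarith [lt_of_le_of_lt (hmono ha) hN])
    have h2 : Φ (z b) < (⨅ x, Φ x) + δ :=
      lt_of_lt_of_le (hzlt b) (by linarith [lt_of_le_of_lt (hmono hb) hN])
    exact lt_of_le_of_lt (hjj _ _ h1 h2) hj
  obtain ⟨xbar, hxbar⟩ := cauchySeq_tendsto_of_complete hcauchy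
  refine ⟨xbar, le_antisymm ?_ (hle xbar)⟩
  by_contra hgt
  push_neg at hgt
  have hη : (0:ℝ) < (Φ xbar - (⨅ x, Φ x))/2 := by linarith
  have hev1 : ∀ᶠ k in atTop, ((⨅ x, Φ x) + Φ xbar)/2 < Φ (z k) :=
    hxbar.eventually (hlsc xbar _ (by linarith))
  have hev2 : ∀ᶠ k : ℕ in atTop, 1/((k:ℝ)+1) < (Φ xbar - (⨅ x, Φ x))/2 :=
    tendsto_one_div_add_atTop_nhds_zero_nat.eventually_lt_const hη
  obtain ⟨k, h1, h2⟩ := (hev1.and hev2).exists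
  have := hzlt k
  linarith

/-! ### capping EReal functions -/

section cap

variable {a : EReal} {m C r : ℝ}

lemma cap_ne_top : a ⊓ (C:EReal) ≠ ⊤ :=
  (lt_of_le_of_lt (min_le_right _ _) (EReal.coe_lt_top C)).ne

lemma cap_ne_bot (hm : (m:EReal) ≤ a) : a ⊓ (C:EReal) ≠ ⊥ := by
  have h1 : ((min m C : ℝ) : EReal) ≤ a ⊓ (C:EReal) := by
    apply le_inf
    · exact le_trans (EReal.coe_le_coe_iff.2 (min_le_left _ _)) hm
    · exact EReal.coe_le_coe_iff.2 (min_le_right _ _)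
  exact (lt_of_lt_of_le (EReal.bot_lt_coe _) h1).ne'

lemma cap_coe (hm : (m:EReal) ≤ a) :
    (((a ⊓ (C:EReal)).toReal : ℝ) : EReal) = a ⊓ (C:EReal) :=
  EReal.coe_toReal cap_ne_top (cap_ne_bot hm)

lemma cap_le_C (hm : (m:EReal) ≤ a) : (a ⊓ (C:EReal)).toReal ≤ C := by
  have := EReal.toReal_le_toReal (min_le_right a (C:EReal)) (cap_ne_bot hm) (EReal.coe_ne_top C)
  simpa using this

lemma cap_ge (hm : (m:EReal) ≤ a) : min m C ≤ (a ⊓ (C:EReal)).toReal := by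
  have h1 : ((min m C : ℝ) : EReal) ≤ a ⊓ (C:EReal) := by
    apply le_inf
    · exact le_trans (EReal.coe_le_coe_iff.2 (min_le_left _ _)) hm
    · exact EReal.coe_le_coe_iff.2 (min_le_right _ _)
  have := EReal.toReal_le_toReal h1 (EReal.coe_ne_bot _) cap_ne_top
  simpa using this

lemma cap_le_toReal (hm : (m:EReal) ≤ a) (ha : a ≠ ⊤) :
    (a ⊓ (C:EReal)).toReal ≤ a.toReal := by
  have := EReal.toReal_le_toReal (min_le_left a (C:EReal)) (cap_ne_bot hm) ha
  exact this

lemma cap_eq_self (hm : (m:EReal) ≤ a) (h : a < (C:EReal)) :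
    a = (((a ⊓ (C:EReal)).toReal : ℝ) : EReal) := by
  rw [cap_coe hm, inf_eq_left.2 h.le]

lemma cap_lt_iff (hm : (m:EReal) ≤ a) (hrC : r ≤ C) :
    (a ⊓ (C:EReal)).toReal < r ↔ a < (r:EReal) := by
  constructor
  · intro h
    by_cases hC : a < (C:EReal)
    · rw [cap_eq_self (C := C) hm hC]
      exact EReal.coe_lt_coe_iff.2 h
    · push_neg at hC
      exfalso
      rw [inf_eq_right.2 hC] at h
      simp only [EReal.toReal_coe] at h
      linarith
  · intro h
    have hC : a < (C:EReal) := lt_of_lt_of_le h (EReal.coe_le_coe_iff.2 hrC)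
    have := cap_eq_self (C := C) hm hC
    rw [this] at h
    exact EReal.coe_lt_coe_iff.1 h

lemma capped_lsc {E : Type*} [TopologicalSpace E] {f : E → EReal}
    (hf : LowerSemicontinuous f) {m C : ℝ} (hm : ∀ x, (m:EReal) ≤ f x) :
    LowerSemicontinuous (fun x => ((f x) ⊓ (C:EReal)).toReal) := by
  intro x r hr
  have h1 : ((r:ℝ) : EReal) < f x ⊓ (C:EReal) := by
    rw [← cap_coe (hm x)]
    exact EReal.coe_lt_coe_iff.2 hr
  have h2 : ((r:ℝ):EReal) < f x := lt_of_lt_of_le h1 (min_le_left _ _)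
  have h3 : ((r:ℝ):EReal) < (C:EReal) := lt_of_lt_of_le h1 (min_le_right _ _)
  filter_upwards [hf x _ h2] with y hy
  have h4 : ((r:ℝ):EReal) < f y ⊓ (C:EReal) := lt_inf_iff.2 ⟨hy, h3⟩
  rw [← cap_coe (hm y)] at h4
  exact EReal.coe_lt_coe_iff.1 h4

end cap

end SSP

namespace SSP

lemma ER_le' (a : EReal) (r s : ℝ) : (a + (r : EReal) ≤ (s : EReal)) ↔ a ≤ ((s - r : ℝ) : EReal) := by
  induction a using EReal.rec with
  | bot => simp [EReal.bot_add, bot_le]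
  | coe t =>
      rw [← EReal.coe_add, EReal.coe_le_coe_iff, EReal.coe_le_coe_iff]
      constructor <;> intro h <;> linarith
  | top =>
      rw [EReal.top_add_coe]
      exact iff_of_false (fun h => (EReal.coe_lt_top s).not_ge h)
        (fun h => (EReal.coe_lt_top _).not_ge h)

lemma ER_sub_coe (a : EReal) (r : ℝ) : a - (r : EReal) = a + ((-r : ℝ) : EReal) := by
  rw [EReal.coe_neg, sub_eq_add_neg]

variable {E : Type*} [NormedAddCommGroup E] [NormedSpace ℝ E]

/-- the combined family, index `0` being the limit function -/
def fEof (f : ℕ → E → EReal) (flim : E → EReal) : ℕ → E → EReal :=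
  fun k => Nat.rec flim (fun n _ => f n) k

/-- the capping thresholds -/
def Cof (f : ℕ → E → EReal) (flim : E → EReal) (xw : ℕ → E) (ε : ℝ) : ℕ → ℝ :=
  fun k => (fEof f flim k (xw k)).toReal + ε + 10

/-- the capped real-valued family -/
def FRof (f : ℕ → E → EReal) (flim : E → EReal) (C : ℕ → ℝ) : ℕ → E → ℝ :=
  fun k x => ((fEof f flim k x) ⊓ ((C k : ℝ) : EReal)).toReal

/-- the real infima of the perturbed functions -/
def muR (f : ℕ → E → EReal) (flim : E → EReal) (C : ℕ → ℝ) (g : E → ℝ) (k : ℕ) : ℝ :=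
  ⨅ x, FRof f flim C k x + g x

variable {f : ℕ → E → EReal} {flim : E → EReal} {C : ℕ → ℝ} {m : ℝ} {k : ℕ} {x : E}

lemma muR_eq (g : E → ℝ) (k : ℕ) :
    muR f flim C g k = ⨅ x, FRof f flim C k x + g x := rfl

lemma FR_ge (hm : (m:EReal) ≤ fEof f flim k x) : min m (C k) ≤ FRof f flim C k x :=
  cap_ge hm

lemma FR_le_toReal (hm : (m:EReal) ≤ fEof f flim k x) (htop : fEof f flim k x ≠ ⊤) :
    FRof f flim C k x ≤ (fEof f flim k x).toReal :=
  cap_le_toReal hm htop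

lemma FR_eq_of_lt (hm : (m:EReal) ≤ fEof f flim k x)
    (h : fEof f flim k x < ((C k : ℝ) : EReal)) :
    fEof f flim k x = ((FRof f flim C k x : ℝ) : EReal) :=
  cap_eq_self hm h

lemma FR_lt_iff {r : ℝ} (hm : (m:EReal) ≤ fEof f flim k x) (hr : r ≤ C k) :
    FRof f flim C k x < r ↔ fEof f flim k x < ((r:ℝ) : EReal) :=
  cap_lt_iff hm hr

lemma FR_lsc (hf : LowerSemicontinuous (fEof f flim k)) (hm : ∀ x, (m:EReal) ≤ fEof f flim k x) :
    LowerSemicontinuous (FRof f flim C k) :=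
  capped_lsc hf hm

end SSP

/-- Corollary of Theorem 1.1 on a Banach space with Fréchet differentiable norm:
one can choose a Fréchet smooth perturbation `g`, small together with its
derivative, such that each `f n + g` attains a unique (strong) minimum at `x n`,
`x n → xlim` and `f n (x n) → f_∞ (xlim)`. -/
theorem smooth_simultaneous_perturbation
    {E : Type*} [NormedAddCommGroup E] [NormedSpace ℝ E] [CompleteSpace E]
    (hnorm : ∀ x : E, x ≠ 0 → DifferentiableAt ℝ (fun y : E => ‖y‖) x)
    (f : ℕ → E → EReal) (flim : E → EReal)
    (hproper : ∀ n, ProperFn (f n)) (hproperlim : ProperFn flim)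
    (hlsc : ∀ n, LowerSemicontinuous (f n)) (hlsclim : LowerSemicontinuous flim)
    (hbdd : ∀ n, BddBelowFn (f n)) (hbddlim : BddBelowFn flim)
    (h1 : CondC1 f flim) (h2 : CondC2 f flim) :
    ∀ ε : ℝ, 0 < ε → ∃ g : E → ℝ, Differentiable ℝ g ∧
      (∀ x : E, |g x| < ε) ∧ (∀ x : E, ‖fderiv ℝ g x‖ < ε) ∧
      ∃ (x : ℕ → E) (xlim : E),
        (∀ n, StrongMinAt (fun y => f n y + (g y : EReal)) (x n) ∧
          (∀ y : E, f n (x n) + (g (x n) : EReal) ≤ f n y + (g y : EReal)) ∧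
          (∀ y : E, f n y + (g y : EReal) ≤ f n (x n) + (g (x n) : EReal) → y = x n)) ∧
        (StrongMinAt (fun y => flim y + (g y : EReal)) xlim ∧
          (∀ y : E, flim xlim + (g xlim : EReal) ≤ flim y + (g y : EReal)) ∧
          (∀ y : E, flim y + (g y : EReal) ≤ flim xlim + (g xlim : EReal) → y = xlim)) ∧
        Tendsto x atTop (𝓝 xlim) ∧
        Tendsto (fun n => f n (x n)) atTop (𝓝 (flim xlim)) := by
  intro ε hε
  classical
  have hbddE : ∀ k : ℕ, ∃ m : ℝ, ∀ x, (m : EReal) ≤ SSP.fEof f flim k x := by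
    intro k; cases k with
    | zero => exact hbddlim
    | succ n => exact hbdd n
  choose mE hmE using hbddE
  have hproperE : ∀ k : ℕ, ∃ x, SSP.fEof f flim k x ≠ ⊤ := by
    intro k; cases k with
    | zero => exact hproperlim
    | succ n => exact hproper n
  choose xw hxw using hproperE
  have hlscE : ∀ k, LowerSemicontinuous (SSP.fEof f flim k) := by
    intro k; cases k with
    | zero => exact hlsclim
    | succ n => exact hlsc n
  have hFRbdd : ∀ k, ∃ m : ℝ, ∀ x, m ≤ (SSP.FRof f flim (SSP.Cof f flim xw ε)) k x := fun k =>
    ⟨min (mE k) ((SSP.Cof f flim xw ε) k), fun x => SSP.FR_ge (hmE k x)⟩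
  obtain ⟨g, hgdiff, hgsup, hgder, hgood⟩ := SSP.core hnorm (SSP.FRof f flim (SSP.Cof f flim xw ε)) hFRbdd (half_pos hε)
  simp only [← SSP.muR_eq (f := f) (flim := flim) (C := (SSP.Cof f flim xw ε)) g] at hgood
  have hL0 : (0:ℝ) ≤ ε/2 := by linarith
  have hglip : ∀ y z : E, |g y - g z| ≤ ε/2 * ‖y - z‖ := by
    intro y z
    have h := Convex.norm_image_sub_le_of_norm_fderiv_le
      (fun x _ => (hgdiff x)) (fun x _ => hgder x) convex_univ (mem_univ z) (mem_univ y)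
    rwa [Real.norm_eq_abs] at h
  have hμ_le : ∀ k (y : E), (SSP.muR f flim (SSP.Cof f flim xw ε) g) k ≤ (SSP.FRof f flim (SSP.Cof f flim xw ε)) k y + g y := by
    intro k y
    rw [SSP.muR_eq]
    apply SSP.ciInf_le_general (m := min (mE k) ((SSP.Cof f flim xw ε) k) - ε/2)
    intro x
    have hh1 : min (mE k) ((SSP.Cof f flim xw ε) k) ≤ (SSP.FRof f flim (SSP.Cof f flim xw ε)) k x := SSP.FR_ge (hmE k x)
    have hh2 := (abs_le.1 (hgsup x)).1
    linarith
  have hμxw : ∀ k, (SSP.muR f flim (SSP.Cof f flim xw ε) g) k ≤ (SSP.fEof f flim k (xw k)).toReal + ε/2 := by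
    intro k
    have hh1 := hμ_le k (xw k)
    have hh2 : (SSP.FRof f flim (SSP.Cof f flim xw ε)) k (xw k) ≤ (SSP.fEof f flim k (xw k)).toReal :=
      SSP.FR_le_toReal (hmE k _) (hxw k)
    have hh3 := (abs_le.1 (hgsup (xw k))).2
    linarith
  have hCk : ∀ k, (SSP.Cof f flim xw ε) k = (SSP.fEof f flim k (xw k)).toReal + ε + 10 := fun k => rfl
  have hrCb : ∀ k (δ : ℝ), δ ≤ 1 → ∀ y : E, (SSP.muR f flim (SSP.Cof f flim xw ε) g) k + δ - g y ≤ (SSP.Cof f flim xw ε) k := by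
    intro k δ hδ y
    have hh1 := hμxw k
    have hh2 := (abs_le.1 (hgsup y)).1
    have hh3 := hCk k
    linarith
  have hzone : ∀ k (δ : ℝ), 0 < δ → δ ≤ 1 → ∀ y : E,
      (SSP.fEof f flim k y + ((g y : ℝ) : EReal) < (((SSP.muR f flim (SSP.Cof f flim xw ε) g) k + δ : ℝ) : EReal) ↔
        (SSP.FRof f flim (SSP.Cof f flim xw ε)) k y + g y < (SSP.muR f flim (SSP.Cof f flim xw ε) g) k + δ) := by
    intro k δ hδ hδ1 y
    have hb := hmE k y
    have hr : (SSP.muR f flim (SSP.Cof f flim xw ε) g) k + δ - g y ≤ (SSP.Cof f flim xw ε) k := hrCb k δ hδ1 y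
    constructor
    · intro h
      have hh1 : SSP.fEof f flim k y < (((SSP.muR f flim (SSP.Cof f flim xw ε) g) k + δ - g y : ℝ) : EReal) := (SSP.ER_lt _ _ _).1 h
      have hh2 := (SSP.FR_lt_iff hb hr).2 hh1
      linarith
    · intro h
      have hh2 : (SSP.FRof f flim (SSP.Cof f flim xw ε)) k y < (SSP.muR f flim (SSP.Cof f flim xw ε) g) k + δ - g y := by linarith
      exact (SSP.ER_lt _ _ _).2 ((SSP.FR_lt_iff hb hr).1 hh2)
  have hzone2 : ∀ k (δ : ℝ), 0 < δ → δ ≤ 1 → ∀ y : E,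
      (SSP.FRof f flim (SSP.Cof f flim xw ε)) k y + g y < (SSP.muR f flim (SSP.Cof f flim xw ε) g) k + δ → SSP.fEof f flim k y = (((SSP.FRof f flim (SSP.Cof f flim xw ε)) k y : ℝ) : EReal) := by
    intro k δ hδ hδ1 y h
    have hb := hmE k y
    have hr : (SSP.muR f flim (SSP.Cof f flim xw ε) g) k + δ - g y ≤ (SSP.Cof f flim xw ε) k := hrCb k δ hδ1 y
    have hh2 : (SSP.FRof f flim (SSP.Cof f flim xw ε)) k y < (SSP.muR f flim (SSP.Cof f flim xw ε) g) k + δ - g y := by linarith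
    have hh1 : SSP.fEof f flim k y < (((SSP.Cof f flim xw ε) k : ℝ) : EReal) :=
      lt_of_lt_of_le ((SSP.FR_lt_iff hb hr).1 hh2) (EReal.coe_le_coe_iff.2 hr)
    exact SSP.FR_eq_of_lt hb hh1
  have hμcoe : ∀ k, (⨅ y, SSP.fEof f flim k y + ((g y : ℝ) : EReal)) = (((SSP.muR f flim (SSP.Cof f flim xw ε) g) k : ℝ) : EReal) := by
    intro k
    apply le_antisymm
    · have hseq : ∀ n : ℕ, (⨅ y, SSP.fEof f flim k y + ((g y : ℝ) : EReal)) ≤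
          (((SSP.muR f flim (SSP.Cof f flim xw ε) g) k + 1/((n:ℝ)+1) : ℝ) : EReal) := by
        intro n
        have hδpos : 0 < min (1/((n:ℝ)+1)) 1 := lt_min (by positivity) one_pos
        obtain ⟨y, hy⟩ : ∃ y : E, (SSP.FRof f flim (SSP.Cof f flim xw ε)) k y + g y < (SSP.muR f flim (SSP.Cof f flim xw ε) g) k + min (1/((n:ℝ)+1)) 1 := by
          have hlt : (⨅ x, (SSP.FRof f flim (SSP.Cof f flim xw ε)) k x + g x) < (SSP.muR f flim (SSP.Cof f flim xw ε) g) k + min (1/((n:ℝ)+1)) 1 := by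
            rw [← SSP.muR_eq g k]
            exact lt_add_of_pos_right _ hδpos
          exact exists_lt_of_ciInf_lt hlt
        have heq := hzone2 k _ hδpos (min_le_right _ _) y hy
        calc (⨅ y, SSP.fEof f flim k y + ((g y : ℝ) : EReal)) ≤
            SSP.fEof f flim k y + ((g y : ℝ) : EReal) := iInf_le _ y
        _ = (((SSP.FRof f flim (SSP.Cof f flim xw ε)) k y + g y : ℝ) : EReal) := by rw [heq, ← EReal.coe_add]
        _ ≤ (((SSP.muR f flim (SSP.Cof f flim xw ε) g) k + 1/((n:ℝ)+1) : ℝ) : EReal) := by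
            apply EReal.coe_le_coe_iff.2
            have hh5 : min (1/((n:ℝ)+1)) 1 ≤ 1/((n:ℝ)+1) := min_le_left _ _
            linarith
      have hT : Tendsto
          (fun n : ℕ => (((SSP.muR f flim (SSP.Cof f flim xw ε) g) k + 1/((n:ℝ)+1) : ℝ) : EReal))
          atTop (𝓝 (((SSP.muR f flim (SSP.Cof f flim xw ε) g) k : ℝ) : EReal)) := by
        apply EReal.tendsto_coe.2
        have hh6 : Tendsto (fun n : ℕ => (SSP.muR f flim (SSP.Cof f flim xw ε) g) k + 1/((n:ℝ)+1)) atTop (𝓝 ((SSP.muR f flim (SSP.Cof f flim xw ε) g) k + 0)) :=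
          tendsto_const_nhds.add tendsto_one_div_add_atTop_nhds_zero_nat
        simpa using hh6
      exact ge_of_tendsto hT (Filter.Eventually.of_forall hseq)
    · apply le_iInf
      intro y
      by_cases h : SSP.fEof f flim k y < (((SSP.Cof f flim xw ε) k : ℝ) : EReal)
      · have hh1 := SSP.FR_eq_of_lt (hmE k y) h
        calc (((SSP.muR f flim (SSP.Cof f flim xw ε) g) k : ℝ) : EReal) ≤ (((SSP.FRof f flim (SSP.Cof f flim xw ε)) k y + g y : ℝ) : EReal) :=
              EReal.coe_le_coe_iff.2 (hμ_le k y)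
        _ = SSP.fEof f flim k y + ((g y : ℝ) : EReal) := by rw [EReal.coe_add, ← hh1]
      · push_neg at h
        have hh2 : (((SSP.Cof f flim xw ε) k + g y : ℝ) : EReal) ≤ SSP.fEof f flim k y + ((g y : ℝ) : EReal) := by
          rw [EReal.coe_add]
          exact add_le_add_left h _
        apply le_trans _ hh2
        apply EReal.coe_le_coe_iff.2
        have hh3 := hμxw k
        have hh4 := (abs_le.1 (hgsup y)).1
        have hh5 := hCk k
        linarith
  have hattain : ∀ k : ℕ, ∃ xbar : E, (SSP.FRof f flim (SSP.Cof f flim xw ε)) k xbar + g xbar = (SSP.muR f flim (SSP.Cof f flim xw ε) g) k := by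
    intro k
    have hls : LowerSemicontinuous (fun x : E => (SSP.FRof f flim (SSP.Cof f flim xw ε)) k x + g x) :=
      LowerSemicontinuous.add (SSP.FR_lsc (hlscE k) (hmE k))
        (hgdiff.continuous).lowerSemicontinuous
    have hb : ∀ x : E, min (mE k) ((SSP.Cof f flim xw ε) k) - ε/2 ≤ (SSP.FRof f flim (SSP.Cof f flim xw ε)) k x + g x := by
      intro x
      have hh1 : min (mE k) ((SSP.Cof f flim xw ε) k) ≤ (SSP.FRof f flim (SSP.Cof f flim xw ε)) k x := SSP.FR_ge (hmE k x)
      have hh2 := (abs_le.1 (hgsup x)).1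
      linarith
    have hgd : ∀ j : ℕ, ∃ δ : ℝ, 0 < δ ∧ ∀ y z : E,
        (SSP.FRof f flim (SSP.Cof f flim xw ε)) k y + g y < (⨅ x, (SSP.FRof f flim (SSP.Cof f flim xw ε)) k x + g x) + δ → (SSP.FRof f flim (SSP.Cof f flim xw ε)) k z + g z < (⨅ x, (SSP.FRof f flim (SSP.Cof f flim xw ε)) k x + g x) + δ →
        dist y z ≤ 1/((j:ℝ)+1) := by
      intro j
      obtain ⟨δ, hδ, hp⟩ := hgood k j
      refine ⟨δ, hδ, fun y z hy hz => hp y z ?_ ?_⟩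
      · rwa [← SSP.muR_eq g k] at hy
      · rwa [← SSP.muR_eq g k] at hz
    obtain ⟨xb, hxb⟩ := SSP.attain _ hls _ hb hgd
    exact ⟨xb, by rw [hxb, ← SSP.muR_eq g k]⟩
  choose X hX using hattain
  have hrad : ∀ k j : ℕ, ∃ δ : ℝ, 0 < δ ∧ ∀ y : E,
      (SSP.FRof f flim (SSP.Cof f flim xw ε)) k y + g y < (SSP.muR f flim (SSP.Cof f flim xw ε) g) k + δ → dist y (X k) ≤ 1/((j:ℝ)+1) := by
    intro k j
    obtain ⟨δ, hδ, hp⟩ := hgood k j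
    exact ⟨δ, hδ, fun y hy => hp y (X k) hy (by rw [hX k]; linarith)⟩
  have hXval : ∀ k, SSP.fEof f flim k (X k) + ((g (X k) : ℝ) : EReal) = (((SSP.muR f flim (SSP.Cof f flim xw ε) g) k : ℝ) : EReal) := by
    intro k
    have hh2 := hzone2 k 1 one_pos le_rfl (X k) (by rw [hX k]; linarith)
    rw [hh2, ← EReal.coe_add, hX k]
  have hmin : ∀ k (y : E), SSP.fEof f flim k (X k) + ((g (X k) : ℝ) : EReal) ≤
      SSP.fEof f flim k y + ((g y : ℝ) : EReal) := by
    intro k y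
    rw [hXval k, ← hμcoe k]
    exact iInf_le _ y
  have huniq : ∀ k (y : E),
      SSP.fEof f flim k y + ((g y : ℝ) : EReal) ≤
        SSP.fEof f flim k (X k) + ((g (X k) : ℝ) : EReal) → y = X k := by
    intro k y hy
    rw [hXval k] at hy
    have hdist : ∀ j : ℕ, dist y (X k) ≤ 1/((j:ℝ)+1) := by
      intro j
      obtain ⟨δ, hδ, hp⟩ := hrad k j
      have hδ'pos : 0 < min δ 1 := lt_min hδ one_pos
      have hh1 : SSP.fEof f flim k y + ((g y : ℝ) : EReal) < (((SSP.muR f flim (SSP.Cof f flim xw ε) g) k + min δ 1 : ℝ) : EReal) :=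
        lt_of_le_of_lt hy (EReal.coe_lt_coe_iff.2 (by linarith))
      have hh2 := (hzone k _ hδ'pos (min_le_right _ _) y).1 hh1
      have hh3 : (SSP.FRof f flim (SSP.Cof f flim xw ε)) k y + g y < (SSP.muR f flim (SSP.Cof f flim xw ε) g) k + δ := by
        have := min_le_left δ 1
        linarith
      exact hp y hh3
    have h0 : dist y (X k) ≤ 0 :=
      ge_of_tendsto tendsto_one_div_add_atTop_nhds_zero_nat
        (Filter.Eventually.of_forall hdist)
    exact dist_le_zero.1 h0
  have hstrong : ∀ k, ∀ y : ℕ → E,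
      Tendsto (fun i => SSP.fEof f flim k (y i) + ((g (y i) : ℝ) : EReal)) atTop
        (𝓝 (⨅ z, SSP.fEof f flim k z + ((g z : ℝ) : EReal))) →
      Tendsto y atTop (𝓝 (X k)) := by
    intro k y hy
    rw [hμcoe k] at hy
    rw [Metric.tendsto_atTop]
    intro η hη
    obtain ⟨j, hj⟩ := exists_nat_one_div_lt hη
    obtain ⟨δ, hδ, hp⟩ := hrad k j
    have hδ'pos : 0 < min δ 1 := lt_min hδ one_pos
    have hlt : (((SSP.muR f flim (SSP.Cof f flim xw ε) g) k : ℝ) : EReal) < (((SSP.muR f flim (SSP.Cof f flim xw ε) g) k + min δ 1 : ℝ) : EReal) :=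
      EReal.coe_lt_coe_iff.2 (by linarith)
    have hev := hy.eventually_lt_const hlt
    rw [eventually_atTop] at hev
    obtain ⟨N, hN⟩ := hev
    refine ⟨N, fun n hn => ?_⟩
    have hh2 := (hzone k _ hδ'pos (min_le_right _ _) (y n)).1 (hN n hn)
    have hh3 : (SSP.FRof f flim (SSP.Cof f flim xw ε)) k (y n) + g (y n) < (SSP.muR f flim (SSP.Cof f flim xw ε) g) k + δ := by
      have := min_le_left δ 1
      linarith
    exact lt_of_le_of_lt (hp (y n) hh3) hj
  -- Step D : stability under the convergence hypotheses
  have hD1up : ∀ σ : ℝ, 0 < σ → ∀ᶠ n : ℕ in atTop, (SSP.muR f flim (SSP.Cof f flim xw ε) g) (n+1) < (SSP.muR f flim (SSP.Cof f flim xw ε) g) 0 + σ := by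
    intro σ hσ
    have hv : flim (X 0) = (((SSP.muR f flim (SSP.Cof f flim xw ε) g) 0 - g (X 0) : ℝ) : EReal) := SSP.ER_eq (hXval 0)
    have ht : Tendsto (fun n => f n (X 0)) atTop (𝓝 ((((SSP.muR f flim (SSP.Cof f flim xw ε) g) 0 - g (X 0) : ℝ) : EReal))) := by
      rw [← hv]; exact h1 (X 0)
    have hlt : (((SSP.muR f flim (SSP.Cof f flim xw ε) g) 0 - g (X 0) : ℝ) : EReal) < (((SSP.muR f flim (SSP.Cof f flim xw ε) g) 0 + σ - g (X 0) : ℝ) : EReal) :=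
      EReal.coe_lt_coe_iff.2 (by linarith)
    filter_upwards [ht.eventually_lt_const hlt] with n hn
    have hh2 : f n (X 0) + ((g (X 0) : ℝ) : EReal) < (((SSP.muR f flim (SSP.Cof f flim xw ε) g) 0 + σ : ℝ) : EReal) :=
      (SSP.ER_lt _ _ _).2 hn
    have hh3 : (((SSP.muR f flim (SSP.Cof f flim xw ε) g) (n+1) : ℝ) : EReal) ≤ f n (X 0) + ((g (X 0) : ℝ) : EReal) := by
      rw [← hμcoe (n+1)]
      exact iInf_le _ (X 0)
    exact EReal.coe_lt_coe_iff.1 (lt_of_le_of_lt hh3 hh2)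
  have hD1low : ∀ σ : ℝ, 0 < σ → ∀ᶠ n : ℕ in atTop, (SSP.muR f flim (SSP.Cof f flim xw ε) g) 0 - (1 + ε/2)*σ ≤ (SSP.muR f flim (SSP.Cof f flim xw ε) g) (n+1) := by
    intro σ hσ
    obtain ⟨N, hN⟩ := h2 σ hσ
    rw [eventually_atTop]
    refine ⟨N, fun n hn => ?_⟩
    have hstep : ∀ y : E, (((SSP.muR f flim (SSP.Cof f flim xw ε) g) 0 - (1 + ε/2)*σ : ℝ) : EReal) ≤ f n y + ((g y : ℝ) : EReal) := by
      intro y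
      have hC2 := hN n hn y
      have henv : (((SSP.muR f flim (SSP.Cof f flim xw ε) g) 0 - g y - (ε/2)*σ : ℝ) : EReal) ≤ infEnv flim σ y := by
        rw [infEnv]
        apply le_iInf₂
        intro z hz
        have hz1 : (((SSP.muR f flim (SSP.Cof f flim xw ε) g) 0 : ℝ) : EReal) ≤ flim z + ((g z : ℝ) : EReal) := by
          rw [← hμcoe 0]
          exact iInf_le _ z
        have hz2 : (((SSP.muR f flim (SSP.Cof f flim xw ε) g) 0 - g z : ℝ) : EReal) ≤ flim z := (SSP.ER_le _ _ _).1 hz1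
        apply le_trans _ hz2
        apply EReal.coe_le_coe_iff.2
        have hzy := (abs_le.1 (hglip z y)).2
        have hdzy : ‖z - y‖ ≤ σ := by rw [← dist_eq_norm]; exact hz
        have hh6 : ε/2 * ‖z - y‖ ≤ ε/2 * σ := mul_le_mul_of_nonneg_left hdzy hL0
        linarith
      have hh4 : infEnv flim σ y + ((-σ : ℝ) : EReal) ≤ f n y := by
        rw [← SSP.ER_sub_coe]
        exact hC2
      have hh5 : infEnv flim σ y + ((-σ : ℝ) : EReal) + ((g y : ℝ) : EReal) ≤
          f n y + ((g y : ℝ) : EReal) := add_le_add_left hh4 _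
      have hh6 : (((SSP.muR f flim (SSP.Cof f flim xw ε) g) 0 - g y - (ε/2)*σ + -σ + g y : ℝ) : EReal) ≤
          infEnv flim σ y + ((-σ : ℝ) : EReal) + ((g y : ℝ) : EReal) := by
        rw [EReal.coe_add, EReal.coe_add]
        exact add_le_add_left (add_le_add_left henv _) _
      have hh7 : ((SSP.muR f flim (SSP.Cof f flim xw ε) g) 0 - g y - (ε/2)*σ + -σ + g y : ℝ) = (SSP.muR f flim (SSP.Cof f flim xw ε) g) 0 - (1 + ε/2)*σ := by ring
      rw [hh7] at hh6
      exact le_trans hh6 hh5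
    have hh8 : (((SSP.muR f flim (SSP.Cof f flim xw ε) g) 0 - (1 + ε/2)*σ : ℝ) : EReal) ≤ (((SSP.muR f flim (SSP.Cof f flim xw ε) g) (n+1) : ℝ) : EReal) := by
      rw [← hμcoe (n+1)]
      exact le_iInf hstep
    exact EReal.coe_le_coe_iff.1 hh8
  have hμconv : Tendsto (fun n => (SSP.muR f flim (SSP.Cof f flim xw ε) g) (n+1)) atTop (𝓝 ((SSP.muR f flim (SSP.Cof f flim xw ε) g) 0)) := by
    rw [Metric.tendsto_atTop]
    intro η hη
    have hσpos : 0 < η/(2*(2+ε/2)) := by positivity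
    have hev := (hD1up _ hσpos).and (hD1low _ hσpos)
    rw [eventually_atTop] at hev
    obtain ⟨N, hN⟩ := hev
    refine ⟨N, fun n hn => ?_⟩
    obtain ⟨hu1, hu2⟩ := hN n hn
    rw [Real.dist_eq, abs_sub_lt_iff]
    have hkey : (1 + ε/2) * (η/(2*(2+ε/2))) < η := by
      rw [← mul_div_assoc, div_lt_iff₀ (by positivity)]
      nlinarith
    have hkey2 : η/(2*(2+ε/2)) < η := by
      rw [div_lt_iff₀ (by positivity)]
      nlinarith
    constructor
    · linarith
    · linarith
  have hXconv : Tendsto (fun n => X (n+1)) atTop (𝓝 (X 0)) := by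
    rw [Metric.tendsto_atTop]
    intro η hη
    obtain ⟨j, hj⟩ := exists_nat_one_div_lt (half_pos hη)
    obtain ⟨δ, hδ, hp⟩ := hrad 0 j
    have hδ'pos : 0 < min δ 1 := lt_min hδ one_pos
    have hδ'1 : min δ 1 ≤ 1 := min_le_right _ _
    have hδ'δ : min δ 1 ≤ δ := min_le_left _ _
    set σ : ℝ := min ((min δ 1)/(4+ε/2)) (η/2) with hσ_def
    have hσpos : 0 < σ := lt_min (by positivity) (half_pos hη)
    have hση : σ ≤ η/2 := min_le_right _ _
    have hσδ : (3+ε/2) * σ ≤ min δ 1 := by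
      have hh1 : σ ≤ (min δ 1)/(4+ε/2) := min_le_left _ _
      have hh2 : (3+ε/2)*σ ≤ (3+ε/2)*((min δ 1)/(4+ε/2)) :=
        mul_le_mul_of_nonneg_left hh1 (by linarith)
      have hh3 : (3+ε/2)*((min δ 1)/(4+ε/2)) ≤ min δ 1 := by
        rw [mul_div_assoc']
        rw [div_le_iff₀ (by positivity)]
        nlinarith
      linarith
    obtain ⟨N1, hN1⟩ := h2 σ hσpos
    have hup := hD1up σ hσpos
    rw [eventually_atTop] at hup
    obtain ⟨N2, hN2⟩ := hup
    refine ⟨max N1 N2, fun n hn => ?_⟩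
    have hn1 : N1 ≤ n := le_trans (le_max_left _ _) hn
    have hn2 := hN2 n (le_trans (le_max_right _ _) hn)
    have hfn : f n (X (n+1)) = (((SSP.muR f flim (SSP.Cof f flim xw ε) g) (n+1) - g (X (n+1)) : ℝ) : EReal) :=
      SSP.ER_eq (hXval (n+1))
    have hC2 := hN1 n hn1 (X (n+1))
    have henv : infEnv flim σ (X (n+1)) ≤ (((SSP.muR f flim (SSP.Cof f flim xw ε) g) (n+1) - g (X (n+1)) + σ : ℝ) : EReal) := by
      have hh4 : infEnv flim σ (X (n+1)) + ((-σ : ℝ) : EReal) ≤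
          (((SSP.muR f flim (SSP.Cof f flim xw ε) g) (n+1) - g (X (n+1)) : ℝ) : EReal) := by
        rw [← SSP.ER_sub_coe, ← hfn]
        exact hC2
      have hh5 := (SSP.ER_le' _ _ _).1 hh4
      have hh6 : ((SSP.muR f flim (SSP.Cof f flim xw ε) g) (n+1) - g (X (n+1)) - -σ : ℝ) = (SSP.muR f flim (SSP.Cof f flim xw ε) g) (n+1) - g (X (n+1)) + σ := by ring
      rwa [hh6] at hh5
    have henv2 : infEnv flim σ (X (n+1)) <
        (((SSP.muR f flim (SSP.Cof f flim xw ε) g) (n+1) - g (X (n+1)) + 2*σ : ℝ) : EReal) :=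
      lt_of_le_of_lt henv (EReal.coe_lt_coe_iff.2 (by linarith))
    obtain ⟨z, hzdist, hzval⟩ : ∃ z : E, dist z (X (n+1)) ≤ σ ∧
        flim z < (((SSP.muR f flim (SSP.Cof f flim xw ε) g) (n+1) - g (X (n+1)) + 2*σ : ℝ) : EReal) := by
      rw [infEnv] at henv2
      obtain ⟨z, hz⟩ := iInf_lt_iff.1 henv2
      obtain ⟨hzmem, hzlt⟩ := iInf_lt_iff.1 hz
      exact ⟨z, hzmem, hzlt⟩
    have hgz : g z - g (X (n+1)) ≤ ε/2 * σ := by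
      have hzy := (abs_le.1 (hglip z (X (n+1)))).2
      have hdzy : ‖z - X (n+1)‖ ≤ σ := by rw [← dist_eq_norm]; exact hzdist
      have hh6 : ε/2 * ‖z - X (n+1)‖ ≤ ε/2 * σ := mul_le_mul_of_nonneg_left hdzy hL0
      linarith
    have hΦz : flim z + ((g z : ℝ) : EReal) < (((SSP.muR f flim (SSP.Cof f flim xw ε) g) 0 + min δ 1 : ℝ) : EReal) := by
      have hz2 : flim z + ((g z : ℝ) : EReal) <
          (((SSP.muR f flim (SSP.Cof f flim xw ε) g) (n+1) - g (X (n+1)) + 2*σ + g z : ℝ) : EReal) := by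
        apply (SSP.ER_lt _ _ _).2
        have hh6 : ((SSP.muR f flim (SSP.Cof f flim xw ε) g) (n+1) - g (X (n+1)) + 2*σ + g z - g z : ℝ) =
            (SSP.muR f flim (SSP.Cof f flim xw ε) g) (n+1) - g (X (n+1)) + 2*σ := by ring
        rw [hh6]
        exact hzval
      apply lt_of_lt_of_le hz2
      apply EReal.coe_le_coe_iff.2
      linarith
    have hz3 := (hzone 0 _ hδ'pos hδ'1 z).1 hΦz
    have hz4 : dist z (X 0) ≤ 1/((j:ℝ)+1) := hp z (by linarith)
    calc dist (X (n+1)) (X 0) ≤ dist (X (n+1)) z + dist z (X 0) := dist_triangle _ _ _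
    _ < η := by
        have hh8 : dist (X (n+1)) z = dist z (X (n+1)) := dist_comm _ _
        rw [hh8]
        linarith
  have hD3 : Tendsto (fun n => f n (X (n+1))) atTop (𝓝 (flim (X 0))) := by
    have hval : ∀ n, f n (X (n+1)) = (((SSP.muR f flim (SSP.Cof f flim xw ε) g) (n+1) - g (X (n+1)) : ℝ) : EReal) :=
      fun n => SSP.ER_eq (hXval (n+1))
    have hlimv : flim (X 0) = (((SSP.muR f flim (SSP.Cof f flim xw ε) g) 0 - g (X 0) : ℝ) : EReal) := SSP.ER_eq (hXval 0)
    have ht : Tendsto (fun n => (SSP.muR f flim (SSP.Cof f flim xw ε) g) (n+1) - g (X (n+1))) atTop (𝓝 ((SSP.muR f flim (SSP.Cof f flim xw ε) g) 0 - g (X 0))) :=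
      hμconv.sub ((hgdiff.continuous.tendsto (X 0)).comp hXconv)
    have h9 := EReal.tendsto_coe.2 ht
    rw [hlimv]
    exact h9.congr (fun n => (hval n).symm)
  refine ⟨g, hgdiff, fun x => lt_of_le_of_lt (hgsup x) (by linarith),
    fun x => lt_of_le_of_lt (hgder x) (by linarith),
    fun n => X (n+1), X 0, fun n => ⟨?_, ?_, ?_⟩, ⟨?_, ?_, ?_⟩, hXconv, hD3⟩
  · intro y hy
    exact hstrong (n+1) y hy
  · intro y
    exact hmin (n+1) y
  · intro y hy
    exact huniq (n+1) y hy
  · intro y hy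
    exact hstrong 0 y hy
  · intro y
    exact hmin 0 y
  · intro y hy
    exact huniq 0 y hy
end
end
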